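/- arXiv:2604.24120 — 18 statements merged into one kernel-verified Lean document; each statement's English description precedes it below -/
import Mathlib

section
/- Let M be a finite set, v : M → ℝ with v_j > 0 for all j ∈ M, and x : M → [0,1] with ∑_{j∈M} x_j ≥ 1. Suppose h* > 0 is a water level for x, i.e. ∑_{j∈M} min(v_j, h*)·x_j = h*, and let f(x) = (∑_{j: v_j > h*} x_j·ln(v_j/h*)) + ln h*. Then f(x) = g(x, h*) and f(x) ≤ g(x, h) for every h > 0; that is, f(x) = min_{h>0} g(x, h). -/
/-- The function `g(x, h)` from the paper:
`g(x,h) = (∑_{j : v j > h} x j * ln(v j / h)) + ln h + (1/h) * (∑_j min(v j, h) * x j) - 1`. -/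
noncomputable def gNSW {ι : Type*} [Fintype ι] (v x : ι → ℝ) (h : ℝ) : ℝ :=
  (∑ j ∈ Finset.univ.filter (fun j => h < v j), x j * Real.log (v j / h))
    + Real.log h + (1 / h) * (∑ j, min (v j) h * x j) - 1

/-- The water-filling value `f(x)` computed with respect to a water level `hstar`:
`f(x) = (∑_{j : v j > h*} x j * ln(v j / h*)) + ln h*`. -/
noncomputable def fNSW {ι : Type*} [Fintype ι] (v x : ι → ℝ) (hstar : ℝ) : ℝ :=
  (∑ j ∈ Finset.univ.filter (fun j => hstar < v j), x j * Real.log (v j / hstar))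
    + Real.log hstar


lemma log_ge_aux {t : ℝ} (ht : 0 < t) : 1 - 1/t ≤ Real.log t := by
  have h := Real.log_le_sub_one_of_pos (x := 1/t) (by positivity)
  rw [one_div, Real.log_inv] at h
  rw [one_div]
  linarith

lemma keyNSW {v h hs : ℝ} (hv : 0 < v) (hh : 0 < h) (hhs : 0 < hs) :
    0 ≤ (Real.log (min v hs) - Real.log (min v h))
      + (min v hs / hs) * Real.log (h / hs) + min v h / h - min v hs / hs := by
  rcases le_total v hs with h1 | h1 <;> rcases le_total v h with h2 | h2
  · -- v ≤ hs, v ≤ h : both mins are v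
    rw [min_eq_left h1, min_eq_left h2]
    have hL : 1 - hs/h ≤ Real.log (h/hs) := by
      have h5 := log_ge_aux (t := h/hs) (by positivity)
      rw [one_div_div] at h5; exact h5
    have h3 : 0 ≤ v/hs := by positivity
    have h4 : v/h - v/hs = (v/hs) * (hs/h - 1) := by field_simp
    nlinarith [mul_le_mul_of_nonneg_left hL h3]
  · -- h ≤ v ≤ hs : min v hs = v, min v h = h
    rw [min_eq_left h1, min_eq_right h2]
    set s := v / hs with hsdef
    set t := h / hs with htdef
    have hs0 : 0 < s := by positivity
    have ht0 : 0 < t := by positivity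
    have hts : t ≤ s := by rw [htdef, hsdef]; gcongr
    have hs1 : s ≤ 1 := by rw [hsdef, div_le_one hhs]; exact h1
    have hlogvh : Real.log v - Real.log h = Real.log s - Real.log t := by
      rw [hsdef, htdef, Real.log_div hv.ne' hhs.ne', Real.log_div hh.ne' hhs.ne']
      ring
    have hmono : Real.log t ≤ Real.log s := Real.log_le_log ht0 hts
    have hLs : s - 1 ≤ s * Real.log s := by
      have h5 := log_ge_aux hs0
      have h6 : s * (1/s) = 1 := by field_simp
      nlinarith
    have e2 : h / h = 1 := div_self hh.ne'
    rw [e2]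
    have goal2 : 0 ≤ (Real.log s - Real.log t) + s * Real.log t + 1 - s := by
      nlinarith [mul_nonneg (by linarith : (0:ℝ) ≤ 1 - s)
        (by linarith : 0 ≤ Real.log s - Real.log t)]
    linarith [hlogvh]
  · -- hs ≤ v ≤ h : min v hs = hs, min v h = v
    rw [min_eq_right h1, min_eq_left h2]
    have e1 : hs / hs = 1 := div_self hhs.ne'
    rw [e1, one_mul, Real.log_div hh.ne' hhs.ne']
    have hu : Real.log (v / h) ≤ v / h - 1 := Real.log_le_sub_one_of_pos (by positivity)
    rw [Real.log_div hv.ne' hh.ne'] at hu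
    linarith
  · -- hs ≤ v, h ≤ v : mins are hs and h
    rw [min_eq_right h1, min_eq_right h2]
    have e1 : hs / hs = 1 := div_self hhs.ne'
    have e2 : h / h = 1 := div_self hh.ne'
    rw [e1, e2, one_mul, Real.log_div hh.ne' hhs.ne']
    linarith

lemma filter_sum_eq {ι : Type*} [Fintype ι] (v x : ι → ℝ) (h : ℝ) (hh : 0 < h)
    (hv : ∀ j, 0 < v j) :
    ∑ j ∈ Finset.univ.filter (fun j => h < v j), x j * Real.log (v j / h)
      = ∑ j, x j * (Real.log (v j) - Real.log (min (v j) h)) := by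
  rw [Finset.sum_filter]
  apply Finset.sum_congr rfl
  intro j _
  by_cases hj : h < v j
  · simp [hj, min_eq_right hj.le, Real.log_div (hv j).ne' hh.ne']
  · simp [hj, min_eq_left (le_of_not_gt hj)]

/-- if `h* > 0` is a water level for `x`, then `f(x) = g(x, h*)` and
`f(x) ≤ g(x, h)` for every `h > 0`; i.e. `f(x) = min_{h > 0} g(x, h)`. -/
theorem stmt0 {ι : Type*} [Fintype ι] (v x : ι → ℝ)
    (hv : ∀ j, 0 < v j) (hx : ∀ j, x j ∈ Set.Icc (0 : ℝ) 1)
    (hsum : 1 ≤ ∑ j, x j)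
    (hstar : ℝ) (hstar_pos : 0 < hstar)
    (hwater : ∑ j, min (v j) hstar * x j = hstar) :
    fNSW v x hstar = gNSW v x hstar ∧
      ∀ h : ℝ, 0 < h → fNSW v x hstar ≤ gNSW v x h := by
  constructor
  · unfold fNSW gNSW
    rw [hwater, one_div, inv_mul_cancel₀ hstar_pos.ne']
    ring
  · intro h hh
    unfold fNSW gNSW
    rw [filter_sum_eq v x h hh hv, filter_sum_eq v x hstar hstar_pos hv]
    have hkey : 0 ≤ ∑ j, x j * ((Real.log (min (v j) hstar) - Real.log (min (v j) h))
        + (min (v j) hstar / hstar) * Real.log (h / hstar)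
        + min (v j) h / h - min (v j) hstar / hstar) :=
      Finset.sum_nonneg fun j _ => mul_nonneg (hx j).1 (keyNSW (hv j) hh hstar_pos)
    have expand : ∑ j, x j * ((Real.log (min (v j) hstar) - Real.log (min (v j) h))
        + (min (v j) hstar / hstar) * Real.log (h / hstar)
        + min (v j) h / h - min (v j) hstar / hstar)
      = ((∑ j, x j * (Real.log (v j) - Real.log (min (v j) h)))
          - (∑ j, x j * (Real.log (v j) - Real.log (min (v j) hstar))))
        + (∑ j, min (v j) hstar * x j) * (Real.log (h / hstar) / hstar)
        + (∑ j, min (v j) h * x j) * (1 / h)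
        - (∑ j, min (v j) hstar * x j) * (1 / hstar) := by
      rw [Finset.sum_mul, Finset.sum_mul, Finset.sum_mul, ← Finset.sum_sub_distrib,
        ← Finset.sum_add_distrib, ← Finset.sum_add_distrib, ← Finset.sum_sub_distrib]
      exact Finset.sum_congr rfl fun j _ => by ring
    rw [hwater] at expand
    have e1 : hstar * (Real.log (h / hstar) / hstar) = Real.log h - Real.log hstar := by
      rw [Real.log_div hh.ne' hstar_pos.ne']
      field_simp
    have e2 : hstar * (1 / hstar) = 1 := by field_simp
    rw [e1, e2] at expand
    linarith [hkey, expand]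
end

section
/- Let M be a finite set and v : M → ℝ with v_j > 0 for all j ∈ M. Let x, y : M → [0,1] with ∑_j x_j ≥ 1 and ∑_j y_j ≥ 1, let t ∈ [0,1], and set z = t·x + (1−t)·y. Suppose h_x, h_y, h_z > 0 are water levels for x, y, z respectively, and define f(x), f(y), f(z) using these water levels. Then f(z) ≥ t·f(x) + (1−t)·f(y); i.e., f is concave on its domain {x ∈ [0,1]^M : ∑_j x_j ≥ 1}. -/
/-- The key pointwise inequality. -/
lemma log_min_ineq (v h h' : ℝ) (hv : 0 < v) (hh : 0 < h) (hh' : 0 < h') :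
    Real.log (min v h') - Real.log (min v h) ≤
      min v h' / h' - min v h / h + (min v h / h) * (Real.log h' - Real.log h) := by
  rcases le_total v h with hvh | hvh <;> rcases le_total v h' with hvh' | hvh'
  · -- v ≤ h, v ≤ h'
    rw [min_eq_left hvh, min_eq_left hvh']
    have h1 : Real.log (h / h') ≤ h / h' - 1 := Real.log_le_sub_one_of_pos (by positivity)
    rw [Real.log_div hh.ne' hh'.ne'] at h1
    have hvh0 : (0:ℝ) < v / h := by positivity
    have h2 : (v/h) * (Real.log h - Real.log h') ≤ (v/h) * (h/h' - 1) :=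
      mul_le_mul_of_nonneg_left h1 hvh0.le
    have h3 : (v/h) * (h/h' - 1) = v/h' - v/h := by field_simp
    have h4 : (v/h) * (Real.log h' - Real.log h)
        = -((v/h) * (Real.log h - Real.log h')) := by ring
    linarith
  · -- h' ≤ v ≤ h
    rw [min_eq_left hvh, min_eq_right hvh']
    have A : Real.log h' ≤ Real.log v := Real.log_le_log hh' hvh'
    have B : Real.log (h / v) ≤ h / v - 1 := Real.log_le_sub_one_of_pos (by positivity)
    rw [Real.log_div hh.ne' hv.ne'] at B
    have hc : (0:ℝ) ≤ 1 - v / h := by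
      have : v / h ≤ 1 := (div_le_one hh).mpr hvh
      linarith
    have C : (1 - v/h) * Real.log h' ≤ (1 - v/h) * Real.log v :=
      mul_le_mul_of_nonneg_left A hc
    have D : (v/h) * (Real.log h - Real.log v) ≤ (v/h) * (h/v - 1) :=
      mul_le_mul_of_nonneg_left B (by positivity)
    have E : (v/h) * (h/v - 1) = 1 - v/h := by field_simp
    rw [div_self hh'.ne']
    nlinarith [C, D, E]
  · -- h ≤ v ≤ h'
    rw [min_eq_right hvh, min_eq_left hvh']
    have B : Real.log (v / h') ≤ v / h' - 1 := Real.log_le_sub_one_of_pos (by positivity)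
    rw [Real.log_div hv.ne' hh'.ne'] at B
    rw [div_self hh.ne']
    linarith
  · -- h ≤ v, h' ≤ v
    rw [min_eq_right hvh, min_eq_right hvh']
    rw [div_self hh.ne', div_self hh'.ne']
    linarith

/-- Rewriting `fNSW` as a sum over all of `univ` using `min`. -/
lemma fNSW_eq {ι : Type*} [Fintype ι] (v w : ι → ℝ) (h : ℝ) (hv : ∀ j, 0 < v j)
    (hh : 0 < h) :
    fNSW v w h = (∑ j, w j * (Real.log (v j) - Real.log (min (v j) h))) + Real.log h := by
  have h1 : ∑ j, w j * (Real.log (v j) - Real.log (min (v j) h))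
      = ∑ j ∈ Finset.univ.filter (fun j => h < v j),
          w j * (Real.log (v j) - Real.log (min (v j) h)) := by
    symm
    apply Finset.sum_subset (Finset.filter_subset _ _)
    intro j _ hj
    have hvj : v j ≤ h := by
      by_contra hc
      exact hj (Finset.mem_filter.mpr ⟨Finset.mem_univ j, not_le.mp hc⟩)
    rw [min_eq_left hvj]
    ring
  have h2 : ∑ j ∈ Finset.univ.filter (fun j => h < v j),
        w j * (Real.log (v j) - Real.log (min (v j) h))
      = ∑ j ∈ Finset.univ.filter (fun j => h < v j), w j * Real.log (v j / h) :=
    Finset.sum_congr rfl fun j hj => by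
      rw [Finset.mem_filter] at hj
      rw [min_eq_right hj.2.le, Real.log_div (hv j).ne' hh.ne']
  unfold fNSW
  rw [h1, h2]

/-- Monotonicity/variational lemma: the value at any `h'` is at least the value at
a water level `h`, up to an explicit error term. -/
lemma fNSW_ge {ι : Type*} [Fintype ι] (v w : ι → ℝ) (hv : ∀ j, 0 < v j)
    (hw : ∀ j, 0 ≤ w j) (h h' : ℝ) (hh : 0 < h) (hh' : 0 < h')
    (hwater : ∑ j, min (v j) h * w j = h) :
    fNSW v w h + 1 - (∑ j, min (v j) h' * w j) / h' ≤ fNSW v w h' := by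
  rw [fNSW_eq v w h hv hh, fNSW_eq v w h' hv hh']
  have key : ∑ j, w j * (Real.log (min (v j) h') - Real.log (min (v j) h)) ≤
      ∑ j, w j * (min (v j) h' / h' - min (v j) h / h
        + (min (v j) h / h) * (Real.log h' - Real.log h)) :=
    Finset.sum_le_sum fun j _ =>
      mul_le_mul_of_nonneg_left (log_min_ineq (v j) h h' (hv j) hh hh') (hw j)
  have expand : ∑ j, w j * (min (v j) h' / h' - min (v j) h / h
        + (min (v j) h / h) * (Real.log h' - Real.log h))
      = (∑ j, min (v j) h' * w j) / h' - (∑ j, min (v j) h * w j) / h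
        + ((∑ j, min (v j) h * w j) / h) * (Real.log h' - Real.log h) := by
    rw [Finset.sum_div, Finset.sum_div, Finset.sum_mul,
      ← Finset.sum_sub_distrib, ← Finset.sum_add_distrib]
    exact Finset.sum_congr rfl fun j _ => by ring
  rw [expand, hwater, div_self hh.ne'] at key
  have split : ∑ j, w j * (Real.log (min (v j) h') - Real.log (min (v j) h))
      = ∑ j, w j * (Real.log (v j) - Real.log (min (v j) h))
        - ∑ j, w j * (Real.log (v j) - Real.log (min (v j) h')) := by
    rw [← Finset.sum_sub_distrib]
    exact Finset.sum_congr rfl fun j _ => by ring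
  rw [split] at key
  linarith

/-- concavity of the water-filling relaxation value `f` on the domain
`{x ∈ [0,1]^M : ∑_j x_j ≥ 1}`: for `z = t•x + (1-t)•y`, with `hx, hy, hz > 0` water levels
of `x, y, z` respectively, we have `f(z) ≥ t·f(x) + (1-t)·f(y)`. -/
theorem stmt1 {ι : Type*} [Fintype ι] (v : ι → ℝ) (hv : ∀ j, 0 < v j)
    (x y : ι → ℝ)
    (hx01 : ∀ j, x j ∈ Set.Icc (0 : ℝ) 1) (hy01 : ∀ j, y j ∈ Set.Icc (0 : ℝ) 1)
    (hxsum : 1 ≤ ∑ j, x j) (hysum : 1 ≤ ∑ j, y j)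
    (t : ℝ) (ht : t ∈ Set.Icc (0 : ℝ) 1)
    (hx hy hz : ℝ) (hxpos : 0 < hx) (hypos : 0 < hy) (hzpos : 0 < hz)
    (hxwater : ∑ j, min (v j) hx * x j = hx)
    (hywater : ∑ j, min (v j) hy * y j = hy)
    (hzwater : ∑ j, min (v j) hz * (t * x j + (1 - t) * y j) = hz) :
    t * fNSW v x hx + (1 - t) * fNSW v y hy ≤
      fNSW v (fun j => t * x j + (1 - t) * y j) hz := by
  obtain ⟨ht0, ht1⟩ := ht
  have hxnn : ∀ j, 0 ≤ x j := fun j => (hx01 j).1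
  have hynn : ∀ j, 0 ≤ y j := fun j => (hy01 j).1
  have aux : ∑ j, min (v j) hz * (t * x j + (1 - t) * y j)
      = t * (∑ j, min (v j) hz * x j) + (1 - t) * (∑ j, min (v j) hz * y j) := by
    rw [Finset.mul_sum, Finset.mul_sum, ← Finset.sum_add_distrib]
    exact Finset.sum_congr rfl fun j _ => by ring
  have hzsplit : t * (∑ j, min (v j) hz * x j) + (1 - t) * (∑ j, min (v j) hz * y j)
      = hz := by rw [← aux]; exact hzwater
  have hxkey := fNSW_ge v x hv hxnn hx hz hxpos hzpos hxwater
  have hykey := fNSW_ge v y hv hynn hy hz hypos hzpos hywater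
  have e : (∑ j ∈ Finset.univ.filter (fun j => hz < v j),
        (t * x j + (1 - t) * y j) * Real.log (v j / hz))
      = t * (∑ j ∈ Finset.univ.filter (fun j => hz < v j), x j * Real.log (v j / hz))
        + (1 - t) * (∑ j ∈ Finset.univ.filter (fun j => hz < v j),
            y j * Real.log (v j / hz)) := by
    rw [Finset.mul_sum, Finset.mul_sum, ← Finset.sum_add_distrib]
    exact Finset.sum_congr rfl fun j _ => by ring
  have lin : fNSW v (fun j => t * x j + (1 - t) * y j) hz
      = t * fNSW v x hz + (1 - t) * fNSW v y hz := by
    have : fNSW v (fun j => t * x j + (1 - t) * y j) hz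
        = (∑ j ∈ Finset.univ.filter (fun j => hz < v j),
            (t * x j + (1 - t) * y j) * Real.log (v j / hz)) + Real.log hz := rfl
    rw [this, e]
    unfold fNSW
    ring
  rw [lin]
  have hdiv : t * ((∑ j, min (v j) hz * x j) / hz)
      + (1 - t) * ((∑ j, min (v j) hz * y j) / hz) = 1 := by
    field_simp
    linarith [hzsplit]
  nlinarith [mul_le_mul_of_nonneg_left hxkey ht0,
    mul_le_mul_of_nonneg_left hykey (by linarith : (0:ℝ) ≤ 1 - t)]
end

section
/- Let M be a finite set, v : M → ℝ with v_j > 0 for all j ∈ M, and x : M → [0,1]. Then for all reals 0 < h₁ ≤ h₂, one has g(x, h₂) − g(x, h₁) ≤ ln(h₂/h₁). -/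
/-- for all reals `0 < h₁ ≤ h₂`, `g(x, h₂) − g(x, h₁) ≤ ln(h₂ / h₁)`. -/
theorem stmt2 {ι : Type*} [Fintype ι] (v x : ι → ℝ)
    (hv : ∀ j, 0 < v j) (hx : ∀ j, x j ∈ Set.Icc (0 : ℝ) 1)
    (h₁ h₂ : ℝ) (h₁pos : 0 < h₁) (hle : h₁ ≤ h₂) :
    gNSW v x h₂ - gNSW v x h₁ ≤ Real.log (h₂ / h₁) := by
  have h₂pos : 0 < h₂ := lt_of_lt_of_le h₁pos hle
  have key : ∀ j : ι,
      ((if h₂ < v j then x j * Real.log (v j / h₂) else 0) + (1 / h₂) * (min (v j) h₂ * x j))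
      ≤ ((if h₁ < v j then x j * Real.log (v j / h₁) else 0) + (1 / h₁) * (min (v j) h₁ * x j)) := by
    intro j
    obtain ⟨hx0, hx1⟩ := hx j
    have hvj := hv j
    rcases lt_or_ge h₂ (v j) with hc2 | hc2
    · have hc1 : h₁ < v j := lt_of_le_of_lt hle hc2
      have hm2 : min (v j) h₂ = h₂ := min_eq_right hc2.le
      have hm1 : min (v j) h₁ = h₁ := min_eq_right hc1.le
      rw [if_pos hc2, if_pos hc1, hm2, hm1]
      have e2 : (1 / h₂) * (h₂ * x j) = x j := by field_simp
      have e1 : (1 / h₁) * (h₁ * x j) = x j := by field_simp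
      rw [e1, e2]
      have hlog : Real.log (v j / h₂) ≤ Real.log (v j / h₁) := by
        apply Real.log_le_log (by positivity)
        exact div_le_div_of_nonneg_left hvj.le h₁pos hle
      nlinarith
    · rcases lt_or_ge h₁ (v j) with hc1 | hc1
      · have hm2 : min (v j) h₂ = v j := min_eq_left hc2
        have hm1 : min (v j) h₁ = h₁ := min_eq_right hc1.le
        rw [if_neg (not_lt.mpr hc2), if_pos hc1, hm2, hm1]
        have e1 : (1 / h₁) * (h₁ * x j) = x j := by field_simp
        rw [e1]
        have hA : (1 / h₂) * (v j * x j) ≤ x j := by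
          rw [one_div, inv_mul_le_iff₀ h₂pos]
          nlinarith
        have hB : 0 ≤ x j * Real.log (v j / h₁) := by
          apply mul_nonneg hx0
          apply Real.log_nonneg
          rw [le_div_iff₀ h₁pos]; linarith
        linarith
      · have hm2 : min (v j) h₂ = v j := min_eq_left hc2
        have hm1 : min (v j) h₁ = v j := min_eq_left hc1
        rw [if_neg (not_lt.mpr hc2), if_neg (not_lt.mpr hc1), hm2, hm1]
        have hmono : 1 / h₂ ≤ 1 / h₁ := one_div_le_one_div_of_le h₁pos hle
        have : 0 ≤ v j * x j := mul_nonneg hvj.le hx0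
        nlinarith
  have hsum := Finset.sum_le_sum (fun j (_ : j ∈ Finset.univ) => key j)
  unfold gNSW
  rw [Real.log_div h₂pos.ne' h₁pos.ne', Finset.sum_filter, Finset.sum_filter,
    Finset.mul_sum, Finset.mul_sum]
  rw [Finset.sum_add_distrib, Finset.sum_add_distrib] at hsum
  linarith
end

section
/- Let M be a finite nonempty set, v : M → ℝ with v_j > 0 for all j ∈ M, and x : M → [0,1] with ∑_j x_j ≥ 1. Let ℓ = min_{j∈M} v_j and r = ∑_{j∈M} v_j, let ε > 0, and let H = { r·(1+ε)^{−t} : t ∈ ℕ, r·(1+ε)^{−t} ≥ ℓ }. Suppose h* is a water level for x with ℓ ≤ h* ≤ r, and define f(x) using h*. Define f̄(x) = min_{h ∈ H} g(x, h). Then f(x) ≤ f̄(x) < f(x) + ln(1+ε). -/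
/-- The geometric grid `H = { r·(1+ε)^{−t} : t ∈ ℕ } ∩ [ℓ, ∞)`. -/
def gridH (ℓ r ε : ℝ) : Set ℝ :=
  {h : ℝ | (∃ t : ℕ, h = r / (1 + ε) ^ t) ∧ ℓ ≤ h}


noncomputable def qNSW (t : ℝ) : ℝ := Real.log (max t 1) + min t 1

lemma q_key (s t : ℝ) (hs : 0 < s) (ht : 0 < t) :
    qNSW s + min s 1 * Real.log (t / s) ≤ qNSW t := by
  unfold qNSW
  have hts : 0 < t / s := div_pos ht hs
  have hlog := Real.log_le_sub_one_of_pos hts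
  rw [Real.log_div ht.ne' hs.ne']
  rcases le_or_gt s 1 with hs1 | hs1 <;> rcases le_or_gt t 1 with ht1 | ht1
  · rw [max_eq_right hs1, max_eq_right ht1, min_eq_left hs1, min_eq_left ht1, Real.log_one]
    have : s * Real.log (t / s) ≤ s * (t / s - 1) :=
      mul_le_mul_of_nonneg_left hlog hs.le
    rw [Real.log_div ht.ne' hs.ne'] at this
    have h2 : s * (t / s - 1) = t - s := by field_simp
    nlinarith
  · rw [max_eq_right hs1, max_eq_left ht1.le, min_eq_left hs1, min_eq_right ht1.le,
      Real.log_one]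
    have hlt : Real.log s ≤ s - 1 := Real.log_le_sub_one_of_pos hs
    have hinv : Real.log s⁻¹ ≤ s⁻¹ - 1 := Real.log_le_sub_one_of_pos (inv_pos.2 hs)
    rw [Real.log_inv] at hinv
    have hlogt : 0 ≤ Real.log t := Real.log_nonneg ht1.le
    have h1 : s * Real.log s ≥ s - 1 := by
      have := mul_le_mul_of_nonneg_left hinv hs.le
      have hss : s * (s⁻¹ - 1) = 1 - s := by field_simp
      nlinarith
    nlinarith
  · rw [max_eq_left hs1.le, max_eq_right ht1, min_eq_right hs1.le, min_eq_left ht1, Real.log_one]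
    have := Real.log_le_sub_one_of_pos ht
    nlinarith
  · rw [max_eq_left hs1.le, max_eq_left ht1.le, min_eq_right hs1.le, min_eq_right ht1.le]
    ring_nf
    nlinarith

lemma q_mono {s t : ℝ} (hs : 0 < s) (hst : s ≤ t) : qNSW s ≤ qNSW t := by
  unfold qNSW
  have h1 : Real.log (max s 1) ≤ Real.log (max t 1) :=
    Real.log_le_log (lt_max_of_lt_right one_pos) (max_le_max hst le_rfl)
  have h2 : min s 1 ≤ min t 1 := min_le_min hst le_rfl
  linarith

lemma g_eq {ι : Type*} [Fintype ι] (v x : ι → ℝ) (h : ℝ) (hh : 0 < h) (hv : ∀ j, 0 < v j) :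
    gNSW v x h = (∑ j, x j * qNSW (v j / h)) + Real.log h - 1 := by
  unfold gNSW qNSW
  have key : ∀ j ∈ Finset.univ, x j * (Real.log (max (v j / h) 1) + min (v j / h) 1)
      = (if h < v j then x j * Real.log (v j / h) else 0) + 1 / h * (min (v j) h * x j) := by
    intro j _
    by_cases hj : h < v j
    · rw [if_pos hj, max_eq_left, min_eq_right, min_eq_right hj.le]
      · field_simp
      · rw [le_div_iff₀ hh]; linarith
      · rw [le_div_iff₀ hh]; linarith
    · push_neg at hj
      rw [if_neg (not_lt.2 hj), max_eq_right, min_eq_left, min_eq_left hj]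
      · rw [Real.log_one]; field_simp; ring
      · rw [div_le_one hh]; exact hj
      · rw [div_le_one hh]; exact hj
  rw [Finset.sum_congr rfl key, Finset.sum_add_distrib, ← Finset.sum_filter, ← Finset.mul_sum]
  ring

lemma f_eq {ι : Type*} [Fintype ι] (v x : ι → ℝ) (h : ℝ) (hh : 0 < h) (hv : ∀ j, 0 < v j) :
    fNSW v x h = (∑ j, x j * Real.log (max (v j / h) 1)) + Real.log h := by
  unfold fNSW
  congr 1
  rw [Finset.sum_filter]
  refine Finset.sum_congr rfl fun j _ => ?_
  by_cases hj : h < v j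
  · rw [if_pos hj, max_eq_left]
    rw [le_div_iff₀ hh]; linarith
  · push_neg at hj
    rw [if_neg (not_lt.2 hj), max_eq_right, Real.log_one, mul_zero]
    rw [div_le_one hh]; exact hj

lemma water' {ι : Type*} [Fintype ι] (v x : ι → ℝ) (hstar : ℝ) (hs : 0 < hstar)
    (hwater : ∑ j, min (v j) hstar * x j = hstar) :
    ∑ j, x j * min (v j / hstar) 1 = 1 := by
  have : ∀ j ∈ Finset.univ, x j * min (v j / hstar) 1 = (min (v j) hstar * x j) / hstar := by
    intro j _
    have : v j / hstar ⊓ 1 = (v j ⊓ hstar) / hstar := by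
      rcases le_total (v j) hstar with h | h
      · rw [min_eq_left h, min_eq_left ((div_le_one hs).2 h)]
      · rw [min_eq_right h, min_eq_right ((one_le_div hs).2 h), div_self hs.ne']
    rw [this]; ring
  rw [Finset.sum_congr rfl this, ← Finset.sum_div, hwater, div_self hs.ne']

lemma g_ge_f {ι : Type*} [Fintype ι] (v x : ι → ℝ) (hv : ∀ j, 0 < v j)
    (hx0 : ∀ j, 0 ≤ x j) (hstar h : ℝ) (hs : 0 < hstar) (hh : 0 < h)
    (hwater : ∑ j, min (v j) hstar * x j = hstar) :
    fNSW v x hstar ≤ gNSW v x h := by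
  have hw := water' v x hstar hs hwater
  rw [g_eq v x h hh hv, f_eq v x hstar hs hv]
  have key : ∀ j ∈ Finset.univ,
      x j * (qNSW (v j / hstar) + min (v j / hstar) 1 * (Real.log hstar - Real.log h))
        ≤ x j * qNSW (v j / h) := by
    intro j _
    refine mul_le_mul_of_nonneg_left ?_ (hx0 j)
    have := q_key (v j / hstar) (v j / h) (div_pos (hv j) hs) (div_pos (hv j) hh)
    have heq : Real.log ((v j / h) / (v j / hstar)) = Real.log hstar - Real.log h := by
      have hv' : v j ≠ 0 := (hv j).ne'
      have hh' : h ≠ 0 := hh.ne'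
      have hs' : hstar ≠ 0 := hs.ne'
      have hq : v j / h / (v j / hstar) = hstar / h := by
        field_simp
      rw [hq, Real.log_div hs.ne' hh.ne']
    rw [heq] at this
    exact this
  have hsumle := Finset.sum_le_sum key
  have hexp : ∑ j, x j * (qNSW (v j / hstar) + min (v j / hstar) 1 * (Real.log hstar - Real.log h))
      = (∑ j, x j * Real.log (max (v j / hstar) 1)) + 1 + (Real.log hstar - Real.log h) * 1 := by
    have : ∀ j ∈ Finset.univ,
        x j * (qNSW (v j / hstar) + min (v j / hstar) 1 * (Real.log hstar - Real.log h))
        = x j * Real.log (max (v j / hstar) 1) + x j * min (v j / hstar) 1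
          + (Real.log hstar - Real.log h) * (x j * min (v j / hstar) 1) := by
      intro j _; unfold qNSW; ring
    rw [Finset.sum_congr rfl this, Finset.sum_add_distrib, Finset.sum_add_distrib,
      ← Finset.mul_sum, hw]
  rw [hexp] at hsumle
  linarith

lemma g_le_f {ι : Type*} [Fintype ι] (v x : ι → ℝ) (hv : ∀ j, 0 < v j)
    (hx0 : ∀ j, 0 ≤ x j) (hstar h : ℝ) (hs : 0 < hstar) (hle : hstar ≤ h)
    (hwater : ∑ j, min (v j) hstar * x j = hstar) :
    gNSW v x h ≤ fNSW v x hstar + (Real.log h - Real.log hstar) := by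
  have hh : 0 < h := lt_of_lt_of_le hs hle
  have hw := water' v x hstar hs hwater
  rw [g_eq v x h hh hv, f_eq v x hstar hs hv]
  have key : ∀ j ∈ Finset.univ, x j * qNSW (v j / h) ≤ x j * qNSW (v j / hstar) := by
    intro j _
    exact mul_le_mul_of_nonneg_left
      (q_mono (div_pos (hv j) hh) (div_le_div_of_nonneg_left (hv j).le hs hle)) (hx0 j)
  have hsumle := Finset.sum_le_sum key
  have hexp : ∑ j, x j * qNSW (v j / hstar)
      = (∑ j, x j * Real.log (max (v j / hstar) 1)) + 1 := by
    have : ∀ j ∈ Finset.univ, x j * qNSW (v j / hstar)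
        = x j * Real.log (max (v j / hstar) 1) + x j * min (v j / hstar) 1 := by
      intro j _; unfold qNSW; ring
    rw [Finset.sum_congr rfl this, Finset.sum_add_distrib, hw]
  rw [hexp] at hsumle
  linarith

/-- with `ℓ = min_j v_j`, `r = ∑_j v_j`, `H` the geometric grid with ratio `1+ε`,
and `h*` a water level for `x` with `ℓ ≤ h* ≤ r`, the discretized value
`f̄(x) = min_{h ∈ H} g(x,h)` satisfies `f(x) ≤ f̄(x) < f(x) + ln(1+ε)`. -/
theorem stmt3 {ι : Type*} [Fintype ι] [Nonempty ι] (v x : ι → ℝ)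
    (hv : ∀ j, 0 < v j) (hx : ∀ j, x j ∈ Set.Icc (0 : ℝ) 1)
    (hsum : 1 ≤ ∑ j, x j)
    (ε : ℝ) (hε : 0 < ε)
    (hstar : ℝ)
    (hstar_lb : Finset.univ.inf' Finset.univ_nonempty v ≤ hstar)
    (hstar_ub : hstar ≤ ∑ j, v j)
    (hwater : ∑ j, min (v j) hstar * x j = hstar) :
    fNSW v x hstar ≤
      sInf ((fun h => gNSW v x h) ''
        gridH (Finset.univ.inf' Finset.univ_nonempty v) (∑ j, v j) ε) ∧
    sInf ((fun h => gNSW v x h) ''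
        gridH (Finset.univ.inf' Finset.univ_nonempty v) (∑ j, v j) ε) <
      fNSW v x hstar + Real.log (1 + ε) := by
  classical
  set ℓ := Finset.univ.inf' Finset.univ_nonempty v with hℓdef
  set r := ∑ j, v j with hrdef
  have hx0 : ∀ j, 0 ≤ x j := fun j => (hx j).1
  have hℓpos : 0 < ℓ := by
    rw [hℓdef]
    exact (Finset.lt_inf'_iff _).2 fun j _ => hv j
  have hspos : 0 < hstar := lt_of_lt_of_le hℓpos hstar_lb
  have hℓr : ℓ ≤ r := le_trans hstar_lb hstar_ub
  have hone : (1:ℝ) < 1 + ε := by linarith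
  have hgrid_pos : ∀ h ∈ gridH ℓ r ε, 0 < h := fun h hh => lt_of_lt_of_le hℓpos hh.2
  -- lower bound for all grid points
  have hlb : ∀ y ∈ (fun h => gNSW v x h) '' gridH ℓ r ε, fNSW v x hstar ≤ y := by
    rintro y ⟨h, hmem, rfl⟩
    exact g_ge_f v x hv hx0 hstar h hspos (hgrid_pos h hmem) hwater
  have hne : ((fun h => gNSW v x h) '' gridH ℓ r ε).Nonempty := by
    refine ⟨gNSW v x r, r, ⟨⟨0, by simp⟩, hℓr⟩, rfl⟩
  have hbdd : BddBelow ((fun h => gNSW v x h) '' gridH ℓ r ε) := ⟨fNSW v x hstar, hlb⟩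
  constructor
  · exact le_csInf hne hlb
  · -- find grid point just above hstar
    have hr1 : (1:ℝ) ≤ r / hstar := (one_le_div hspos).2 hstar_ub
    obtain ⟨N, hN⟩ := pow_unbounded_of_one_lt (r / hstar) hone
    have hex : ∃ n : ℕ, r / hstar < (1 + ε) ^ n := ⟨N, hN⟩
    set n := Nat.find hex with hndef
    have hnspec : r / hstar < (1 + ε) ^ n := Nat.find_spec hex
    have hn0 : n ≠ 0 := by
      intro h0
      rw [h0, pow_zero] at hnspec
      linarith
    set t := n - 1 with htdef
    have hnt : n = t + 1 := (Nat.succ_pred_eq_of_pos (Nat.pos_of_ne_zero hn0)).symm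
    have hts : ¬ (r / hstar < (1 + ε) ^ t) := Nat.find_min hex (by omega)
    push_neg at hts
    have hpowpos : (0:ℝ) < (1 + ε) ^ t := pow_pos (by linarith) t
    set h₀ := r / (1 + ε) ^ t with hh₀def
    have hh₀ge : hstar ≤ h₀ := by
      rw [hh₀def, le_div_iff₀ hpowpos]
      calc hstar * (1 + ε) ^ t = (1 + ε) ^ t * hstar := by ring
        _ ≤ (r / hstar) * hstar := by
            exact mul_le_mul_of_nonneg_right hts hspos.le
        _ = r := by field_simp
    have hh₀lt : h₀ < hstar * (1 + ε) := by
      rw [hnt, pow_succ] at hnspec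
      rw [hh₀def, div_lt_iff₀ hpowpos]
      calc r = (r / hstar) * hstar := by field_simp
        _ < ((1 + ε) ^ t * (1 + ε)) * hstar := by
            exact mul_lt_mul_of_pos_right hnspec hspos
        _ = hstar * (1 + ε) * (1 + ε) ^ t := by ring
    have hmem : h₀ ∈ gridH ℓ r ε := ⟨⟨t, rfl⟩, le_trans hstar_lb hh₀ge⟩
    have hgle := g_le_f v x hv hx0 hstar h₀ hspos hh₀ge hwater
    have hloglt : Real.log h₀ - Real.log hstar < Real.log (1 + ε) := by
      have h1 : Real.log h₀ < Real.log (hstar * (1 + ε)) :=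
        Real.log_lt_log (lt_of_lt_of_le hspos hh₀ge) hh₀lt
      rw [Real.log_mul hspos.ne' (by linarith)] at h1
      linarith
    calc sInf ((fun h => gNSW v x h) '' gridH ℓ r ε) ≤ gNSW v x h₀ :=
          csInf_le hbdd ⟨h₀, hmem, rfl⟩
      _ ≤ fNSW v x hstar + (Real.log h₀ - Real.log hstar) := hgle
      _ < fNSW v x hstar + Real.log (1 + ε) := by linarith
end

section
/- Let N and M be finite nonempty sets with |N| = n, let v : N × M → ℝ with v_{ij} ≥ 0, and let x : N × M → [0,1] satisfy: ∑_{i∈N} x_{ij} = 1 for every j ∈ M; ∑_{j∈M} x_{ij} ≥ 1 for every i ∈ N; x_{ij} > 0 implies v_{ij} > 0; and ∑_{j∈M} min(v_{ij}, 1)·x_{ij} = 1 for every i ∈ N (i.e., every agent's water level is 1). Define b_{ij} = x_{ij}·min(v_{ij}, 1) and q_j = ∑_{i∈N} b_{ij}. Then: (a) q_j ∈ (0, 1] for all j ∈ M and ∑_{j∈M} b_{ij} = 1 for all i ∈ N; and (b) (1/n)·( ∑_{(i,j): x_{ij} > 0} b_{ij}·ln v_{ij} − ∑_{j∈M} q_j·ln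 q_j ) ≥ (1/n)·∑_{i∈N} f_i, where f_i = ∑_{j∈M: v_{ij} > 1} x_{ij}·ln v_{ij}. -/
/-- a feasible solution `x` of the water-filling convex program CP(NSW),
scaled so that all water levels equal 1, yields a feasible solution `(b, q)` of the
Fisher market convex program CP(f-SR) with at least the same objective value. -/
theorem stmt4 {N M : Type*} [Fintype N] [Fintype M] [Nonempty N] [Nonempty M]
    (v x : N → M → ℝ)
    (hv : ∀ i j, 0 ≤ v i j)
    (hx01 : ∀ i j, x i j ∈ Set.Icc (0 : ℝ) 1)
    (hcol : ∀ j, ∑ i, x i j = 1)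
    (hrow : ∀ i, 1 ≤ ∑ j, x i j)
    (hsupp : ∀ i j, 0 < x i j → 0 < v i j)
    (hlevel : ∀ i, ∑ j, min (v i j) 1 * x i j = 1)
    (b : N → M → ℝ) (hb : ∀ i j, b i j = x i j * min (v i j) 1)
    (q : M → ℝ) (hq : ∀ j, q j = ∑ i, b i j) :
    (∀ j, 0 < q j ∧ q j ≤ 1) ∧
    (∀ i, ∑ j, b i j = 1) ∧
    (1 / (Fintype.card N : ℝ)) *
        ((∑ i, ∑ j ∈ Finset.univ.filter (fun j => 0 < x i j), b i j * Real.log (v i j))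
          - ∑ j, q j * Real.log (q j))
      ≥ (1 / (Fintype.card N : ℝ)) *
          ∑ i, ∑ j ∈ Finset.univ.filter (fun j => 1 < v i j), x i j * Real.log (v i j) := by
  have hx0 : ∀ i j, ¬ 0 < x i j → x i j = 0 := fun i j h =>
    le_antisymm (not_lt.mp h) (hx01 i j).1
  have hbz : ∀ i j, ¬ 0 < x i j → b i j = 0 := fun i j h => by
    rw [hb, hx0 i j h, zero_mul]
  have hb0 : ∀ i j, 0 ≤ b i j := fun i j => by
    rw [hb]; exact mul_nonneg (hx01 i j).1 (le_min (hv i j) zero_le_one)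
  have hbx : ∀ i j, b i j ≤ x i j := fun i j => by
    rw [hb]
    calc x i j * min (v i j) 1 ≤ x i j * 1 :=
          mul_le_mul_of_nonneg_left (min_le_right _ _) (hx01 i j).1
      _ = x i j := mul_one _
  have hbpos : ∀ i j, 0 < x i j → 0 < b i j := fun i j hxij => by
    rw [hb]
    exact mul_pos hxij (lt_min (hsupp i j hxij) one_pos)
  have hqpos : ∀ j, 0 < q j := by
    intro j
    obtain ⟨i, -, hi⟩ : ∃ i ∈ Finset.univ, 0 < x i j := by
      by_contra h
      push_neg at h
      have : (∑ i, x i j) = 0 :=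
        Finset.sum_eq_zero fun i hi => hx0 i j (not_lt.mpr (h i hi))
      rw [hcol j] at this; norm_num at this
    rw [hq]
    exact Finset.sum_pos' (fun i _ => hb0 i j) ⟨i, Finset.mem_univ i, hbpos i j hi⟩
  have hqle : ∀ j, q j ≤ 1 := by
    intro j
    rw [hq, ← hcol j]
    exact Finset.sum_le_sum fun i _ => hbx i j
  have hrowb : ∀ i, ∑ j, b i j = 1 := by
    intro i
    rw [← hlevel i]
    exact Finset.sum_congr rfl fun j _ => by rw [hb, mul_comm]
  refine ⟨fun j => ⟨hqpos j, hqle j⟩, hrowb, ?_⟩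
  rw [ge_iff_le]
  have hn : (0 : ℝ) ≤ 1 / (Fintype.card N : ℝ) := by positivity
  apply mul_le_mul_of_nonneg_left _ hn
  -- key per-column inequality (log-sum inequality)
  have key : ∀ j, q j * Real.log (q j) ≤ ∑ i, b i j * Real.log (min (v i j) 1) := by
    intro j
    set S : Finset N := Finset.univ.filter (fun i => 0 < x i j) with hS
    have hmem : ∀ i ∈ S, 0 < x i j := fun i hi => (Finset.mem_filter.mp hi).2
    have hSb : ∑ i ∈ S, b i j * Real.log (min (v i j) 1)
        = ∑ i, b i j * Real.log (min (v i j) 1) := by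
      apply Finset.sum_filter_of_ne
      intro i _ hne
      by_contra hxp
      exact hne (by rw [hbz i j hxp, zero_mul])
    have hSq : q j = ∑ i ∈ S, b i j := by
      rw [hq]
      refine (Finset.sum_filter_of_ne ?_).symm
      intro i _ hne
      by_contra hxp
      exact hne (hbz i j hxp)
    have hSx : ∑ i ∈ S, x i j = 1 := by
      rw [← hcol j]
      refine Finset.sum_filter_of_ne ?_
      intro i _ hne
      by_contra hxp
      exact hne (hx0 i j hxp)
    rw [← hSb]
    have hqj := hqpos j
    have step : ∀ i ∈ S,
        b i j * Real.log (q j) - b i j * Real.log (min (v i j) 1)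
          ≤ q j * x i j - b i j := by
      intro i hi
      have hxij := hmem i hi
      have hvij := hsupp i j hxij
      have hmin : 0 < min (v i j) 1 := lt_min hvij one_pos
      have hbij : 0 < b i j := hbpos i j hxij
      have hlog : Real.log (q j) - Real.log (min (v i j) 1)
          = Real.log (q j / min (v i j) 1) := (Real.log_div hqj.ne' hmin.ne').symm
      have hpos : 0 < q j / min (v i j) 1 := div_pos hqj hmin
      have := Real.log_le_sub_one_of_pos hpos
      have h2 : b i j * Real.log (q j / min (v i j) 1)
          ≤ b i j * (q j / min (v i j) 1 - 1) :=
        mul_le_mul_of_nonneg_left this hbij.le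
      have h3 : b i j * (q j / min (v i j) 1 - 1) = q j * x i j - b i j := by
        rw [hb]
        field_simp
      calc b i j * Real.log (q j) - b i j * Real.log (min (v i j) 1)
          = b i j * (Real.log (q j) - Real.log (min (v i j) 1)) := by ring
        _ = b i j * Real.log (q j / min (v i j) 1) := by rw [hlog]
        _ ≤ b i j * (q j / min (v i j) 1 - 1) := h2
        _ = q j * x i j - b i j := h3
    have hsum : ∑ i ∈ S, (b i j * Real.log (q j) - b i j * Real.log (min (v i j) 1))
        ≤ ∑ i ∈ S, (q j * x i j - b i j) := Finset.sum_le_sum step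
    have hlhs : ∑ i ∈ S, (b i j * Real.log (q j) - b i j * Real.log (min (v i j) 1))
        = q j * Real.log (q j) - ∑ i ∈ S, b i j * Real.log (min (v i j) 1) := by
      rw [Finset.sum_sub_distrib, ← Finset.sum_mul, ← hSq, mul_comm]
    have hrhs : ∑ i ∈ S, (q j * x i j - b i j) = 0 := by
      rw [Finset.sum_sub_distrib, ← Finset.mul_sum, hSx, ← hSq, mul_one, sub_self]
    linarith [hsum.trans_eq hrhs, hlhs]
  -- pointwise decomposition
  have hpt : ∀ i j, b i j * Real.log (v i j)
      = b i j * Real.log (min (v i j) 1)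
        + (if 1 < v i j then x i j * Real.log (v i j) else 0) := by
    intro i j
    by_cases hxij : 0 < x i j
    · by_cases hv1 : 1 < v i j
      · rw [min_eq_right hv1.le, Real.log_one, mul_zero, zero_add, if_pos hv1,
          hb, min_eq_right hv1.le, mul_one]
      · rw [min_eq_left (not_lt.mp hv1), if_neg hv1, add_zero]
    · rw [hbz i j hxij, hx0 i j hxij]; simp
  -- rewrite the filtered sums
  have hL : ∀ i, ∑ j ∈ Finset.univ.filter (fun j => 0 < x i j), b i j * Real.log (v i j)
      = ∑ j, b i j * Real.log (v i j) := by
    intro i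
    apply Finset.sum_filter_of_ne
    intro j _ hne
    by_contra hxp
    exact hne (by rw [hbz i j hxp, zero_mul])
  have hR : ∀ i, ∑ j ∈ Finset.univ.filter (fun j => 1 < v i j), x i j * Real.log (v i j)
      = ∑ j, (if 1 < v i j then x i j * Real.log (v i j) else 0) :=
    fun i => (Finset.sum_filter _ _)
  calc ∑ i, ∑ j ∈ Finset.univ.filter (fun j => 1 < v i j), x i j * Real.log (v i j)
      = ∑ i, ∑ j, (if 1 < v i j then x i j * Real.log (v i j) else 0) := by
        exact Finset.sum_congr rfl fun i _ => hR i
    _ ≤ (∑ i, ∑ j, b i j * Real.log (min (v i j) 1))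
        + (∑ i, ∑ j, (if 1 < v i j then x i j * Real.log (v i j) else 0))
        - ∑ j, q j * Real.log (q j) := by
        have h1 : ∑ j, q j * Real.log (q j)
            ≤ ∑ i, ∑ j, b i j * Real.log (min (v i j) 1) := by
          calc ∑ j, q j * Real.log (q j)
              ≤ ∑ j, ∑ i, b i j * Real.log (min (v i j) 1) :=
                Finset.sum_le_sum fun j _ => key j
            _ = ∑ i, ∑ j, b i j * Real.log (min (v i j) 1) := Finset.sum_comm
        linarith
    _ = (∑ i, ∑ j, (b i j * Real.log (min (v i j) 1)
          + (if 1 < v i j then x i j * Real.log (v i j) else 0)))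
        - ∑ j, q j * Real.log (q j) := by
        rw [← Finset.sum_add_distrib]
        congr 1
        exact Finset.sum_congr rfl fun i _ => (Finset.sum_add_distrib).symm
    _ = (∑ i, ∑ j, b i j * Real.log (v i j)) - ∑ j, q j * Real.log (q j) := by
        congr 1
        exact Finset.sum_congr rfl fun i _ =>
          Finset.sum_congr rfl fun j _ => (hpt i j).symm
    _ = (∑ i, ∑ j ∈ Finset.univ.filter (fun j => 0 < x i j), b i j * Real.log (v i j))
        - ∑ j, q j * Real.log (q j) := by
        congr 1
        exact Finset.sum_congr rfl fun i _ => (hL i).symm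
end

section
/- Let N and M be finite nonempty sets with |N| = n, v : N × M → ℝ with v_{ij} ≥ 0, b : N × M → ℝ with b_{ij} ≥ 0, q : M → (0,1], and prices p : M → ℝ with p_j > 0, satisfying: ∑_{i∈N} b_{ij} = q_j for all j ∈ M; ∑_{j∈M} b_{ij} = 1 for all i ∈ N; q_j = min(p_j, 1) for all j; v_{ij} ≤ p_j whenever v_{ij} > 0; b_{ij} > 0 implies v_{ij} = p_j (in particular v_{ij} > 0). Define x_{ij} = b_{ij}/q_j. Then: (a) ∑_{i∈N} x_{ij} = 1 for all j ∈ M and ∑_{j∈M} x_{ij} ≥ 1 for all i ∈ N; (b) ∑_{j∈M} min(v_{ij}, 1)·x_{ij} = 1 for every i ∈ N (every agent's water level is 1); and (c) (1/n)·∑_{i∈N} f_i = (1/n)·( ∑_{(i,j): b_{ij} > 0} b_{ij}·ln v_{ij} − ∑_{j∈M} q_j·ln q_j ), where f_i = ∑_{j∈M: v_{ij} > 1} x_{ij}·ln v_{ij}. -/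
/-- an optimal solution `(b, q)` of the Fisher market convex program CP(f-SR),
together with the equilibrium price vector `p` guaranteed by Cole and Gkatzelis, yields a
feasible solution `x = b/q` of the water-filling convex program CP(NSW) (with all water
levels equal to 1) whose objective value equals that of `(b, q)`. -/
theorem stmt5 {N M : Type*} [Fintype N] [Fintype M] [Nonempty N] [Nonempty M]
    (v b : N → M → ℝ) (q p : M → ℝ)
    (hv : ∀ i j, 0 ≤ v i j)
    (hb : ∀ i j, 0 ≤ b i j)
    (hq : ∀ j, q j ∈ Set.Ioc (0 : ℝ) 1)
    (hp : ∀ j, 0 < p j)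
    (hcol : ∀ j, ∑ i, b i j = q j)
    (hrow : ∀ i, ∑ j, b i j = 1)
    (hqp : ∀ j, q j = min (p j) 1)
    (hvp : ∀ i j, 0 < v i j → v i j ≤ p j)
    (hbv : ∀ i j, 0 < b i j → v i j = p j)
    (x : N → M → ℝ) (hx : ∀ i j, x i j = b i j / q j) :
    ((∀ j, ∑ i, x i j = 1) ∧ (∀ i, 1 ≤ ∑ j, x i j)) ∧
    (∀ i, ∑ j, min (v i j) 1 * x i j = 1) ∧
    (1 / (Fintype.card N : ℝ)) *
        ∑ i, ∑ j ∈ Finset.univ.filter (fun j => 1 < v i j), x i j * Real.log (v i j)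
      = (1 / (Fintype.card N : ℝ)) *
          ((∑ i, ∑ j ∈ Finset.univ.filter (fun j => 0 < b i j), b i j * Real.log (v i j))
            - ∑ j, q j * Real.log (q j)) := by
  have hq0 : ∀ j, 0 < q j := fun j => (hq j).1
  have hq1 : ∀ j, q j ≤ 1 := fun j => (hq j).2
  refine ⟨⟨?_, ?_⟩, ?_, ?_⟩
  · intro j
    simp only [hx]
    rw [← Finset.sum_div, hcol, div_self (hq0 j).ne']
  · intro i
    rw [← hrow i]
    apply Finset.sum_le_sum
    intro j _
    rw [hx, le_div_iff₀ (hq0 j)]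
    calc b i j * q j ≤ b i j * 1 := by
          exact mul_le_mul_of_nonneg_left (hq1 j) (hb i j)
      _ = b i j := mul_one _
  · intro i
    have hterm : ∀ j, min (v i j) 1 * x i j = b i j := by
      intro j
      rcases eq_or_lt_of_le (hb i j) with h | h
      · rw [hx, ← h]; simp
      · rw [hx, hbv i j h, ← hqp j, mul_comm, div_mul_cancel₀ _ (hq0 j).ne']
    rw [Finset.sum_congr rfl fun j _ => hterm j, hrow]
  · congr 1
    have key : ∀ i,
        ∑ j ∈ Finset.univ.filter (fun j => 1 < v i j), x i j * Real.log (v i j)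
        = (∑ j ∈ Finset.univ.filter (fun j => 0 < b i j), b i j * Real.log (v i j))
          - ∑ j, b i j * Real.log (q j) := by
      intro i
      rw [Finset.sum_filter, Finset.sum_filter, ← Finset.sum_sub_distrib]
      apply Finset.sum_congr rfl
      intro j _
      rcases eq_or_lt_of_le (hb i j) with h | h
      · rw [hx, ← h]; simp
      · have hvpj := hbv i j h
        rcases le_or_gt (p j) 1 with hle | hlt
        · have hq' : q j = p j := by rw [hqp j, min_eq_left hle]
          have : ¬ (1 < v i j) := by rw [hvpj]; exact not_lt.mpr hle
          rw [if_neg this, if_pos h, hvpj, hq']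
          ring
        · have hq' : q j = 1 := by rw [hqp j, min_eq_right hlt.le]
          have hv1 : 1 < v i j := by rw [hvpj]; exact hlt
          rw [if_pos hv1, if_pos h, hx, hq']
          simp
    rw [Finset.sum_congr rfl (fun i _ => key i), Finset.sum_sub_distrib]
    congr 1
    rw [Finset.sum_comm]
    apply Finset.sum_congr rfl
    intro j _
    rw [← Finset.sum_mul, hcol]
end

section
/- Let N and M be finite nonempty sets with |N| = n, v : N × M → ℝ with v_{ij} ≥ 0, and let ρ : M → N be an allocation such that v_{ρ(j), j} > 0 for every j ∈ M and ∑_{j ∈ ρ⁻¹(i)} v_{ij} > 0 for every i ∈ N. Define b_{ij} = v_{ij} / (∑_{j' ∈ ρ⁻¹(i)} v_{ij'}) if i = ρ(j) and b_{ij} = 0 otherwise, and q_j = b_{ρ(j), j}. Then ∑_{i∈N} b_{ij} = q_j ≤ 1 for every j ∈ M, ∑_{j∈M} b_{ij} = 1 for every i ∈ N, and (1/n)·∑_{i∈N} ln( ∑_{j ∈ ρ⁻¹(i)} v_{ij} ) = (1/n)·( ∑_{j∈M} b_{ρ(j), j}·ln v_{ρ(j), j} − ∑_{j∈M} q_j·ln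 q_j ). -/
/-- every integral allocation `ρ` for an unweighted NSW instance induces a
feasible solution `(b, q)` of the Fisher market convex program CP(f-SR) whose objective
value equals the logarithm of the Nash social welfare of `ρ`. -/
theorem stmt7 {N M : Type*} [Fintype N] [Fintype M] [Nonempty N] [Nonempty M]
    [DecidableEq N]
    (v : N → M → ℝ) (hv : ∀ i j, 0 ≤ v i j)
    (ρ : M → N)
    (hρpos : ∀ j, 0 < v (ρ j) j)
    (hbundle : ∀ i, 0 < ∑ j ∈ Finset.univ.filter (fun j => ρ j = i), v i j)
    (b : N → M → ℝ)
    (hb : ∀ i j, b i j =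
      if ρ j = i then v i j / (∑ j' ∈ Finset.univ.filter (fun j' => ρ j' = i), v i j') else 0)
    (q : M → ℝ) (hq : ∀ j, q j = b (ρ j) j) :
    (∀ j, ∑ i, b i j = q j ∧ q j ≤ 1) ∧
    (∀ i, ∑ j, b i j = 1) ∧
    (1 / (Fintype.card N : ℝ)) *
        ∑ i, Real.log (∑ j ∈ Finset.univ.filter (fun j => ρ j = i), v i j)
      = (1 / (Fintype.card N : ℝ)) *
          ((∑ j, q j * Real.log (v (ρ j) j)) - ∑ j, q j * Real.log (q j)) := by
  set S : N → ℝ := fun i => ∑ j ∈ Finset.univ.filter (fun j => ρ j = i), v i j with hS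
  have hqv : ∀ j, q j = v (ρ j) j / S (ρ j) := by
    intro j; rw [hq, hb, if_pos rfl]
  have hvleS : ∀ j, v (ρ j) j ≤ S (ρ j) := by
    intro j
    apply Finset.single_le_sum (f := fun j' => v (ρ j) j') (fun k _ => hv _ k)
    simp
  have hsumi : ∀ i, ∑ j ∈ Finset.univ.filter (fun j => ρ j = i), q j = 1 := by
    intro i
    have : ∀ j ∈ Finset.univ.filter (fun j => ρ j = i), q j = v i j / S i := by
      intro j hj
      simp only [Finset.mem_filter] at hj
      rw [hqv, hj.2]
    rw [Finset.sum_congr rfl this, ← Finset.sum_div]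
    exact div_self (hbundle i).ne'
  refine ⟨fun j => ⟨?_, ?_⟩, fun i => ?_, ?_⟩
  · rw [Finset.sum_eq_single (ρ j)]
    · rw [← hq]
    · intro i _ hi
      rw [hb, if_neg (fun h => hi h.symm)]
    · intro h; exact absurd (Finset.mem_univ _) h
  · rw [hqv]
    exact div_le_one_of_le₀ (hvleS j) (hbundle (ρ j)).le
  · have : ∑ j, b i j = ∑ j ∈ Finset.univ.filter (fun j => ρ j = i), v i j / S i := by
      rw [Finset.sum_filter]
      refine Finset.sum_congr rfl fun j _ => ?_
      rw [hb]
    rw [this, ← Finset.sum_div]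
    exact div_self (hbundle i).ne'
  · congr 1
    have hqpos : ∀ j, 0 < q j := fun j => by
      rw [hqv]; exact div_pos (hρpos j) (hbundle (ρ j))
    have key : ∀ j, q j * Real.log (v (ρ j) j) - q j * Real.log (q j)
        = q j * Real.log (S (ρ j)) := by
      intro j
      rw [← mul_sub, hqv j, Real.log_div (hρpos j).ne' (hbundle (ρ j)).ne']
      ring
    rw [← Finset.sum_sub_distrib, Finset.sum_congr rfl (fun j _ => key j),
      ← Finset.sum_fiberwise (g := ρ) (f := fun j => q j * Real.log (S (ρ j)))]
    refine Finset.sum_congr rfl fun i _ => ?_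
    have : ∀ j ∈ Finset.univ.filter (fun j => ρ j = i),
        q j * Real.log (S (ρ j)) = q j * Real.log (S i) := by
      intro j hj
      simp only [Finset.mem_filter] at hj
      rw [hj.2]
    rw [Finset.sum_congr rfl this, ← Finset.sum_mul, hsumi i, one_mul]
end

section
/- Let N be a finite set of n ≥ 1 identical agents, M a finite set of items, and v : M → ℝ with v_j ≥ 0 for all j ∈ M. Let σ : M → N be an EF1 allocation. Then for every allocation ρ : M → N, ∏_{i∈N} ( ∑_{j ∈ σ⁻¹(i)} v_j ) ≥ e^{−n/e} · ∏_{i∈N} ( ∑_{j ∈ ρ⁻¹(i)} v_j ). Equivalently, the Nash social welfare (∏_{i∈N} v(σ⁻¹(i)))^{1/n} of σ is at least e^{−1/e} times the optimum Nash social welfare. -/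
/-!
Normalize item values by the smallest value `m` of a bundle of the EF1 allocation `σ`, and weigh
an item of normalized value `y` by `g y = y` if `y ≥ e` and by `g y = exp (y / e)` otherwise
(`ef1Weight`). Every bundle is worth at most `m` times the product of the weights of its items, so
`∏ᵢ v(ρ⁻¹ i) ≤ mⁿ ∏ⱼ g(vⱼ / m)` for every allocation `ρ`. By EF1, each `σ`-bundle is one item plus
items of total value at most `m`, which forces `m ∏ g ≤ e^{1/e} v(σ⁻¹ i)`; multiplying over the
agents gives the bound. If `m = 0`, EF1 leaves fewer than `n` items of nonzero value, so every
allocation has a worthless bundle.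
-/

/-- An allocation `σ : M → N` of items to identical agents with item values `v : M → ℝ` is
EF1 (envy-free up to one item): for all agents `i, i'` with `σ⁻¹(i')` nonempty,
`v(σ⁻¹(i)) ≥ v(σ⁻¹(i')) − max_{j ∈ σ⁻¹(i')} v_j`. -/
def IsEF1 {M N : Type*} [Fintype M] [DecidableEq N] (v : M → ℝ) (σ : M → N) : Prop :=
  ∀ i i' : N, ∀ hne : (Finset.univ.filter (fun j => σ j = i')).Nonempty,
    (∑ j ∈ Finset.univ.filter (fun j => σ j = i'), v j)
        - (Finset.univ.filter (fun j => σ j = i')).sup' hne v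
      ≤ ∑ j ∈ Finset.univ.filter (fun j => σ j = i), v j

open Finset Real

noncomputable def ef1Weight (y : ℝ) : ℝ := if exp 1 ≤ y then y else exp (y / exp 1)

lemma le_exp_div_exp_one (y : ℝ) : y ≤ exp (y / exp 1) := by
  simpa [mul_div_cancel₀ _ (exp_pos 1).ne'] using exp_one_mul_le_exp (x := y / exp 1)

lemma exp_div_exp_one_le {x : ℝ} (h1 : 1 ≤ x) (h2 : x ≤ 1 + exp 1) :
    exp (x / exp 1) ≤ exp (exp 1)⁻¹ * x := by
  set z := (x - 1) / exp 1 with hz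
  have hz0 : 0 ≤ z := div_nonneg (by linarith) (exp_pos 1).le
  have hz1 : z ≤ 1 := (div_le_one (exp_pos 1)).2 (by linarith)
  have hchord : exp z ≤ (1 - z) + z * exp 1 := by
    simpa using convexOn_exp.2 (Set.mem_univ 0) (Set.mem_univ 1) (sub_nonneg.2 hz1) hz0
      (sub_add_cancel 1 z)
  have hx : x / exp 1 = (exp 1)⁻¹ + z := by
    rw [hz]; field_simp; ring
  rw [hx, exp_add]
  gcongr
  have : z * exp 1 = x - 1 := by rw [hz]; field_simp
  linarith

lemma sum_le_prod_of_two_le {ι : Type*} {s : Finset ι} {y : ι → ℝ} (hs : s.Nonempty)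
    (hy : ∀ j ∈ s, 2 ≤ y j) : ∑ j ∈ s, y j ≤ ∏ j ∈ s, y j := by
  induction hs using Finset.Nonempty.cons_induction with
  | singleton a => simp
  | cons a s ha hs ih =>
    have hy' : ∀ j ∈ s, 2 ≤ y j := fun j hj => hy j (mem_cons_of_mem hj)
    obtain ⟨b, hb⟩ := hs
    have h2 : 2 ≤ ∑ j ∈ s, y j :=
      (hy' b hb).trans (single_le_sum (fun j hj => zero_le_two.trans (hy' j hj)) hb)
    rw [sum_cons, prod_cons]
    calc y a + ∑ j ∈ s, y j ≤ y a + ∏ j ∈ s, y j := by gcongr; exact ih hy'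
      _ ≤ y a * ∏ j ∈ s, y j := add_le_mul (hy a (mem_cons_self a s)) (h2.trans (ih hy'))

section ef1Weight

variable {ι : Type*} {s : Finset ι} {y x : ι → ℝ}

lemma ef1Weight_pos (y : ℝ) : 0 < ef1Weight y := by
  unfold ef1Weight
  split_ifs with h
  · exact (exp_pos 1).trans_le h
  · exact exp_pos _

lemma ef1Weight_of_le {y : ℝ} (h : exp 1 ≤ y) : ef1Weight y = y := if_pos h

lemma ef1Weight_of_lt {y : ℝ} (h : y < exp 1) : ef1Weight y = exp (y / exp 1) := if_neg h.not_ge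

lemma prod_ef1Weight_of_lt (hy : ∀ j ∈ s, y j < exp 1) :
    ∏ j ∈ s, ef1Weight (y j) = exp ((∑ j ∈ s, y j) / exp 1) := by
  rw [sum_div, exp_sum]
  exact prod_congr rfl fun j hj => ef1Weight_of_lt (hy j hj)

lemma sum_add_le_prod_mul_exp (hy : ∀ j ∈ s, exp 1 ≤ y j) {u : ℝ} (hu : 0 ≤ u) :
    ∑ j ∈ s, y j + u ≤ (∏ j ∈ s, y j) * exp (u / exp 1) := by
  rcases s.eq_empty_or_nonempty with rfl | ⟨b, hb⟩
  · rw [sum_empty, prod_empty, zero_add, one_mul]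
    exact le_exp_div_exp_one u
  have h2e : (2 : ℝ) ≤ exp 1 := by linarith [add_one_le_exp (1 : ℝ)]
  have hc : ∑ j ∈ s, y j ≤ ∏ j ∈ s, y j :=
    sum_le_prod_of_two_le ⟨b, hb⟩ fun j hj => h2e.trans (hy j hj)
  have hP : exp 1 ≤ ∏ j ∈ s, y j :=
    ((hy b hb).trans (single_le_sum (fun j hj => (exp_pos 1).le.trans (hy j hj)) hb)).trans hc
  have hu_le : u ≤ (∏ j ∈ s, y j) * (u / exp 1) := by
    rw [mul_div_assoc', le_div_iff₀ (exp_pos 1), mul_comm]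
    exact mul_le_mul_of_nonneg_right hP hu
  calc ∑ j ∈ s, y j + u ≤ (∏ j ∈ s, y j) * (u / exp 1 + 1) := by linarith
    _ ≤ (∏ j ∈ s, y j) * exp (u / exp 1) := by
        gcongr
        · exact hP.trans' (exp_pos 1).le
        · exact add_one_le_exp _

lemma sum_le_prod_ef1Weight (hy : ∀ j ∈ s, 0 ≤ y j) :
    ∑ j ∈ s, y j ≤ ∏ j ∈ s, ef1Weight (y j) := by
  classical
  rw [← sum_filter_add_sum_filter_not s (fun j => exp 1 ≤ y j),
    ← prod_filter_mul_prod_filter_not s (fun j => exp 1 ≤ y j),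
    prod_ef1Weight_of_lt fun j hj => not_le.1 (mem_filter.1 hj).2,
    prod_congr rfl fun j hj => ef1Weight_of_le (mem_filter.1 hj).2]
  exact sum_add_le_prod_mul_exp (fun j hj => (mem_filter.1 hj).2)
    (sum_nonneg fun j hj => hy j (mem_filter.1 hj).1)

lemma prod_ef1Weight_le [DecidableEq ι] {b : ι} (hb : b ∈ s) (hy : ∀ j ∈ s, 0 ≤ y j)
    (herase : ∑ j ∈ s.erase b, y j ≤ 1) (hs : 1 ≤ ∑ j ∈ s, y j) :
    ∏ j ∈ s, ef1Weight (y j) ≤ exp (exp 1)⁻¹ * ∑ j ∈ s, y j := by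
  have hsmall : ∀ j ∈ s.erase b, y j < exp 1 := fun j hj =>
    ((single_le_sum (fun k hk => hy k (mem_of_mem_erase hk)) hj).trans herase).trans_lt
      (one_lt_exp_iff.2 one_pos)
  have hw : 0 ≤ ∑ j ∈ s.erase b, y j := sum_nonneg fun k hk => hy k (mem_of_mem_erase hk)
  rw [← mul_prod_erase s _ hb, prod_ef1Weight_of_lt hsmall]
  rw [← add_sum_erase s y hb] at hs ⊢
  unfold ef1Weight
  split_ifs with hbig
  · have : exp ((∑ j ∈ s.erase b, y j) / exp 1) ≤ exp (exp 1)⁻¹ := by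
      gcongr
      rw [div_le_iff₀ (exp_pos 1), inv_mul_cancel₀ (exp_pos 1).ne']
      exact herase
    nlinarith [exp_pos (exp 1)⁻¹, hy b hb]
  · rw [← exp_add, ← add_div]
    exact exp_div_exp_one_le hs (by linarith [not_le.1 hbig])

lemma sum_le_mul_prod_ef1Weight {t : ℝ} (ht : 0 < t) (hx : ∀ j ∈ s, 0 ≤ x j) :
    ∑ j ∈ s, x j ≤ t * ∏ j ∈ s, ef1Weight (x j / t) := by
  have := sum_le_prod_ef1Weight fun j hj => div_nonneg (hx j hj) ht.le
  rwa [← sum_div, div_le_iff₀ ht, mul_comm] at this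

lemma mul_prod_ef1Weight_le [DecidableEq ι] {t : ℝ} (ht : 0 < t) {b : ι} (hb : b ∈ s)
    (hx : ∀ j ∈ s, 0 ≤ x j) (herase : ∑ j ∈ s.erase b, x j ≤ t)
    (hs : t ≤ ∑ j ∈ s, x j) :
    t * ∏ j ∈ s, ef1Weight (x j / t) ≤ exp (exp 1)⁻¹ * ∑ j ∈ s, x j := by
  have := prod_ef1Weight_le (y := fun j => x j / t) hb (fun j hj => div_nonneg (hx j hj) ht.le)
    (by rwa [← sum_div, div_le_one ht]) (by rwa [← sum_div, one_le_div ht])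
  rw [← sum_div, mul_div_assoc', le_div_iff₀ ht] at this
  linarith

end ef1Weight

lemma exists_sum_eq_zero_of_card_lt {M N R : Type*} [Fintype M] [Fintype N] [DecidableEq N]
    [AddCommMonoid R] [DecidableEq R] {v : M → R} (ρ : M → N)
    (h : #(univ.filter fun j => v j ≠ 0) < Fintype.card N) :
    ∃ i, ∑ j ∈ univ.filter (fun j => ρ j = i), v j = 0 := by
  by_contra! hne
  have : ∀ i, ∃ j, ρ j = i ∧ v j ≠ 0 := fun i => by
    obtain ⟨j, hj, hvj⟩ := exists_ne_zero_of_sum_ne_zero (hne i)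
    exact ⟨j, (mem_filter.1 hj).2, hvj⟩
  choose c hcρ hcv using this
  have := card_le_card_of_injOn c (s := univ) (t := univ.filter fun j => v j ≠ 0)
    (fun i _ => mem_filter.2 ⟨mem_univ _, hcv i⟩)
    (fun i _ i' _ h => by rw [← hcρ i, ← hcρ i', h])
  simp only [card_univ] at this
  omega

namespace IsEF1

variable {M N : Type*} [Fintype M] [DecidableEq N] {v : M → ℝ} {σ : M → N}

variable [DecidableEq M]

lemma exists_sum_erase_le (hσ : IsEF1 v σ) {i : N}
    (hne : (univ.filter fun j => σ j = i).Nonempty) :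
    ∃ b ∈ univ.filter (fun j => σ j = i), ∀ k,
      ∑ j ∈ (univ.filter fun j => σ j = i).erase b, v j
        ≤ ∑ j ∈ univ.filter (fun j => σ j = k), v j := by
  obtain ⟨b, hb, hmax⟩ := exists_mem_eq_sup' hne v
  refine ⟨b, hb, fun k => ?_⟩
  have := hσ k i hne
  rw [← add_sum_erase _ _ hb, ← hmax] at this
  linarith

lemma card_filter_ne_zero_lt [Fintype N] (hσ : IsEF1 v σ) (hv : ∀ j, 0 ≤ v j) {k : N}
    (hk : ∑ j ∈ univ.filter (fun j => σ j = k), v j = 0) :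
    #(univ.filter fun j => v j ≠ 0) < Fintype.card N := by
  have hinj : ∀ j j', v j ≠ 0 → v j' ≠ 0 → σ j = σ j' → j = j' := by
    intro j j' hj hj' hjj'
    obtain ⟨b, -, hb⟩ := hσ.exists_sum_erase_le (i := σ j) ⟨j, by simp⟩
    -- EF1 towards the worthless bundle `k`: all items of the bundle but `b` are worthless
    have heq : ∀ a, σ a = σ j → v a ≠ 0 → a = b := by
      intro a ha hva
      by_contra hab
      have : v a ≤ ∑ j ∈ (univ.filter fun j' => σ j' = σ j).erase b, v j :=
        single_le_sum (fun a _ => hv a) (mem_erase.2 ⟨hab, mem_filter.2 ⟨mem_univ a, ha⟩⟩)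
      exact hva (le_antisymm (by linarith [hb k]) (hv a))
    rw [heq j rfl hj, heq j' hjj'.symm hj']
  have hmaps : ∀ j ∈ univ.filter (fun j => v j ≠ 0), σ j ∈ univ.erase k := by
    intro j hj
    refine mem_erase.2 ⟨fun hjk => (mem_filter.1 hj).2 ?_, mem_univ _⟩
    have : v j ≤ ∑ j ∈ univ.filter (fun j => σ j = k), v j :=
      single_le_sum (fun a _ => hv a) (mem_filter.2 ⟨mem_univ j, hjk⟩)
    exact le_antisymm (by linarith) (hv j)
  calc #(univ.filter fun j => v j ≠ 0) ≤ #(univ.erase k) :=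
        card_le_card_of_injOn σ hmaps fun j hj j' hj' =>
          hinj j j' (mem_filter.1 hj).2 (mem_filter.1 hj').2
    _ < Fintype.card N := card_erase_lt_of_mem (mem_univ k)

lemma mul_prod_ef1Weight_le_of_isMin (hσ : IsEF1 v σ) (hv : ∀ j, 0 ≤ v j) {k : N}
    (hk : ∀ i, ∑ j ∈ univ.filter (fun j => σ j = k), v j
      ≤ ∑ j ∈ univ.filter (fun j => σ j = i), v j)
    (hm : 0 < ∑ j ∈ univ.filter (fun j => σ j = k), v j) (i : N) :
    (∑ j ∈ univ.filter (fun j => σ j = k), v j) * ∏ j ∈ univ.filter (fun j => σ j = i),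
        ef1Weight (v j / ∑ j ∈ univ.filter (fun j => σ j = k), v j)
      ≤ exp (exp 1)⁻¹ * ∑ j ∈ univ.filter (fun j => σ j = i), v j := by
  obtain ⟨b, hb, herase⟩ :=
    hσ.exists_sum_erase_le (nonempty_of_sum_ne_zero (hm.trans_le (hk i)).ne')
  exact mul_prod_ef1Weight_le hm hb (fun j _ => hv j) (herase k) (hk i)

end IsEF1

/-- EF1 gap, Barman–Krishnamurthy–Vaish: for identical agents with nonnegative
item values, any EF1 allocation `σ` satisfies
`∏_i v(σ⁻¹(i)) ≥ e^{−n/e} · ∏_i v(ρ⁻¹(i))` for every allocation `ρ`. -/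
theorem stmt8 {M N : Type*} [Fintype M] [Fintype N] [DecidableEq N] [Nonempty N]
    (v : M → ℝ) (hv : ∀ j, 0 ≤ v j)
    (σ : M → N) (hσ : IsEF1 v σ)
    (ρ : M → N) :
    Real.exp (-(Fintype.card N : ℝ) / Real.exp 1) *
        ∏ i, (∑ j ∈ Finset.univ.filter (fun j => ρ j = i), v j)
      ≤ ∏ i, (∑ j ∈ Finset.univ.filter (fun j => σ j = i), v j) := by
  classical
  obtain ⟨k, hk⟩ := Finite.exists_min fun i => ∑ j ∈ univ.filter (fun j => σ j = i), v j
  set m := ∑ j ∈ univ.filter (fun j => σ j = k), v j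
  have hbundle_nonneg (τ : M → N) (i : N) : 0 ≤ ∑ j ∈ univ.filter (fun j => τ j = i), v j :=
    sum_nonneg fun j _ => hv j
  rcases (hbundle_nonneg σ k).eq_or_lt with hm | hm
  · obtain ⟨i, hi⟩ := exists_sum_eq_zero_of_card_lt ρ (hσ.card_filter_ne_zero_lt hv hm.symm)
    rw [prod_eq_zero (mem_univ i) hi, mul_zero]
    exact prod_nonneg fun i _ => hbundle_nonneg σ i
  calc exp (-(Fintype.card N : ℝ) / exp 1) * ∏ i, ∑ j ∈ univ.filter (fun j => ρ j = i), v j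
      ≤ exp (-(Fintype.card N : ℝ) / exp 1) *
          ∏ i, (m * ∏ j ∈ univ.filter (fun j => ρ j = i), ef1Weight (v j / m)) := by
        refine mul_le_mul_of_nonneg_left (prod_le_prod (fun i _ => hbundle_nonneg ρ i)
          fun i _ => sum_le_mul_prod_ef1Weight hm fun j _ => hv j) (exp_pos _).le
    _ = exp (-(Fintype.card N : ℝ) / exp 1) *
          ∏ i, (m * ∏ j ∈ univ.filter (fun j => σ j = i), ef1Weight (v j / m)) := by
        simp only [prod_mul_distrib, prod_fiberwise]
    _ ≤ exp (-(Fintype.card N : ℝ) / exp 1) *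
          ∏ i, (exp (exp 1)⁻¹ * ∑ j ∈ univ.filter (fun j => σ j = i), v j) := by
        refine mul_le_mul_of_nonneg_left (prod_le_prod (fun i _ => ?_)
          fun i _ => hσ.mul_prod_ef1Weight_le_of_isMin hv hk hm i) (exp_pos _).le
        exact mul_nonneg hm.le (prod_nonneg fun j _ => (ef1Weight_pos _).le)
    _ = ∏ i, ∑ j ∈ univ.filter (fun j => σ j = i), v j := by
        rw [prod_mul_distrib, prod_const, card_univ, ← exp_nat_mul, ← mul_assoc, ← exp_add,
          neg_div, div_eq_mul_inv, neg_add_cancel, exp_zero, one_mul]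
end

section
/- Let N be a finite nonempty set with |N| = n, φ : N → ℝ with φ_i ≥ 0 for all i, and ψ > 0. Let h > 0 satisfy (1/n)·∑_{i∈N} min(φ_i, h) + ψ = h. Then ∏_{i∈N} max(φ_i, h) ≤ e^{n/e} · ∏_{i∈N} (φ_i + ψ). -/
lemma le_exp_div_e {t : ℝ} (ht : 0 < t) : t ≤ Real.exp (t / Real.exp 1) := by
  have h1 : Real.log (t / Real.exp 1) ≤ t / Real.exp 1 - 1 :=
    Real.log_le_sub_one_of_pos (by positivity)
  have h2 : Real.log (t / Real.exp 1) = Real.log t - 1 := by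
    rw [Real.log_div (ne_of_gt ht) (Real.exp_ne_zero 1), Real.log_exp]
  calc t = Real.exp (Real.log t) := (Real.exp_log ht).symm
    _ ≤ _ := Real.exp_le_exp.mpr (by linarith)

lemma key_ineq {φi ψ h : ℝ} (hφ : 0 ≤ φi) (hψ : 0 < ψ) (hh : 0 < h) :
    max φi h ≤ Real.exp ((h - min φi h) / (Real.exp 1 * ψ)) * (φi + ψ) := by
  have he : 0 < Real.exp 1 := Real.exp_pos 1
  rcases le_or_gt h φi with hc | hc
  · rw [max_eq_left hc, min_eq_right hc, sub_self, zero_div, Real.exp_zero, one_mul]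
    linarith
  · rw [max_eq_right hc.le, min_eq_left hc.le]
    rcases le_or_gt h (φi + ψ) with hc2 | hc2
    · have : (1 : ℝ) ≤ Real.exp ((h - φi) / (Real.exp 1 * ψ)) := by
        rw [← Real.exp_zero]
        exact Real.exp_le_exp.mpr (div_nonneg (by linarith) (by positivity))
      nlinarith
    · have hpos : 0 < φi + ψ := by linarith
      have ht : h / (φi + ψ) ≤ Real.exp ((h / (φi + ψ)) / Real.exp 1) :=
        le_exp_div_e (by positivity)
      have hexp : (h / (φi + ψ)) / Real.exp 1 ≤ (h - φi) / (Real.exp 1 * ψ) := by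
        rw [div_div, div_le_div_iff₀ (by positivity) (by positivity)]
        nlinarith [mul_nonneg (mul_nonneg hφ (by linarith : (0:ℝ) ≤ h - φi - ψ)) he.le]
      have := Real.exp_le_exp.mpr hexp
      have h3 : h / (φi + ψ) ≤ Real.exp ((h - φi) / (Real.exp 1 * ψ)) := le_trans ht this
      calc h = (h / (φi + ψ)) * (φi + ψ) := by field_simp
        _ ≤ _ := by nlinarith

/-- core inequality of the simple EF1-gap proof: if `φ_i ≥ 0`, `ψ > 0`, and
`h > 0` satisfies the water-level equation `(1/n)·∑_i min(φ_i, h) + ψ = h`, then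
`∏_i max(φ_i, h) ≤ e^{n/e} · ∏_i (φ_i + ψ)`. -/
theorem stmt9 {N : Type*} [Fintype N] [Nonempty N]
    (φ : N → ℝ) (hφ : ∀ i, 0 ≤ φ i)
    (ψ : ℝ) (hψ : 0 < ψ)
    (h : ℝ) (hh : 0 < h)
    (hlevel : (1 / (Fintype.card N : ℝ)) * (∑ i, min (φ i) h) + ψ = h) :
    ∏ i, max (φ i) h ≤
      Real.exp ((Fintype.card N : ℝ) / Real.exp 1) * ∏ i, (φ i + ψ) := by
  have hn : (0 : ℝ) < (Fintype.card N : ℝ) := by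
    exact_mod_cast Fintype.card_pos
  have hsum : ∑ i, (h - min (φ i) h) = (Fintype.card N : ℝ) * ψ := by
    rw [Finset.sum_sub_distrib, Finset.sum_const, Finset.card_univ, nsmul_eq_mul]
    have : ∑ i, min (φ i) h = (Fintype.card N : ℝ) * (h - ψ) := by
      field_simp at hlevel
      linarith
    rw [this]; ring
  have step1 : ∏ i, max (φ i) h ≤
      ∏ i, (Real.exp ((h - min (φ i) h) / (Real.exp 1 * ψ)) * (φ i + ψ)) := by
    apply Finset.prod_le_prod
    · intro i _; exact le_trans hh.le (le_max_right _ _)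
    · intro i _; exact key_ineq (hφ i) hψ hh
  calc ∏ i, max (φ i) h
      ≤ ∏ i, (Real.exp ((h - min (φ i) h) / (Real.exp 1 * ψ)) * (φ i + ψ)) := step1
    _ = (∏ i, Real.exp ((h - min (φ i) h) / (Real.exp 1 * ψ))) * ∏ i, (φ i + ψ) :=
        Finset.prod_mul_distrib
    _ = Real.exp (∑ i, (h - min (φ i) h) / (Real.exp 1 * ψ)) * ∏ i, (φ i + ψ) := by
        rw [Real.exp_sum]
    _ = Real.exp ((Fintype.card N : ℝ) / Real.exp 1) * ∏ i, (φ i + ψ) := by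
        rw [← Finset.sum_div, hsum]
        congr 1
        field_simp
end

section
/- Let k be a positive integer, h > 0, ψ > 0, and φ : Fin k → ℝ with 0 ≤ φ_i ≤ h for all i. Set W = k·h − ∑_{i} φ_i (so W ≥ 0). Then ∑_{i} ln(φ_i + ψ) ≥ k·ln h − (W/h)·ln(h/ψ). -/
open Finset Real

theorem Real.log_sub_div_mul_log_div_le_log_add {h ψ x : ℝ} (hh : 0 < h) (hψ : 0 < ψ)
    (hx : x ∈ Set.Icc 0 h) :
    log h - ((h - x) / h) * log (h / ψ) ≤ log (x + ψ) := by
  set t := x / h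
  have ht0 : 0 ≤ t := div_nonneg hx.1 hh.le
  have ht1 : 0 ≤ 1 - t := sub_nonneg.2 ((div_le_one hh).2 hx.2)
  have hweights : t + (1 - t) = 1 := by ring
  have hth : t * h = x := div_mul_cancel₀ x hh.ne'
  have hmid_pos : 0 < t * h + (1 - t) * ψ :=
    convex_Ioi (0 : ℝ) (Set.mem_Ioi.2 hh) (Set.mem_Ioi.2 hψ) ht0 ht1 hweights
  calc log h - ((h - x) / h) * log (h / ψ)
      = t * log h + (1 - t) * log ψ := by
        rw [log_div hh.ne' hψ.ne', sub_div, div_self hh.ne']; ring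
    _ ≤ log (t * h + (1 - t) * ψ) := strictConcaveOn_log_Ioi.concaveOn.2
        (Set.mem_Ioi.2 hh) (Set.mem_Ioi.2 hψ) ht0 ht1 hweights
    _ ≤ log (x + ψ) := log_le_log hmid_pos (by rw [hth]; nlinarith)

theorem Finset.card_mul_log_sub_div_mul_log_div_le_sum_log_add {ι : Type*} (s : Finset ι)
    {h ψ : ℝ} (hh : 0 < h) (hψ : 0 < ψ) {φ : ι → ℝ} (hφ : ∀ i ∈ s, φ i ∈ Set.Icc 0 h) :
    (#s : ℝ) * log h - (((#s : ℝ) * h - ∑ i ∈ s, φ i) / h) * log (h / ψ)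
      ≤ ∑ i ∈ s, log (φ i + ψ) := by
  have hsum : (#s : ℝ) * log h - (((#s : ℝ) * h - ∑ i ∈ s, φ i) / h) * log (h / ψ)
      = ∑ i ∈ s, (log h - ((h - φ i) / h) * log (h / ψ)) := by
    rw [sum_sub_distrib, ← sum_mul, ← sum_div, sum_sub_distrib]
    simp only [sum_const, nsmul_eq_mul]
  rw [hsum]
  exact sum_le_sum fun i hi => log_sub_div_mul_log_div_le_log_add hh hψ (hφ i hi)

theorem stmt10_general (k : ℕ)
    (h ψ : ℝ) (hh : 0 < h) (hψ : 0 < ψ)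
    (φ : Fin k → ℝ) (hφ : ∀ i, φ i ∈ Set.Icc (0 : ℝ) h) :
    (k : ℝ) * Real.log h - (((k : ℝ) * h - ∑ i, φ i) / h) * Real.log (h / ψ)
      ≤ ∑ i, Real.log (φ i + ψ) := by
  simpa using card_mul_log_sub_div_mul_log_div_le_sum_log_add univ hh hψ fun i _ => hφ i

/-- concavity-of-logarithm bound: for `h, ψ > 0` and `0 ≤ φ_i ≤ h` for all
`i : Fin k`, with `W = k·h − ∑_i φ_i`, one has
`∑_i ln(φ_i + ψ) ≥ k·ln h − (W/h)·ln(h/ψ)`. -/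
theorem stmt10 (k : ℕ) (hk : 0 < k)
    (h ψ : ℝ) (hh : 0 < h) (hψ : 0 < ψ)
    (φ : Fin k → ℝ) (hφ : ∀ i, φ i ∈ Set.Icc (0 : ℝ) h) :
    (k : ℝ) * Real.log h - (((k : ℝ) * h - ∑ i, φ i) / h) * Real.log (h / ψ)
      ≤ ∑ i, Real.log (φ i + ψ) :=
  stmt10_general k h ψ hh hψ φ hφ
end

section
/- Let θ : ℝ → ℝ be nondecreasing and convex on [0,∞) with θ(0) = 0, twice continuously differentiable on (0,∞) with θ'(t) ≥ 0 and θ''(t) ≥ 0 for t > 0, and with θ' extending continuously to 0. Let J be a finite set, p : J → ℝ with p_j > 0, and x : J → [0,1]. Suppose h* ≥ 0 satisfies ∑_{j∈J} min(p_j, h*)·x_j = h*, with h* > 0 if ∑_j x_j > 1 and h* = 0 if ∑_j x_j ≤ 1. Define f(x) = (∑_{j: p_j > h*} x_j·(θ(p_j) − θ(h*))) + θ(h*). Then f(x) = g_θ(x, h*) and g_θ(x, h) ≤ f(x) for every h ≥ 0; that is, f(x) = max_{h ≥ 0} g_θ(x, h). -/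
/-!
For `h > 0`, `g_θ(x, h)` is differentiable in `h` with derivative
`θ''(h)·(∑_j min(p_j, h)·x_j − h)`: the kinks of `min(p_j, ·)` cancel. The load
`∑_j min(p_j, h)·x_j / h` is nonincreasing in `h` and equals `1` at the water level `h* > 0`
(and is at most `∑_j x_j ≤ 1` when `h* = 0`), so the derivative is `≥ 0` below `h*` and `≤ 0`
above it. Together with continuity on `[0, ∞)`, where at `0` a convex nondecreasing `θ` is
squeezed between `θ(0)` and a chord, `h*` maximises `g_θ(x, ·)`.
-/

/-- The scheduling analogue of `g`:
`g_θ(x, h) = (∑_{j : p_j > h} x_j·(θ(p_j) − θ(h))) + θ(h) + θ'(h)·(∑_j min(p_j, h)·x_j − h)`. -/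
noncomputable def gTheta {J : Type*} [Fintype J] (θ θ' : ℝ → ℝ) (p x : J → ℝ) (h : ℝ) : ℝ :=
  (∑ j ∈ Finset.univ.filter (fun j => h < p j), x j * (θ (p j) - θ h)) + θ h
    + θ' h * ((∑ j, min (p j) h * x j) - h)

open Set Filter Topology

lemma ConvexOn.continuousWithinAt_Ici_of_monotoneOn {f : ℝ → ℝ} {a : ℝ}
    (hconv : ConvexOn ℝ (Ici a) f) (hmono : MonotoneOn f (Ici a)) :
    ContinuousWithinAt f (Ici a) a := by
  have lower : ∀ᶠ s in 𝓝[≥] a, f a ≤ f s := by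
    filter_upwards [self_mem_nhdsWithin] with s hs
    exact hmono self_mem_Ici hs hs
  have upper : ∀ᶠ s in 𝓝[≥] a, f s ≤ f a + (s - a) * (f (a + 1) - f a) := by
    filter_upwards [self_mem_nhdsWithin, nhdsWithin_le_nhds (Iio_mem_nhds (lt_add_one a))]
      with s (hs : a ≤ s) (hs1 : s < a + 1)
    have := hconv.2 self_mem_Ici (show a + 1 ∈ Ici a by simp) (by linarith : 0 ≤ 1 - (s - a))
      (sub_nonneg.2 hs) (by ring)
    simp only [smul_eq_mul] at this
    rw [show (1 - (s - a)) * a + (s - a) * (a + 1) = s by ring] at this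
    linarith
  have hchord : Tendsto (fun s => f a + (s - a) * (f (a + 1) - f a)) (𝓝[≥] a) (𝓝 (f a)) :=
    tendsto_nhdsWithin_of_tendsto_nhds (Continuous.tendsto' (by fun_prop) a _ (by simp))
  exact tendsto_of_tendsto_of_tendsto_of_le_of_le' tendsto_const_nhds hchord lower upper

lemma isMaxOn_Ici_of_hasDerivAt {F F' : ℝ → ℝ} {a c : ℝ} (hac : a ≤ c)
    (hF : ContinuousOn F (Ici a)) (hF' : ∀ t, a < t → HasDerivAt F (F' t) t)
    (hinc : ∀ t, a < t → t < c → 0 ≤ F' t) (hdec : ∀ t, c < t → F' t ≤ 0) :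
    IsMaxOn F (Ici a) c := by
  intro h (hh : a ≤ h)
  rcases le_total h c with hc | hc
  · refine monotoneOn_of_hasDerivWithinAt_nonneg (f' := F') (convex_Icc a c)
      (hF.mono Icc_subset_Ici_self) (fun t ht => ?_) (fun t ht => ?_) ⟨hh, hc⟩ ⟨hac, le_rfl⟩ hc
    all_goals rw [interior_Icc] at ht
    · exact (hF' t ht.1).hasDerivWithinAt
    · exact hinc t ht.1 ht.2
  · refine antitoneOn_of_hasDerivWithinAt_nonpos (f' := F') (convex_Ici c)
      (hF.mono (Ici_subset_Ici.2 hac)) (fun t ht => ?_) (fun t ht => ?_) self_mem_Ici hc hc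
    all_goals rw [interior_Ici] at ht
    · exact (hF' t (hac.trans_lt ht)).hasDerivWithinAt
    · exact hdec t ht

section Truncation

variable {θ θ' θ'' : ℝ → ℝ} {t : ℝ}

lemma hasDerivAt_mul_self_sub (h1 : HasDerivAt θ (θ' t) t) (h2 : HasDerivAt θ' (θ'' t) t) :
    HasDerivAt (fun s => θ' s * s - θ s) (θ'' t * t) t := by
  simpa using (h2.fun_mul (hasDerivAt_id t)).fun_sub h1

/-- At the kink `s = p` the one-sided derivatives of both terms jump by the same `θ'(p)`. -/
lemma hasDerivAt_mul_min_sub_comp_min (p : ℝ) (h1 : HasDerivAt θ (θ' t) t)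
    (h2 : HasDerivAt θ' (θ'' t) t) :
    HasDerivAt (fun s => θ' s * min p s - θ (min p s)) (θ'' t * min p t) t := by
  have below := hasDerivAt_mul_self_sub h1 h2
  have above : HasDerivAt (fun s => θ' s * p - θ p) (θ'' t * p) t :=
    (h2.mul_const p).sub_const (θ p)
  rcases lt_trichotomy t p with htp | rfl | hpt
  · rw [min_eq_right htp.le]
    refine below.congr_of_eventuallyEq ?_
    filter_upwards [Iio_mem_nhds htp] with s (hs : s < p)
    rw [min_eq_right hs.le]
  · rw [min_self]
    have hIic : HasDerivWithinAt (fun s => θ' s * min t s - θ (min t s)) (θ'' t * t) (Iic t) t :=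
      below.hasDerivWithinAt.congr (fun s (hs : s ≤ t) => by rw [min_eq_right hs])
        (by rw [min_self])
    have hIci : HasDerivWithinAt (fun s => θ' s * min t s - θ (min t s)) (θ'' t * t) (Ici t) t :=
      above.hasDerivWithinAt.congr (fun s (hs : t ≤ s) => by rw [min_eq_left hs])
        (by rw [min_self])
    simpa using hIic.union hIci
  · rw [min_eq_left hpt.le]
    refine above.congr_of_eventuallyEq ?_
    filter_upwards [Ioi_mem_nhds hpt] with s (hs : p < s)
    rw [min_eq_left hs.le]

end Truncation

lemma gTheta_eq {J : Type*} [Fintype J] (θ θ' : ℝ → ℝ) (p x : J → ℝ) (h : ℝ) :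
    gTheta θ θ' p x h = ∑ j, x j * θ (p j) - (θ' h * h - θ h)
      + ∑ j, x j * (θ' h * min (p j) h - θ (min (p j) h)) := by
  have hfilter : ∑ j ∈ Finset.univ.filter (fun j => h < p j), x j * (θ (p j) - θ h)
      = ∑ j, x j * (θ (p j) - θ (min (p j) h)) := by
    rw [Finset.sum_filter]
    refine Finset.sum_congr rfl fun j _ => ?_
    split_ifs with hj
    · rw [min_eq_right hj.le]
    · rw [min_eq_left (not_lt.1 hj), sub_self, mul_zero]
  have hload : ∑ j, x j * (θ' h * min (p j) h) = θ' h * ∑ j, min (p j) h * x j := by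
    rw [Finset.mul_sum]
    exact Finset.sum_congr rfl fun j _ => by ring
  rw [gTheta, hfilter]
  simp only [mul_sub, Finset.sum_sub_distrib, hload]
  ring

section GTheta

variable {J : Type*} [Fintype J] {θ θ' θ'' : ℝ → ℝ} {p x : J → ℝ}

lemma continuousOn_gTheta (hθ : ContinuousOn θ (Ici 0)) (hθ' : ContinuousOn θ' (Ici 0))
    (hp : ∀ j, 0 ≤ p j) : ContinuousOn (gTheta θ θ' p x) (Ici 0) := by
  have hmin : ∀ j, ContinuousOn (fun s => min (p j) s) (Ici 0) := fun j => by fun_prop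
  have hθmin : ∀ j, ContinuousOn (fun s => θ (min (p j) s)) (Ici 0) := fun j =>
    hθ.comp (hmin j) fun s (hs : 0 ≤ s) => le_min (hp j) hs
  rw [funext (gTheta_eq θ θ' p x)]
  exact (continuousOn_const.sub ((hθ'.mul continuousOn_id).sub hθ)).add
    (continuousOn_finsetSum _ fun j _ =>
      continuousOn_const.mul ((hθ'.mul (hmin j)).sub (hθmin j)))

lemma hasDerivAt_gTheta {t : ℝ} (h1 : HasDerivAt θ (θ' t) t) (h2 : HasDerivAt θ' (θ'' t) t) :
    HasDerivAt (gTheta θ θ' p x) (θ'' t * (∑ j, min (p j) t * x j - t)) t := by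
  rw [funext (gTheta_eq θ θ' p x)]
  refine (((hasDerivAt_mul_self_sub h1 h2).const_sub (∑ j, x j * θ (p j))).fun_add
    (HasDerivAt.fun_sum (u := Finset.univ) fun j _ =>
      (hasDerivAt_mul_min_sub_comp_min (p j) h1 h2).const_mul (x j))).congr_deriv ?_
  rw [mul_sub, Finset.mul_sum, neg_add_eq_sub]
  exact congrArg (· - _) (Finset.sum_congr rfl fun j _ => by ring)

end GTheta

lemma mul_min_le_mul_min {p a b : ℝ} (hp : 0 ≤ p) (ha : 0 ≤ a) (hab : a ≤ b) :
    a * min p b ≤ b * min p a := by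
  rcases le_total p a with hpa | hap
  · rw [min_eq_left hpa, min_eq_left (hpa.trans hab)]
    exact mul_le_mul_of_nonneg_right hab hp
  · rw [min_eq_right hap]
    exact mul_le_mul_of_nonneg_left (min_le_right p b) ha |>.trans_eq (mul_comm a b)

section WaterLevel

variable {J : Type*} [Fintype J] {p x : J → ℝ} {a b t : ℝ}

lemma mul_sum_min_mul_le (hp : ∀ j, 0 ≤ p j) (hx : ∀ j, 0 ≤ x j) (ha : 0 ≤ a) (hab : a ≤ b) :
    a * ∑ j, min (p j) b * x j ≤ b * ∑ j, min (p j) a * x j := by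
  simp only [Finset.mul_sum, ← mul_assoc]
  exact Finset.sum_le_sum fun j _ =>
    mul_le_mul_of_nonneg_right (mul_min_le_mul_min (hp j) ha hab) (hx j)

lemma sum_min_mul_le_self (hx : ∀ j, 0 ≤ x j) (hx1 : ∑ j, x j ≤ 1) (ht : 0 ≤ t) :
    ∑ j, min (p j) t * x j ≤ t :=
  calc ∑ j, min (p j) t * x j
      ≤ ∑ j, t * x j := Finset.sum_le_sum fun j _ =>
        mul_le_mul_of_nonneg_right (min_le_right _ _) (hx j)
    _ = t * ∑ j, x j := (Finset.mul_sum ..).symm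
    _ ≤ t := mul_le_of_le_one_right ht hx1

end WaterLevel

theorem stmt12_general {J : Type*} [Fintype J]
    (θ θ' θ'' : ℝ → ℝ)
    (hmono : MonotoneOn θ (Set.Ici 0)) (hconv : ConvexOn ℝ (Set.Ici 0) θ)
    (hD1 : ∀ t : ℝ, 0 < t → HasDerivAt θ (θ' t) t)
    (hD2 : ∀ t : ℝ, 0 < t → HasDerivAt θ' (θ'' t) t)
    (hθ'cont : ContinuousOn θ' (Set.Ici 0))
    (hθ''nn : ∀ t : ℝ, 0 < t → 0 ≤ θ'' t)
    (p x : J → ℝ) (hp : ∀ j, 0 < p j) (hx : ∀ j, x j ∈ Set.Icc (0 : ℝ) 1)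
    (hstar : ℝ) (hstar0 : 0 ≤ hstar)
    (hwater : ∑ j, min (p j) hstar * x j = hstar)
    (hpos : 1 < ∑ j, x j → 0 < hstar) :
    ((∑ j ∈ Finset.univ.filter (fun j => hstar < p j), x j * (θ (p j) - θ hstar)) + θ hstar
        = gTheta θ θ' p x hstar) ∧
      ∀ h : ℝ, 0 ≤ h → gTheta θ θ' p x h ≤
        (∑ j ∈ Finset.univ.filter (fun j => hstar < p j), x j * (θ (p j) - θ hstar))
          + θ hstar := by
  have hf : (∑ j ∈ Finset.univ.filter (fun j => hstar < p j), x j * (θ (p j) - θ hstar))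
      + θ hstar = gTheta θ θ' p x hstar := by
    rw [gTheta, hwater, sub_self, mul_zero, add_zero]
  refine ⟨hf, fun h hh => hf ▸ ?_⟩
  have hp0 : ∀ j, 0 ≤ p j := fun j => (hp j).le
  have hx0 : ∀ j, 0 ≤ x j := fun j => (hx j).1
  have hθ : ContinuousOn θ (Ici 0) :=
    hconv.continuousOn_Ici (hconv.continuousWithinAt_Ici_of_monotoneOn hmono)
  have below : ∀ t, 0 < t → t < hstar → t ≤ ∑ j, min (p j) t * x j := fun t ht hts => by
    have := mul_sum_min_mul_le hp0 hx0 ht.le hts.le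
    rw [hwater, mul_comm] at this
    exact le_of_mul_le_mul_left this (ht.trans hts)
  have above : ∀ t, hstar < t → ∑ j, min (p j) t * x j ≤ t := fun t hst => by
    rcases hstar0.eq_or_lt with hzero | hstarpos
    · refine sum_min_mul_le_self hx0 (not_lt.1 fun h1 => ?_) (hstar0.trans hst.le)
      exact (hpos h1).ne' hzero.symm
    · have := mul_sum_min_mul_le hp0 hx0 hstar0 hst.le
      rw [hwater, mul_comm t] at this
      exact le_of_mul_le_mul_left this hstarpos
  refine isMaxOn_Ici_of_hasDerivAt hstar0 (continuousOn_gTheta hθ hθ'cont hp0)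
    (fun t ht => hasDerivAt_gTheta (hD1 t ht) (hD2 t ht)) (fun t ht hts => ?_)
    (fun t hst => ?_) hh
  · exact mul_nonneg (hθ''nn t ht) (sub_nonneg.2 (below t ht hts))
  · exact mul_nonpos_of_nonneg_of_nonpos (hθ''nn t (hstar0.trans_lt hst))
      (sub_nonpos.2 (above t hst))

/-- for `θ` nondecreasing and convex on `[0,∞)` with `θ(0) = 0`, twice
continuously differentiable on `(0,∞)` with nonnegative first and second derivatives, and
with `θ'` extending continuously to `0`, if `h*` is the water level of `x` (positive iff
`∑_j x_j > 1`), then `f(x) = g_θ(x, h*)` and `g_θ(x, h) ≤ f(x)` for every `h ≥ 0`;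
that is, `f(x) = max_{h ≥ 0} g_θ(x, h)`. -/
theorem stmt12 {J : Type*} [Fintype J]
    (θ θ' θ'' : ℝ → ℝ)
    (hmono : MonotoneOn θ (Set.Ici 0)) (hconv : ConvexOn ℝ (Set.Ici 0) θ) (hθ0 : θ 0 = 0)
    (hD1 : ∀ t : ℝ, 0 < t → HasDerivAt θ (θ' t) t)
    (hD2 : ∀ t : ℝ, 0 < t → HasDerivAt θ' (θ'' t) t)
    (hθ'cont : ContinuousOn θ' (Set.Ici 0))
    (hθ''cont : ContinuousOn θ'' (Set.Ioi 0))
    (hθ'nn : ∀ t : ℝ, 0 < t → 0 ≤ θ' t)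
    (hθ''nn : ∀ t : ℝ, 0 < t → 0 ≤ θ'' t)
    (p x : J → ℝ) (hp : ∀ j, 0 < p j) (hx : ∀ j, x j ∈ Set.Icc (0 : ℝ) 1)
    (hstar : ℝ) (hstar0 : 0 ≤ hstar)
    (hwater : ∑ j, min (p j) hstar * x j = hstar)
    (hpos : 1 < ∑ j, x j → 0 < hstar)
    (hzero : ∑ j, x j ≤ 1 → hstar = 0) :
    ((∑ j ∈ Finset.univ.filter (fun j => hstar < p j), x j * (θ (p j) - θ hstar)) + θ hstar
        = gTheta θ θ' p x hstar) ∧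
      ∀ h : ℝ, 0 ≤ h → gTheta θ θ' p x h ≤
        (∑ j ∈ Finset.univ.filter (fun j => hstar < p j), x j * (θ (p j) - θ hstar))
          + θ hstar :=
  stmt12_general θ θ' θ'' hmono hconv hD1 hD2 hθ'cont hθ''nn p x hp hx hstar hstar0 hwater hpos
end

section
/- Let θ : ℝ → ℝ be nondecreasing and convex on [0,∞) with θ(0) = 0 and twice continuously differentiable on (0,∞) with θ', θ'' ≥ 0. Let J be a finite set and p : J → ℝ with p_j > 0. Let x, y : J → [0,1], t ∈ [0,1], and z = t·x + (1−t)·y. Suppose h_x, h_y, h_z ≥ 0 are the water levels of x, y, z respectively (i.e., h satisfies ∑_j min(p_j, h)·x_j = h, with h > 0 iff the respective vector has L1 norm exceeding 1), and define f(x), f(y), f(z) by f(u) = (∑_{j: p_j > h_u} u_j·(θ(p_j) − θ(h_u))) + θ(h_u). Then f(z) ≤ t·f(x) + (1−t)·f(y); i.e., f is convex on [0,1]^J. -/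
/-!
The relaxation value is the supremum of a family of functions that are affine in `u`:
for `h ≥ 0` put `G(u, h) = ∑ⱼ uⱼ (θ(pⱼ) − θ(min(pⱼ, h))) + θ(h) + θ'(h) (W_u(h) − h)`
with `W_u(h) = ∑ⱼ min(pⱼ, h) uⱼ`. At the water level `h_u` the correction term vanishes and
`G(u, h_u) = f(u)`. Away from the finitely many `pⱼ`, `∂ₕ G(u, h) = θ''(h) (W_u(h) − h)`, and since
`min(pⱼ, ·)` is concave and vanishes at `0`, `W_u(h) − h` is `≥ 0` below `h_u` and `≤ 0` above it.
Hence `G(u, ·)` is maximal at `h_u`, and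
`f(z) = G(z, h_z) = t G(x, h_z) + (1 − t) G(y, h_z) ≤ t f(x) + (1 − t) f(y)`.
-/

open Set Filter Topology

/-- The scheduling water-filling relaxation value `f(u)` computed with water level `hu`:
`f(u) = (∑_{j : p_j > h_u} u_j·(θ(p_j) − θ(h_u))) + θ(h_u)`. -/
noncomputable def fTheta {J : Type*} [Fintype J] (θ : ℝ → ℝ) (p u : J → ℝ) (hu : ℝ) : ℝ :=
  (∑ j ∈ Finset.univ.filter (fun j => hu < p j), u j * (θ (p j) - θ hu)) + θ hu

theorem monotoneOn_Icc_of_hasDerivAt_nonneg_off_finset {f f' : ℝ → ℝ} (E : Finset ℝ) {a b : ℝ}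
    (hc : ContinuousOn f (Icc a b)) (hd : ∀ x ∈ Ioo a b, x ∉ E → HasDerivAt f (f' x) x)
    (hnn : ∀ x ∈ Ioo a b, x ∉ E → 0 ≤ f' x) : MonotoneOn f (Icc a b) := by
  induction E using Finset.induction_on generalizing a b with
  | empty =>
    refine monotoneOn_of_hasDerivWithinAt_nonneg (f' := f') (convex_Icc a b) hc (fun x hx => ?_)
      (fun x hx => ?_) <;> rw [interior_Icc] at hx
    exacts [(hd x hx (Finset.notMem_empty x)).hasDerivWithinAt, hnn x hx (Finset.notMem_empty x)]
  | insert e E he IH =>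
    have off_e {x} (hxe : x ≠ e) (hxE : x ∉ E) : x ∉ insert e E := by
      simp [hxe, hxE]
    by_cases hmem : e ∈ Ioo a b
    · have left : MonotoneOn f (Icc a e) :=
        IH (hc.mono (Icc_subset_Icc_right hmem.2.le))
          (fun x hx hxE => hd x ⟨hx.1, hx.2.trans hmem.2⟩ (off_e hx.2.ne hxE))
          (fun x hx hxE => hnn x ⟨hx.1, hx.2.trans hmem.2⟩ (off_e hx.2.ne hxE))
      have right : MonotoneOn f (Icc e b) :=
        IH (hc.mono (Icc_subset_Icc_left hmem.1.le))
          (fun x hx hxE => hd x ⟨hmem.1.trans hx.1, hx.2⟩ (off_e hx.1.ne' hxE))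
          (fun x hx hxE => hnn x ⟨hmem.1.trans hx.1, hx.2⟩ (off_e hx.1.ne' hxE))
      rw [← Icc_union_Icc_eq_Icc hmem.1.le hmem.2.le]
      exact left.union_right right (isGreatest_Icc hmem.1.le) (isLeast_Icc hmem.2.le)
    · exact IH hc (fun x hx hxE => hd x hx (off_e (fun h => hmem (h ▸ hx)) hxE))
        (fun x hx hxE => hnn x hx (off_e (fun h => hmem (h ▸ hx)) hxE))

theorem continuousOn_Ici_of_monotoneOn_of_convexOn {f : ℝ → ℝ} {a : ℝ}
    (hmono : MonotoneOn f (Ici a)) (hconv : ConvexOn ℝ (Ici a) f) :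
    ContinuousOn f (Ici a) := by
  refine hconv.continuousOn_Ici ?_
  have chord : ∀ s ∈ Icc a (a + 1), f s ≤ f a + (s - a) * (f (a + 1) - f a) := by
    intro s ⟨has, hs⟩
    have := hconv.2 self_mem_Ici (show a + 1 ∈ Ici a by simp) (by linarith : 0 ≤ 1 - (s - a))
      (by linarith : 0 ≤ s - a) (by ring)
    simp only [smul_eq_mul] at this
    rw [show (1 - (s - a)) * a + (s - a) * (a + 1) = s by ring] at this
    linarith
  have hlim : Tendsto (fun s => f a + (s - a) * (f (a + 1) - f a)) (𝓝[≥] a) (𝓝 (f a)) := by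
    have : Continuous fun s => f a + (s - a) * (f (a + 1) - f a) := by fun_prop
    simpa using (this.tendsto a).mono_left nhdsWithin_le_nhds
  refine tendsto_of_tendsto_of_tendsto_of_le_of_le' tendsto_const_nhds hlim ?_ ?_
  · filter_upwards [self_mem_nhdsWithin] with s hs using hmono self_mem_Ici hs hs
  · filter_upwards [Icc_mem_nhdsGE (lt_add_one a)] with s hs using chord s hs

theorem mul_min_le_min_mul {a b c : ℝ} (ha : 0 ≤ a) (hc0 : 0 ≤ c) (hc1 : c ≤ 1) :
    c * min a b ≤ min a (c * b) := by
  rw [mul_min_of_nonneg _ _ hc0]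
  exact min_le_min_right _ (mul_le_of_le_one_left ha hc1)

theorem hasDerivAt_comp_min {g : ℝ → ℝ} {g' c s : ℝ} (hs : s ≠ c)
    (hg : s < c → HasDerivAt g g' s) :
    HasDerivAt (fun h => g (min c h)) (if s < c then g' else 0) s := by
  rcases hs.lt_or_gt with hsc | hcs
  · rw [if_pos hsc]
    refine (hg hsc).congr_of_eventuallyEq ?_
    filter_upwards [Iio_mem_nhds hsc] with h hh using by rw [min_eq_right hh.le]
  · rw [if_neg hcs.not_gt]
    refine (hasDerivAt_const s (g c)).congr_of_eventuallyEq ?_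
    filter_upwards [Ioi_mem_nhds hcs] with h hh using by rw [min_eq_left hh.le]

section WaterLevel

variable {J : Type*} [Fintype J]

/-- `W_u(h)`; a water level of `u` is a fixed point of `W_u`. -/
noncomputable def waterVolume (p u : J → ℝ) (h : ℝ) : ℝ :=
  ∑ j, min (p j) h * u j

theorem mul_waterVolume_le {p u : J → ℝ} (hp : ∀ j, 0 ≤ p j) (hu : ∀ j, 0 ≤ u j) {c : ℝ}
    (hc0 : 0 ≤ c) (hc1 : c ≤ 1) (h : ℝ) :
    c * waterVolume p u h ≤ waterVolume p u (c * h) := by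
  rw [waterVolume, Finset.mul_sum]
  refine Finset.sum_le_sum fun j _ => ?_
  rw [← mul_assoc]
  exact mul_le_mul_of_nonneg_right (mul_min_le_min_mul (hp j) hc0 hc1) (hu j)

theorem le_waterVolume_of_le_waterLevel {p u : J → ℝ} (hp : ∀ j, 0 ≤ p j)
    (hu : ∀ j, 0 ≤ u j) {w : ℝ} (hwater : waterVolume p u w = w) {s : ℝ} (hs0 : 0 ≤ s)
    (hsw : s ≤ w) : s ≤ waterVolume p u s := by
  rcases (hs0.trans hsw).eq_or_lt with hw | hw
  · obtain rfl : s = 0 := le_antisymm (hw ▸ hsw) hs0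
    simp [waterVolume, min_eq_right (hp _)]
  · have := mul_waterVolume_le hp hu (div_nonneg hs0 hw.le) (div_le_one_of_le₀ hsw hw.le) w
    rwa [hwater, div_mul_cancel₀ s hw.ne'] at this

theorem waterVolume_le_of_waterLevel_le {p u : J → ℝ} (hp : ∀ j, 0 ≤ p j)
    (hu : ∀ j, 0 ≤ u j) {w : ℝ} (hw0 : 0 ≤ w) (hwater : waterVolume p u w = w)
    (hiff : 0 < w ↔ 1 < ∑ j, u j) {s : ℝ} (hws : w ≤ s) : waterVolume p u s ≤ s := by
  rcases hw0.eq_or_lt with rfl | hw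
  · have hmass : ∑ j, u j ≤ 1 := not_lt.1 (mt hiff.2 (lt_irrefl 0))
    calc waterVolume p u s ≤ ∑ j, s * u j :=
          Finset.sum_le_sum fun j _ => mul_le_mul_of_nonneg_right (min_le_right _ _) (hu j)
      _ = s * ∑ j, u j := Finset.mul_sum .. |>.symm
      _ ≤ s := mul_le_of_le_one_right (hw0.trans hws) hmass
  · have hs : 0 < s := hw.trans_le hws
    have := mul_waterVolume_le hp hu (div_nonneg hw0 hs.le) (div_le_one_of_le₀ hws hs.le) s
    rw [div_mul_cancel₀ w hs.ne', hwater, div_mul_eq_mul_div, div_le_iff₀ hs] at this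
    exact le_of_mul_le_mul_left this hw

/-- `G(u, h)`. -/
noncomputable def fThetaAffine (θ θ' : ℝ → ℝ) (p u : J → ℝ) (h : ℝ) : ℝ :=
  ∑ j, u j * (θ (p j) - θ (min (p j) h)) + θ h + θ' h * (waterVolume p u h - h)

theorem fTheta_eq_fThetaAffine (θ θ' : ℝ → ℝ) (p u : J → ℝ) {w : ℝ}
    (hwater : waterVolume p u w = w) : fTheta θ p u w = fThetaAffine θ θ' p u w := by
  rw [fTheta, fThetaAffine, hwater, sub_self, mul_zero, add_zero, Finset.sum_filter]
  congr 1
  refine Finset.sum_congr rfl fun j _ => ?_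
  split_ifs with hj
  · rw [min_eq_right hj.le]
  · rw [min_eq_left (not_lt.1 hj), sub_self, mul_zero]

theorem fThetaAffine_convex_comb (θ θ' : ℝ → ℝ) (p x y : J → ℝ) (t h : ℝ) :
    fThetaAffine θ θ' p (fun j => t * x j + (1 - t) * y j) h =
      t * fThetaAffine θ θ' p x h + (1 - t) * fThetaAffine θ θ' p y h := by
  have lin (c : J → ℝ) : ∑ j, c j * (t * x j + (1 - t) * y j) =
      t * ∑ j, c j * x j + (1 - t) * ∑ j, c j * y j := by
    simp only [Finset.mul_sum, ← Finset.sum_add_distrib]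
    exact Finset.sum_congr rfl fun j _ => by ring
  simp only [fThetaAffine, waterVolume, mul_comm (t * x _ + (1 - t) * y _), mul_comm (x _),
    mul_comm (y _), lin]
  ring

theorem hasDerivAt_fThetaAffine {θ θ' θ'' : ℝ → ℝ} (p u : J → ℝ)
    (hD1 : ∀ s : ℝ, 0 < s → HasDerivAt θ (θ' s) s)
    (hD2 : ∀ s : ℝ, 0 < s → HasDerivAt θ' (θ'' s) s)
    {s : ℝ} (hs : 0 < s) (hps : ∀ j, s ≠ p j) :
    HasDerivAt (fThetaAffine θ θ' p u) (θ'' s * (waterVolume p u s - s)) s := by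
  set m := ∑ j, if s < p j then u j else 0
  have hW : HasDerivAt (waterVolume p u) m s :=
    HasDerivAt.fun_sum fun j _ => hasDerivAt_comp_min (hps j) fun _ => hasDerivAt_mul_const (u j)
  have hT : HasDerivAt (fun h => ∑ j, u j * (θ (p j) - θ (min (p j) h))) (-(m * θ' s)) s := by
    have := HasDerivAt.fun_sum (u := Finset.univ) fun j _ =>
      hasDerivAt_comp_min (hps j) fun _ => ((hD1 s hs).const_sub (θ (p j))).const_mul (u j)
    refine this.congr_deriv ?_
    simp only [m, Finset.sum_mul, ← Finset.sum_neg_distrib]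
    exact Finset.sum_congr rfl fun j _ => by split_ifs <;> ring
  refine ((hT.add (hD1 s hs)).add ((hD2 s hs).mul (hW.fun_sub (hasDerivAt_id' s)))).congr_deriv ?_
  ring

theorem continuousOn_fThetaAffine {θ θ' : ℝ → ℝ} {p : J → ℝ} (u : J → ℝ) (hp : ∀ j, 0 ≤ p j)
    (hθ : ContinuousOn θ (Ici 0)) (hθ' : ContinuousOn θ' (Ici 0)) :
    ContinuousOn (fThetaAffine θ θ' p u) (Ici 0) := by
  have hmin (j : J) : ContinuousOn (fun h => θ (min (p j) h)) (Ici 0) :=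
    hθ.comp (by fun_prop) fun h hh => le_min (hp j) hh
  have hW : Continuous (waterVolume p u) := by unfold waterVolume; fun_prop
  exact ((continuousOn_finsetSum _ fun j _ => continuousOn_const.mul
    (continuousOn_const.sub (hmin j))).add hθ).add (hθ'.mul (hW.continuousOn.sub continuousOn_id))

theorem fThetaAffine_le_of_waterLevel {θ θ' θ'' : ℝ → ℝ} {p u : J → ℝ}
    (hθ : ContinuousOn θ (Ici 0)) (hθ' : ContinuousOn θ' (Ici 0))
    (hD1 : ∀ s : ℝ, 0 < s → HasDerivAt θ (θ' s) s)
    (hD2 : ∀ s : ℝ, 0 < s → HasDerivAt θ' (θ'' s) s) (hθ''nn : ∀ s : ℝ, 0 < s → 0 ≤ θ'' s)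
    (hp : ∀ j, 0 ≤ p j) (hu : ∀ j, 0 ≤ u j) {w : ℝ} (hw0 : 0 ≤ w)
    (hwater : waterVolume p u w = w) (hiff : 0 < w ↔ 1 < ∑ j, u j) {h : ℝ} (hh : 0 ≤ h) :
    fThetaAffine θ θ' p u h ≤ fThetaAffine θ θ' p u w := by
  have hG := continuousOn_fThetaAffine u hp hθ hθ'
  set E := Finset.univ.image p
  have off_E {s} (hs : s ∉ E) (j : J) : s ≠ p j := fun hj =>
    hs (hj ▸ Finset.mem_image_of_mem p (Finset.mem_univ j))
  rcases le_total h w with hhw | hwh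
  · have : MonotoneOn (fThetaAffine θ θ' p u) (Icc 0 w) :=
      monotoneOn_Icc_of_hasDerivAt_nonneg_off_finset E (hG.mono Icc_subset_Ici_self)
        (fun s hs hsE => hasDerivAt_fThetaAffine p u hD1 hD2 hs.1 (off_E hsE))
        (fun s hs _ => mul_nonneg (hθ''nn s hs.1)
          (sub_nonneg.2 (le_waterVolume_of_le_waterLevel hp hu hwater hs.1.le hs.2.le)))
    exact this ⟨hh, hhw⟩ ⟨hw0, le_rfl⟩ hhw
  · have : MonotoneOn (-fThetaAffine θ θ' p u) (Icc w h) :=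
      monotoneOn_Icc_of_hasDerivAt_nonneg_off_finset E
        (hG.mono fun s hs => hw0.trans hs.1).neg
        (fun s hs hsE => (hasDerivAt_fThetaAffine p u hD1 hD2 (hw0.trans_lt hs.1) (off_E hsE)).neg)
        (fun s hs _ => neg_nonneg.2 (mul_nonpos_of_nonneg_of_nonpos
          (hθ''nn s (hw0.trans_lt hs.1))
          (sub_nonpos.2 (waterVolume_le_of_waterLevel_le hp hu hw0 hwater hiff hs.1.le))))
    exact neg_le_neg_iff.1 (this ⟨le_rfl, hwh⟩ ⟨hwh, le_rfl⟩ hwh)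

end WaterLevel

theorem stmt13_general {J : Type*} [Fintype J]
    (θ θ' θ'' : ℝ → ℝ)
    (hmono : MonotoneOn θ (Set.Ici 0)) (hconv : ConvexOn ℝ (Set.Ici 0) θ)
    (hD1 : ∀ s : ℝ, 0 < s → HasDerivAt θ (θ' s) s)
    (hD2 : ∀ s : ℝ, 0 < s → HasDerivAt θ' (θ'' s) s)
    (hθ'cont : ContinuousOn θ' (Set.Ici 0))
    (hθ''nn : ∀ s : ℝ, 0 < s → 0 ≤ θ'' s)
    (p : J → ℝ) (hp : ∀ j, 0 < p j)
    (x y : J → ℝ)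
    (hx01 : ∀ j, x j ∈ Set.Icc (0 : ℝ) 1) (hy01 : ∀ j, y j ∈ Set.Icc (0 : ℝ) 1)
    (t : ℝ) (ht : t ∈ Set.Icc (0 : ℝ) 1)
    (hx hy hz : ℝ) (hx0 : 0 ≤ hx) (hy0 : 0 ≤ hy) (hz0 : 0 ≤ hz)
    (hxwater : ∑ j, min (p j) hx * x j = hx)
    (hywater : ∑ j, min (p j) hy * y j = hy)
    (hzwater : ∑ j, min (p j) hz * (t * x j + (1 - t) * y j) = hz)
    (hxiff : 0 < hx ↔ 1 < ∑ j, x j)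
    (hyiff : 0 < hy ↔ 1 < ∑ j, y j) :
    fTheta θ p (fun j => t * x j + (1 - t) * y j) hz ≤
      t * fTheta θ p x hx + (1 - t) * fTheta θ p y hy := by
  have hθ := continuousOn_Ici_of_monotoneOn_of_convexOn hmono hconv
  have hp' (j : J) : 0 ≤ p j := (hp j).le
  have kx := fThetaAffine_le_of_waterLevel hθ hθ'cont hD1 hD2 hθ''nn hp' (fun j => (hx01 j).1)
    hx0 hxwater hxiff hz0
  have ky := fThetaAffine_le_of_waterLevel hθ hθ'cont hD1 hD2 hθ''nn hp' (fun j => (hy01 j).1)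
    hy0 hywater hyiff hz0
  rw [fTheta_eq_fThetaAffine θ θ' p _ hzwater, fThetaAffine_convex_comb,
    fTheta_eq_fThetaAffine θ θ' p x hxwater, fTheta_eq_fThetaAffine θ θ' p y hywater]
  exact add_le_add (mul_le_mul_of_nonneg_left kx ht.1)
    (mul_le_mul_of_nonneg_left ky (sub_nonneg.2 ht.2))

/-- convexity of the scheduling relaxation value: for `θ` nondecreasing and
convex on `[0,∞)` with `θ(0) = 0` and twice continuously differentiable on `(0,∞)` with
nonnegative derivatives, and `z = t•x + (1−t)•y` with respective water levels
`hx, hy, hz`, we have `f(z) ≤ t·f(x) + (1−t)·f(y)`. -/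
theorem stmt13 {J : Type*} [Fintype J]
    (θ θ' θ'' : ℝ → ℝ)
    (hmono : MonotoneOn θ (Set.Ici 0)) (hconv : ConvexOn ℝ (Set.Ici 0) θ) (hθ0 : θ 0 = 0)
    (hD1 : ∀ s : ℝ, 0 < s → HasDerivAt θ (θ' s) s)
    (hD2 : ∀ s : ℝ, 0 < s → HasDerivAt θ' (θ'' s) s)
    (hθ'cont : ContinuousOn θ' (Set.Ici 0))
    (hθ''cont : ContinuousOn θ'' (Set.Ioi 0))
    (hθ'nn : ∀ s : ℝ, 0 < s → 0 ≤ θ' s)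
    (hθ''nn : ∀ s : ℝ, 0 < s → 0 ≤ θ'' s)
    (p : J → ℝ) (hp : ∀ j, 0 < p j)
    (x y : J → ℝ)
    (hx01 : ∀ j, x j ∈ Set.Icc (0 : ℝ) 1) (hy01 : ∀ j, y j ∈ Set.Icc (0 : ℝ) 1)
    (t : ℝ) (ht : t ∈ Set.Icc (0 : ℝ) 1)
    (hx hy hz : ℝ) (hx0 : 0 ≤ hx) (hy0 : 0 ≤ hy) (hz0 : 0 ≤ hz)
    (hxwater : ∑ j, min (p j) hx * x j = hx)
    (hywater : ∑ j, min (p j) hy * y j = hy)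
    (hzwater : ∑ j, min (p j) hz * (t * x j + (1 - t) * y j) = hz)
    (hxiff : 0 < hx ↔ 1 < ∑ j, x j)
    (hyiff : 0 < hy ↔ 1 < ∑ j, y j)
    (hziff : 0 < hz ↔ 1 < ∑ j, (t * x j + (1 - t) * y j)) :
    fTheta θ p (fun j => t * x j + (1 - t) * y j) hz ≤
      t * fTheta θ p x hx + (1 - t) * fTheta θ p y hy :=
  stmt13_general θ θ' θ'' hmono hconv hD1 hD2 hθ'cont hθ''nn p hp x y hx01 hy01 t ht hx hy hz hx0
    hy0 hz0 hxwater hywater hzwater hxiff hyiff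
end

section
/- Let M be a finite nonempty set of identical machines, J a finite set of jobs, and p : J → ℝ with p_j > 0. Let θ : ℝ → ℝ be nondecreasing and convex on [0,∞) with θ(0) = 0, and let α ≥ 1 be a real such that for all t ∈ (0,1), d ≥ 0, and r ≥ d/(1−t): t·θ(r + d) + (1−t)·θ(d) ≤ α·( t·θ(r) + (1−t)·θ(d/(1−t)) ). Let σ : J → M be an EF1 allocation. Then for every allocation ρ : J → M, ∑_{i∈M} θ( ∑_{j ∈ σ⁻¹(i)} p_j ) ≤ α · ∑_{i∈M} θ( ∑_{j ∈ ρ⁻¹(i)} p_j ); i.e., σ is α-approximate for minimizing ∑_i θ(load_i) on identical machines. -/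
/-!
Let `d` be the least load of the EF1 allocation `σ` and `e i = L i - d` the excesses. EF1 gives
every machine with positive excess a job at least as large as that excess. Raise the excesses
to a water level `z ≥ d`, where `∑ max (e i) z` equals the total size of the jobs. The vector
`V = max e z` is majorized by the load vector of any allocation `ρ`: its entries above `z` are
covered by distinct jobs. Comparing both vectors against a supporting line of `θ` at `z` then
gives `∑ θ (V i) ≤ ∑ θ (load ρ i)`.
A machine with `e i ≤ z` is the mixture, with weight `e i / z`, of a machine of load `z + d`
and one of load `d`. With `t = 1 - d / z`, that is `d / (1 - t) = z`, the hypothesis on `α`,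
averaged over these mixtures, bounds `∑ θ (e i + d)` by `α * ∑ θ (V i)`.
-/

def IsEF1Sched {J M : Type*} [Fintype J] [DecidableEq M] (p : J → ℝ) (σ : J → M) : Prop :=
  ∀ i i' : M, ∀ hne : (Finset.univ.filter (fun j => σ j = i')).Nonempty,
    (∑ j ∈ Finset.univ.filter (fun j => σ j = i'), p j)
        - (Finset.univ.filter (fun j => σ j = i')).sup' hne p
      ≤ ∑ j ∈ Finset.univ.filter (fun j => σ j = i), p j

open Finset

section ConvexAnalysis

variable {θ : ℝ → ℝ}

theorem ConvexOn.exists_supporting_line (hconv : ConvexOn ℝ (Set.Ici 0) θ)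
    (hmono : MonotoneOn θ (Set.Ici 0)) {z : ℝ} (hz : 0 ≤ z) :
    ∃ g, ∀ x, 0 ≤ x → θ z + g * (x - z) ≤ θ x := by
  rcases hz.eq_or_lt with rfl | hz
  -- `0` is not interior, so there is no left derivative there; monotonicity takes its place.
  · exact ⟨0, fun x hx => by simpa using hmono (Set.mem_Ici.2 le_rfl) (Set.mem_Ici.2 hx) hx⟩
  have hint : z ∈ interior (Set.Ici (0 : ℝ)) := by simpa using hz
  refine ⟨derivWithin θ (Set.Iio z) z, fun x hx => ?_⟩
  rcases lt_trichotomy x z with hxz | rfl | hzx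
  · have h := hconv.slope_le_leftDeriv_of_mem_interior hx hint hxz
    rw [slope_def_field, div_le_iff₀ (sub_pos.2 hxz)] at h
    linarith
  · simp
  · have h := (hconv.leftDeriv_le_rightDeriv_of_mem_interior hint).trans
      (hconv.rightDeriv_le_slope_of_mem_interior hint hx hzx)
    rw [slope_def_field, le_div_iff₀ (sub_pos.2 hzx)] at h
    linarith

theorem ConvexOn.sub_affine {s : Set ℝ} (hconv : ConvexOn ℝ s θ) (a g : ℝ) :
    ConvexOn ℝ s (fun x => θ x - (a + g * x)) := by
  refine ⟨hconv.1, fun x hx y hy u v hu hv huv => ?_⟩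
  have h := hconv.2 hx hy hu hv huv
  simp only [smul_eq_mul] at h ⊢
  linear_combination h + a * huv

theorem ConvexOn.sum_map_le_of_sum_le {ι : Type*} {ψ : ℝ → ℝ} {z A : ℝ}
    (hψ : ConvexOn ℝ (Set.Ici z) ψ) (hψz : ψ z = 0) (hz : 0 ≤ z) {s : Finset ι} {a : ι → ℝ}
    (ha : ∀ i ∈ s, z < a i) (hA : ∑ i ∈ s, a i ≤ A) (hψA : 0 ≤ ψ A) :
    ∑ i ∈ s, ψ (a i) ≤ ψ A := by
  rcases s.eq_empty_or_nonempty with rfl | ⟨i₁, hi₁⟩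
  · simpa using hψA
  have ha_le : ∀ i ∈ s, a i ≤ A := fun i hi =>
    (single_le_sum (fun j hj => hz.trans (ha j hj).le) hi).trans hA
  have hzA : 0 < A - z := sub_pos.2 ((ha i₁ hi₁).trans_le (ha_le i₁ hi₁))
  have hpoint : ∀ i ∈ s, ψ (a i) ≤ (a i - z) * (ψ A / (A - z)) := by
    intro i hi
    have h := hψ.secant_mono (Set.mem_Ici.2 le_rfl) (Set.mem_Ici.2 (ha i hi).le)
      (Set.mem_Ici.2 ((ha i hi).le.trans (ha_le i hi))) (ha i hi).ne' (by linarith) (ha_le i hi)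
    rwa [hψz, sub_zero, sub_zero, div_le_iff₀ (sub_pos.2 (ha i hi)), mul_comm] at h
  have hcard : ∑ i ∈ s, (a i - z) ≤ A - z := by
    have : (1 : ℝ) ≤ s.card := by exact_mod_cast card_pos.2 ⟨i₁, hi₁⟩
    rw [sum_sub_distrib, sum_const, nsmul_eq_mul]
    nlinarith
  calc ∑ i ∈ s, ψ (a i) ≤ ∑ i ∈ s, (a i - z) * (ψ A / (A - z)) := sum_le_sum hpoint
    _ = (∑ i ∈ s, (a i - z)) * (ψ A / (A - z)) := (sum_mul _ _ _).symm
    _ ≤ (A - z) * (ψ A / (A - z)) := by gcongr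
    _ = ψ A := by field_simp

theorem sum_map_max_le_of_fiber_le {ι : Type*} [Fintype ι] [DecidableEq ι]
    (hconv : ConvexOn ℝ (Set.Ici 0) θ) (hmono : MonotoneOn θ (Set.Ici 0)) {z : ℝ} (hz : 0 ≤ z)
    {e O : ι → ℝ} (hO : ∀ m, 0 ≤ O m) (hsum : ∑ i, max (e i) z = ∑ m, O m) (f : ι → ι)
    (hf : ∀ m, ∑ i ∈ univ.filter (fun i => z < e i ∧ f i = m), e i ≤ O m) :
    ∑ i, θ (max (e i) z) ≤ ∑ m, θ (O m) := by
  obtain ⟨g, hg⟩ := hconv.exists_supporting_line hmono hz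
  -- `ψ` is `θ` minus its supporting line at `z`. The line contributes the same to both sides
  -- because `hsum` equates the sums.
  set ψ : ℝ → ℝ := fun x => θ x - (θ z - g * z + g * x)
  have hψ : ConvexOn ℝ (Set.Ici z) ψ :=
    (hconv.subset (Set.Ici_subset_Ici.2 hz) (convex_Ici z)).sub_affine _ _
  have hψz : ψ z = 0 := by simp only [ψ]; ring
  have hψO : ∀ m, 0 ≤ ψ (O m) := fun m => by linarith [hg (O m) (hO m)]
  suffices h : ∑ i, ψ (max (e i) z) ≤ ∑ m, ψ (O m) by
    simp only [ψ, sum_sub_distrib, sum_add_distrib, ← mul_sum, hsum] at h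
    linarith
  have hflat : ∑ i, ψ (max (e i) z) = ∑ i ∈ univ.filter (fun i => z < e i), ψ (e i) := by
    rw [sum_filter]
    refine sum_congr rfl fun i _ => ?_
    split_ifs with h
    · rw [max_eq_left h.le]
    · rw [max_eq_right (not_lt.1 h), hψz]
  rw [hflat, ← sum_fiberwise _ f]
  refine sum_le_sum fun m _ => ?_
  rw [filter_filter]
  exact hψ.sum_map_le_of_sum_le hψz hz (fun i hi => (mem_filter.1 hi).2.1) (hf m) (hψO m)

theorem exists_sum_max_eq {ι : Type*} [Fintype ι] [Nonempty ι] {e : ι → ℝ} (he : ∀ i, 0 ≤ e i)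
    {d : ℝ} (hd : 0 ≤ d) : ∃ z, d ≤ z ∧ ∑ i, max (e i) z = ∑ i, (e i + d) := by
  obtain ⟨i₀⟩ := ‹Nonempty ι›
  set P := ∑ i, (e i + d)
  have hdP : d ≤ P := by
    have := single_le_sum (fun i _ => add_nonneg (he i) hd) (mem_univ i₀)
    linarith [he i₀]
  have hcont : ContinuousOn (fun z => ∑ i, max (e i) z) (Set.Icc d P) := by fun_prop
  have hlow : ∑ i, max (e i) d ≤ P :=
    sum_le_sum fun i _ => max_le (by linarith [he i]) (by linarith [he i])
  have hhigh : P ≤ ∑ i, max (e i) P :=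
    (le_max_right _ _).trans
      (single_le_sum (fun i _ => (he i).trans (le_max_left _ _)) (mem_univ i₀))
  obtain ⟨z, hz, hzP⟩ := intermediate_value_Icc hdP hcont ⟨hlow, hhigh⟩
  exact ⟨z, hz.1, hzP⟩

theorem ConvexOn.map_add_le_mix (hconv : ConvexOn ℝ (Set.Ici 0) θ) {e d z : ℝ}
    (he : 0 ≤ e) (hd : 0 ≤ d) (hz : 0 < z) :
    θ (e + d) ≤ min e z / z * θ (max e z + d) + (1 - min e z / z) * θ d := by
  rcases le_or_gt e z with hez | hze
  · rw [min_eq_left hez, max_eq_right hez]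
    have h := hconv.2 (Set.mem_Ici.2 (by linarith : (0 : ℝ) ≤ z + d)) (Set.mem_Ici.2 hd)
      (div_nonneg he hz.le) (sub_nonneg.2 ((div_le_one hz).2 hez)) (by ring)
    have hpt : e / z * (z + d) + (1 - e / z) * d = e + d := by field_simp; ring
    simpa only [smul_eq_mul, hpt] using h
  · simp [min_eq_right hze.le, max_eq_left hze.le, div_self hz.ne']

theorem mul_sum_mix_eq {ι : Type*} (s : Finset ι) {t b : ℝ} {w : ι → ℝ}
    (hw : t * ∑ i ∈ s, (1 - w i) = (1 - t) * ∑ i ∈ s, w i) (a : ι → ℝ) :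
    t * ∑ i ∈ s, (w i * a i + (1 - w i) * b) = ∑ i ∈ s, w i * (t * a i + (1 - t) * b) := by
  have hl : ∑ i ∈ s, (w i * a i + (1 - w i) * b) = ∑ i ∈ s, w i * a i + (∑ i ∈ s, (1 - w i)) * b :=
    by rw [sum_add_distrib, sum_mul]
  have hr : ∑ i ∈ s, w i * (t * a i + (1 - t) * b) =
      t * ∑ i ∈ s, w i * a i + (1 - t) * (∑ i ∈ s, w i) * b := by
    rw [mul_sum, mul_sum, sum_mul, ← sum_add_distrib]
    exact sum_congr rfl fun i _ => by ring
  rw [hl, hr]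
  linear_combination b * hw

end ConvexAnalysis

section Approximation

variable {ι : Type*} [Fintype ι] {θ : ℝ → ℝ} {α d z : ℝ} {e : ι → ℝ}

theorem sum_map_add_le_mul_sum_map_max_of_lt (hconv : ConvexOn ℝ (Set.Ici 0) θ)
    (hαineq : ∀ t ∈ Set.Ioo (0 : ℝ) 1, ∀ d : ℝ, 0 ≤ d → ∀ r : ℝ, d / (1 - t) ≤ r →
      t * θ (r + d) + (1 - t) * θ d ≤ α * (t * θ r + (1 - t) * θ (d / (1 - t))))
    (hd : 0 < d) (hdz : d < z) (he : ∀ i, 0 ≤ e i)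
    (hmin : ∑ i, min (e i) z = Fintype.card ι * (z - d)) :
    ∑ i, θ (e i + d) ≤ α * ∑ i, θ (max (e i) z) := by
  have hz : 0 < z := hd.trans hdz
  set t := 1 - d / z
  have ht : t ∈ Set.Ioo (0 : ℝ) 1 :=
    ⟨sub_pos.2 ((div_lt_one hz).2 hdz), sub_lt_self _ (div_pos hd hz)⟩
  have hdt : d / (1 - t) = z := by simp only [t, sub_sub_cancel]; field_simp
  set w : ι → ℝ := fun i => min (e i) z / z
  have hw : t * ∑ i, (1 - w i) = (1 - t) * ∑ i, w i := by
    have : ∑ i, w i = Fintype.card ι * t := by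
      simp only [w, t, ← sum_div, hmin]; field_simp
    rw [sum_sub_distrib, this]
    simp only [sum_const, card_univ, nsmul_eq_mul, mul_one]
    ring
  have hw0 : ∀ i, 0 ≤ w i := fun i => div_nonneg (le_min (he i) hz.le) hz.le
  have hflat : ∀ i, w i * θ (max (e i) z) + (1 - w i) * θ z = θ (max (e i) z) := by
    intro i
    rcases le_or_gt (e i) z with h | h
    · rw [max_eq_right h]; ring
    · simp [w, min_eq_right h.le, div_self hz.ne']
  refine le_of_mul_le_mul_left ?_ ht.1
  calc t * ∑ i, θ (e i + d)
      ≤ t * ∑ i, (w i * θ (max (e i) z + d) + (1 - w i) * θ d) :=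
        mul_le_mul_of_nonneg_left
          (sum_le_sum fun i _ => hconv.map_add_le_mix (he i) hd.le hz) ht.1.le
    _ = ∑ i, w i * (t * θ (max (e i) z + d) + (1 - t) * θ d) := mul_sum_mix_eq _ hw _
    _ ≤ ∑ i, w i * (α * (t * θ (max (e i) z) + (1 - t) * θ z)) := by
        gcongr with i
        · exact hw0 i
        · simpa only [hdt] using hαineq t ht d hd.le _ (hdt ▸ le_max_right _ _)
    _ = α * (t * ∑ i, (w i * θ (max (e i) z) + (1 - w i) * θ z)) := by
        rw [mul_sum_mix_eq _ hw, mul_sum]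
        exact sum_congr rfl fun i _ => by ring
    _ = t * (α * ∑ i, θ (max (e i) z)) := by simp only [hflat]; ring

theorem add_eq_max_of_sum_min_eq (hd : 0 ≤ d) (he : ∀ i, 0 ≤ e i)
    (hmin : ∑ i, min (e i) z = Fintype.card ι * (z - d)) (hdeg : d = 0 ∨ d = z) (i : ι) :
    e i + d = max (e i) z := by
  rcases hdeg with rfl | rfl
  · have h := (sum_eq_sum_iff_of_le fun j _ => min_le_right (e j) z).1 (by simpa using hmin) i
      (mem_univ i)
    rw [add_zero, max_eq_left (min_eq_right_iff.1 h)]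
  · have h := (sum_eq_zero_iff_of_nonneg fun j _ => le_min (he j) hd).1 (by simpa using hmin) i
      (mem_univ i)
    rcases min_choice (e i) d with h' | h' <;> rw [h'] at h <;> simp [h, hd, he i]

theorem sum_map_add_le_mul_sum_map_max (hconv : ConvexOn ℝ (Set.Ici 0) θ)
    (hmono : MonotoneOn θ (Set.Ici 0)) (hθ0 : θ 0 = 0) (hα : 1 ≤ α)
    (hαineq : ∀ t ∈ Set.Ioo (0 : ℝ) 1, ∀ d : ℝ, 0 ≤ d → ∀ r : ℝ, d / (1 - t) ≤ r →
      t * θ (r + d) + (1 - t) * θ d ≤ α * (t * θ r + (1 - t) * θ (d / (1 - t))))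
    (hd : 0 ≤ d) (hdz : d ≤ z) (he : ∀ i, 0 ≤ e i)
    (hlevel : ∑ i, max (e i) z = ∑ i, (e i + d)) :
    ∑ i, θ (e i + d) ≤ α * ∑ i, θ (max (e i) z) := by
  have hmin : ∑ i, min (e i) z = Fintype.card ι * (z - d) := by
    have h := sum_congr rfl fun i (_ : i ∈ univ) => min_add_max (e i) z
    simp only [sum_add_distrib, hlevel, sum_const, card_univ, nsmul_eq_mul] at h
    linarith
  by_cases hdeg : d = 0 ∨ d = z
  · have hθ : 0 ≤ ∑ i, θ (max (e i) z) := sum_nonneg fun i _ => hθ0 ▸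
      hmono (Set.mem_Ici.2 le_rfl) (Set.mem_Ici.2 (hd.trans (hdz.trans (le_max_right _ _))))
        (hd.trans (hdz.trans (le_max_right _ _)))
    simp only [add_eq_max_of_sum_min_eq hd he hmin hdeg]
    exact le_mul_of_one_le_left hθ hα
  · push Not at hdeg
    exact sum_map_add_le_mul_sum_map_max_of_lt hconv hαineq (hd.lt_of_ne' hdeg.1)
      (hdz.lt_of_ne hdeg.2) he hmin

end Approximation

section Scheduling

variable {J M : Type*} [Fintype J] [DecidableEq M] {p : J → ℝ}

def load (p : J → ℝ) (σ : J → M) (i : M) : ℝ :=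
  ∑ j ∈ Finset.univ.filter (fun j => σ j = i), p j

theorem load_nonneg (hp : ∀ j, 0 ≤ p j) (σ : J → M) (i : M) : 0 ≤ load p σ i :=
  sum_nonneg fun j _ => hp j

theorem sum_load [Fintype M] (p : J → ℝ) (σ : J → M) : ∑ i, load p σ i = ∑ j, p j :=
  sum_fiberwise univ σ p

theorem IsEF1Sched.exists_sub_le {σ : J → M} (hσ : IsEF1Sched p σ) (hp : ∀ j, 0 ≤ p j)
    {i i' : M} (h : load p σ i < load p σ i') :
    ∃ j, σ j = i' ∧ load p σ i' - load p σ i ≤ p j := by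
  have hne : (univ.filter fun j => σ j = i').Nonempty := by
    rw [nonempty_iff_ne_empty]
    intro hempty
    have : load p σ i' = 0 := by simp [load, hempty]
    linarith [load_nonneg hp σ i]
  obtain ⟨j, hj, hjmax⟩ := exists_mem_eq_sup' hne p
  refine ⟨j, (mem_filter.1 hj).2, ?_⟩
  have := hσ i i' hne
  rw [hjmax] at this
  unfold load
  linarith

theorem sum_le_load_of_forall_exists {σ ρ : J → M} (hp : ∀ j, 0 ≤ p j) {T : Finset M}
    {a : M → ℝ} {m : M} (h : ∀ i ∈ T, ∃ j, σ j = i ∧ ρ j = m ∧ a i ≤ p j) :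
    ∑ i ∈ T, a i ≤ load p ρ m :=
  calc ∑ i ∈ T, a i
      ≤ ∑ i ∈ T, ∑ j ∈ (univ.filter fun j => ρ j = m).filter (fun j => σ j = i), p j := by
        refine sum_le_sum fun i hi => ?_
        obtain ⟨j, hσj, hρj, hj⟩ := h i hi
        have hmem : j ∈ (univ.filter fun j => ρ j = m).filter (fun j => σ j = i) := by
          simp [hσj, hρj]
        exact hj.trans (single_le_sum (f := p) (fun _ _ => hp _) hmem)
    _ = ∑ j ∈ (univ.filter fun j => ρ j = m).filter (fun j => σ j ∈ T), p j :=
        sum_fiberwise_eq_sum_filter _ _ _ _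
    _ ≤ load p ρ m := sum_le_sum_of_subset_of_nonneg (filter_subset _ _) fun _ _ _ => hp _

theorem IsEF1Sched.exists_fiber_map [Fintype M] {σ : J → M} (hσ : IsEF1Sched p σ)
    (hp : ∀ j, 0 ≤ p j) (ρ : J → M) (i₀ : M) {z : ℝ} (hz : 0 ≤ z) :
    ∃ f : M → M, ∀ m, ∑ i ∈ univ.filter (fun i => z < load p σ i - load p σ i₀ ∧ f i = m),
      (load p σ i - load p σ i₀) ≤ load p ρ m := by
  have hbig : ∀ i, ∃ m, load p σ i₀ < load p σ i →
      ∃ j, σ j = i ∧ ρ j = m ∧ load p σ i - load p σ i₀ ≤ p j := by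
    intro i
    by_cases h : load p σ i₀ < load p σ i
    · obtain ⟨j, hj, hle⟩ := hσ.exists_sub_le hp h
      exact ⟨ρ j, fun _ => ⟨j, hj, rfl, hle⟩⟩
    · exact ⟨i, fun h' => absurd h' h⟩
  -- `f` sends a machine of `σ` to the machine of `ρ` holding its EF1 witness job.
  choose f hf using hbig
  refine ⟨f, fun m => sum_le_load_of_forall_exists (σ := σ) hp fun i hi => ?_⟩
  obtain ⟨hzi, rfl⟩ := (mem_filter.1 hi).2
  exact hf i (by linarith)

end Scheduling

/-- on identical machines, if `θ` is nondecreasing and convex on `[0,∞)` with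
`θ(0) = 0` and `α ≥ 1` satisfies
`t·θ(r+d) + (1−t)·θ(d) ≤ α·(t·θ(r) + (1−t)·θ(d/(1−t)))` for all `t ∈ (0,1)`, `d ≥ 0`,
`r ≥ d/(1−t)`, then any EF1 allocation `σ` is `α`-approximate for minimizing
`∑_i θ(load_i)`. -/
theorem stmt14 {M J : Type*} [Fintype M] [Fintype J] [Nonempty M] [DecidableEq M]
    (p : J → ℝ) (hp : ∀ j, 0 < p j)
    (θ : ℝ → ℝ)
    (hmono : MonotoneOn θ (Set.Ici 0)) (hconv : ConvexOn ℝ (Set.Ici 0) θ) (hθ0 : θ 0 = 0)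
    (α : ℝ) (hα : 1 ≤ α)
    (hαineq : ∀ t ∈ Set.Ioo (0 : ℝ) 1, ∀ d : ℝ, 0 ≤ d → ∀ r : ℝ, d / (1 - t) ≤ r →
      t * θ (r + d) + (1 - t) * θ d ≤ α * (t * θ r + (1 - t) * θ (d / (1 - t))))
    (σ : J → M) (hσ : IsEF1Sched p σ)
    (ρ : J → M) :
    ∑ i, θ (∑ j ∈ Finset.univ.filter (fun j => σ j = i), p j)
      ≤ α * ∑ i, θ (∑ j ∈ Finset.univ.filter (fun j => ρ j = i), p j) := by
  have hp0 : ∀ j, 0 ≤ p j := fun j => (hp j).le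
  obtain ⟨i₀, -, hi₀⟩ := exists_min_image univ (load p σ) univ_nonempty
  set d := load p σ i₀
  set e : M → ℝ := fun i => load p σ i - d
  have hd : 0 ≤ d := load_nonneg hp0 σ i₀
  have he : ∀ i, 0 ≤ e i := fun i => sub_nonneg.2 (hi₀ i (mem_univ i))
  obtain ⟨z, hdz, hlevel⟩ := exists_sum_max_eq he hd
  have hz : 0 ≤ z := hd.trans hdz
  obtain ⟨f, hf⟩ := hσ.exists_fiber_map hp0 ρ i₀ hz
  have hmaj : ∑ i, θ (max (e i) z) ≤ ∑ i, θ (load p ρ i) :=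
    sum_map_max_le_of_fiber_le hconv hmono hz (load_nonneg hp0 ρ)
      (by simp only [hlevel, e, sub_add_cancel, sum_load]) f hf
  calc ∑ i, θ (load p σ i) = ∑ i, θ (e i + d) := by simp only [e, sub_add_cancel]
    _ ≤ α * ∑ i, θ (max (e i) z) :=
        sum_map_add_le_mul_sum_map_max hconv hmono hθ0 hα hαineq hd hdz he hlevel
    _ ≤ α * ∑ i, θ (load p ρ i) := mul_le_mul_of_nonneg_left hmaj (by linarith)
end

section
/- Let M be a finite nonempty set with |M| = m, φ : M → ℝ with φ_i ≥ 0 for all i, and ψ > 0. Let h > 0 satisfy (1/m)·∑_{i∈M} min(φ_i, h) + ψ = h. Let θ : ℝ → ℝ be nondecreasing and convex on [0,∞) with θ(0) = 0, and let α ≥ 1 satisfy: for all t ∈ (0,1), d ≥ 0, and r ≥ d/(1−t), t·θ(r + d) + (1−t)·θ(d) ≤ α·( t·θ(r) + (1−t)·θ(d/(1−t)) ). Then ∑_{i∈M} θ(φ_i + ψ) ≤ α · ∑_{i∈M} θ( max(φ_i, h) ). -/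
/-!
Put `D := α θ(h) - θ(ψ)`. Taking `t = (h - ψ)/h` and `d = ψ` in the structural inequality (so
that `d/(1 - t) = h`) gives `(h - ψ)(θ(r + ψ) - α θ(r)) ≤ ψ D` for every `r ≥ h`. For `φ < h`,
convexity bounds `θ(φ + ψ)` by the chord between `θ(ψ)` and `θ(h + ψ)`; together with the case
`r = h` this yields, for every machine,
`(h - ψ)(θ(φ_i + ψ) - α θ(max(φ_i, h))) ≤ (min(φ_i, h) - (h - ψ)) D`,
and the water-level equation says exactly that the right-hand sides sum to zero. In the
degenerate case `h ≤ ψ` the level equation forces `φ = 0` and `h = ψ`, and the instance `d = 0`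
of the structural inequality gives `θ ≤ α θ`.
-/

open Finset

def RatioInequality (θ : ℝ → ℝ) (α : ℝ) : Prop :=
  ∀ t ∈ Set.Ioo (0 : ℝ) 1, ∀ d : ℝ, 0 ≤ d → ∀ r : ℝ, d / (1 - t) ≤ r →
    t * θ (r + d) + (1 - t) * θ d ≤ α * (t * θ r + (1 - t) * θ (d / (1 - t)))

namespace RatioInequality

variable {θ : ℝ → ℝ} {α : ℝ}

theorem le_mul_self (hα : RatioInequality θ α) (hθ0 : θ 0 = 0) {r : ℝ} (hr : 0 ≤ r) :
    θ r ≤ α * θ r := by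
  have h := hα (1 / 2) ⟨by norm_num, by norm_num⟩ 0 le_rfl r (by simpa using hr)
  simp only [add_zero, zero_div, hθ0, mul_zero] at h
  linarith

theorem sub_mul_excess_le (hα : RatioInequality θ α) {ψ h r : ℝ} (hψ : 0 < ψ) (hψh : ψ < h)
    (hr : h ≤ r) :
    (h - ψ) * (θ (r + ψ) - α * θ r) ≤ ψ * (α * θ h - θ ψ) := by
  have hh : 0 < h := hψ.trans hψh
  have h1t : 1 - (h - ψ) / h = ψ / h := by field_simp; ring
  have hd : ψ / (1 - (h - ψ) / h) = h := by rw [h1t]; field_simp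
  have key := hα ((h - ψ) / h) ⟨div_pos (by linarith) hh, by rw [div_lt_one hh]; linarith⟩
    ψ hψ.le r (by rw [hd]; exact hr)
  rw [hd, h1t] at key
  have := mul_le_mul_of_nonneg_left key hh.le
  field_simp at this
  linarith

end RatioInequality

theorem ConvexOn.mul_apply_add_le_chord {θ : ℝ → ℝ} (hconv : ConvexOn ℝ (Set.Ici 0) θ)
    {φ ψ h : ℝ} (hφ : 0 ≤ φ) (hφh : φ ≤ h) (hψ : 0 ≤ ψ) (hh : 0 < h) :
    h * θ (φ + ψ) ≤ φ * θ (h + ψ) + (h - φ) * θ ψ := by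
  have hchord := hconv.2 (Set.mem_Ici.2 (by linarith : (0 : ℝ) ≤ h + ψ)) (Set.mem_Ici.2 hψ)
    (div_nonneg hφ hh.le) (div_nonneg (sub_nonneg.2 hφh) hh.le) (by field_simp; ring)
  have harg : (φ / h) • (h + ψ) + ((h - φ) / h) • ψ = φ + ψ := by
    simp only [smul_eq_mul]; field_simp; ring
  rw [harg, smul_eq_mul, smul_eq_mul] at hchord
  have := mul_le_mul_of_nonneg_left hchord hh.le
  field_simp at this
  linarith

theorem machine_excess_le {θ : ℝ → ℝ} {α : ℝ} (hα : RatioInequality θ α)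
    (hconv : ConvexOn ℝ (Set.Ici 0) θ) {φ ψ h : ℝ} (hφ : 0 ≤ φ) (hψ : 0 < ψ) (hψh : ψ < h) :
    (h - ψ) * (θ (φ + ψ) - α * θ (max φ h)) ≤ (min φ h - (h - ψ)) * (α * θ h - θ ψ) := by
  rcases le_total h φ with hhφ | hφh
  · rw [max_eq_left hhφ, min_eq_right hhφ]
    linarith [hα.sub_mul_excess_le hψ hψh hhφ]
  · rw [max_eq_right hφh, min_eq_left hφh]
    have hh : 0 < h := hψ.trans hψh
    have hchord := hconv.mul_apply_add_le_chord hφ hφh hψ.le hh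
    have hright := hα.sub_mul_excess_le hψ hψh le_rfl
    refine le_of_mul_le_mul_left ?_ hh
    linarith [mul_le_mul_of_nonneg_left hchord (by linarith : 0 ≤ h - ψ),
      mul_le_mul_of_nonneg_left hright hφ]

section Machines

variable {M : Type*} [Fintype M]

theorem sum_min_sub_eq_zero [Nonempty M] {φ : M → ℝ} {ψ h : ℝ}
    (hlevel : (1 / (Fintype.card M : ℝ)) * (∑ i, min (φ i) h) + ψ = h) :
    ∑ i, (min (φ i) h - (h - ψ)) = 0 := by
  have hm : (0 : ℝ) < Fintype.card M := by exact_mod_cast Fintype.card_pos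
  rw [sum_sub_distrib, sum_const, card_univ, nsmul_eq_mul]
  field_simp at hlevel
  linarith

theorem add_eq_max_of_level_le {φ : M → ℝ} {ψ h : ℝ} (hφ : ∀ i, 0 ≤ φ i) (hh : 0 < h)
    (hhψ : h ≤ ψ) (hsum : ∑ i, (min (φ i) h - (h - ψ)) = 0) (i : M) :
    φ i + ψ = max (φ i) h := by
  have hnonneg : ∀ j ∈ univ, 0 ≤ min (φ j) h - (h - ψ) :=
    fun j _ => by linarith [le_min (hφ j) hh.le]
  have hi := (sum_eq_zero_iff_of_nonneg hnonneg).1 hsum i (mem_univ i)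
  have hmin : min (φ i) h = 0 := by linarith [le_min (hφ i) hh.le]
  have hφi : φ i = 0 := by
    rcases min_choice (φ i) h with h' | h' <;> linarith
  rw [hφi, max_eq_right hh.le]
  linarith

end Machines

theorem stmt15_general {M : Type*} [Fintype M] [Nonempty M]
    (φ : M → ℝ) (hφ : ∀ i, 0 ≤ φ i)
    (ψ : ℝ) (hψ : 0 < ψ)
    (h : ℝ) (hh : 0 < h)
    (hlevel : (1 / (Fintype.card M : ℝ)) * (∑ i, min (φ i) h) + ψ = h)
    (θ : ℝ → ℝ)
    (hconv : ConvexOn ℝ (Set.Ici 0) θ) (hθ0 : θ 0 = 0)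
    (α : ℝ)
    (hαineq : ∀ t ∈ Set.Ioo (0 : ℝ) 1, ∀ d : ℝ, 0 ≤ d → ∀ r : ℝ, d / (1 - t) ≤ r →
      t * θ (r + d) + (1 - t) * θ d ≤ α * (t * θ r + (1 - t) * θ (d / (1 - t)))) :
    ∑ i, θ (φ i + ψ) ≤ α * ∑ i, θ (max (φ i) h) := by
  have hsum := sum_min_sub_eq_zero hlevel
  rw [mul_sum]
  rcases le_or_gt h ψ with hhψ | hψh
  · refine sum_le_sum fun i _ => ?_
    rw [add_eq_max_of_level_le hφ hh hhψ hsum i]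
    exact RatioInequality.le_mul_self hαineq hθ0 (le_max_of_le_right hh.le)
  · have hexcess : (h - ψ) * ∑ i, (θ (φ i + ψ) - α * θ (max (φ i) h)) ≤ 0 := by
      calc (h - ψ) * ∑ i, (θ (φ i + ψ) - α * θ (max (φ i) h))
          ≤ ∑ i, (min (φ i) h - (h - ψ)) * (α * θ h - θ ψ) := by
            rw [mul_sum]
            exact sum_le_sum fun i _ => machine_excess_le hαineq hconv (hφ i) hψ hψh
        _ = 0 := by rw [← sum_mul, hsum, zero_mul]
    rw [← sub_nonpos, ← sum_sub_distrib]
    exact nonpos_of_mul_nonpos_right hexcess (by linarith)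

/-- core inequality for EF1 scheduling with objective `∑_i θ(load_i)`:
if `φ_i ≥ 0`, `ψ > 0`, `h > 0` satisfies `(1/m)·∑_i min(φ_i, h) + ψ = h`, `θ` is
nondecreasing and convex on `[0,∞)` with `θ(0) = 0`, and `α ≥ 1` satisfies the structural
inequality, then `∑_i θ(φ_i + ψ) ≤ α · ∑_i θ(max(φ_i, h))`. -/
theorem stmt15 {M : Type*} [Fintype M] [Nonempty M]
    (φ : M → ℝ) (hφ : ∀ i, 0 ≤ φ i)
    (ψ : ℝ) (hψ : 0 < ψ)
    (h : ℝ) (hh : 0 < h)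
    (hlevel : (1 / (Fintype.card M : ℝ)) * (∑ i, min (φ i) h) + ψ = h)
    (θ : ℝ → ℝ)
    (hmono : MonotoneOn θ (Set.Ici 0)) (hconv : ConvexOn ℝ (Set.Ici 0) θ) (hθ0 : θ 0 = 0)
    (α : ℝ) (hα : 1 ≤ α)
    (hαineq : ∀ t ∈ Set.Ioo (0 : ℝ) 1, ∀ d : ℝ, 0 ≤ d → ∀ r : ℝ, d / (1 - t) ≤ r →
      t * θ (r + d) + (1 - t) * θ d ≤ α * (t * θ r + (1 - t) * θ (d / (1 - t)))) :
    ∑ i, θ (φ i + ψ) ≤ α * ∑ i, θ (max (φ i) h) :=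
  stmt15_general φ hφ ψ hψ h hh hlevel θ hconv hθ0 α hαineq
end

section
/- Let M be a finite nonempty set of identical machines, J a finite set of jobs, and p : J → ℝ with p_j > 0. Let σ : J → M be an EF1 allocation. Then for every allocation ρ : J → M, ∑_{i∈M} ( ( ∑_{j ∈ σ⁻¹(i)} p_j )² + ∑_{j ∈ σ⁻¹(i)} p_j² ) ≤ ((1 + √2)/2) · ∑_{i∈M} ( ( ∑_{j ∈ ρ⁻¹(i)} p_j )² + ∑_{j ∈ ρ⁻¹(i)} p_j² ); i.e., σ is ((1+√2)/2)-approximate for minimizing total weighted completion time on identical machines when every job j has processing time and weight both equal to p_j. -/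
open Finset

section Aux

lemma machineLB {J : Type*} [DecidableEq J] (p : J → ℝ) (lam : ℝ) (hlam : 0 ≤ lam) :
    ∀ (F : Finset J) (K : ℝ), (∀ j ∈ F, lam ≤ p j) → (∑ j ∈ F, p j) ≤ K → 0 ≤ K →
    (∑ j ∈ F, p j ^ 2) + 2 * lam * (K - ∑ j ∈ F, p j) + ((F.card : ℝ) - 1) * lam ^ 2
      ≤ K ^ 2 := by
  intro F
  induction F using Finset.induction with
  | empty => intro K _ _ hK0; simp; nlinarith [sq_nonneg (K - lam)]
  | @insert a F ha ih =>
    intro K hF hsum hK0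
    have hpa : lam ≤ p a := hF a (mem_insert_self a F)
    have hFp : ∀ j ∈ F, lam ≤ p j := fun j hj => hF j (mem_insert_of_mem hj)
    have hFnn : ∀ j ∈ F, 0 ≤ p j := fun j hj => le_trans hlam (hFp j hj)
    have hsum' : (∑ j ∈ insert a F, p j) = p a + ∑ j ∈ F, p j := sum_insert ha
    have hA0 : 0 ≤ ∑ j ∈ F, p j := sum_nonneg hFnn
    rcases F.eq_empty_or_nonempty with hFe | hFne
    · subst hFe
      simp only [sum_insert ha, sum_empty, card_insert_of_notMem ha, card_empty] at *
      have hpaK : p a ≤ K := by linarith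
      push_cast
      nlinarith [mul_nonneg (sub_nonneg.2 hpaK) (by linarith : 0 ≤ K + p a - 2 * lam)]
    · obtain ⟨b, hb⟩ := hFne
      have hlamA : lam ≤ ∑ j ∈ F, p j :=
        le_trans (hFp b hb) (single_le_sum hFnn hb)
      have hK' : (∑ j ∈ F, p j) ≤ K - p a := by
        rw [hsum'] at hsum; linarith
      have hK0' : 0 ≤ K - p a := le_trans hA0 hK'
      have IH := ih (K - p a) hFp hK' hK0'
      have hcard : ((insert a F).card : ℝ) = (F.card : ℝ) + 1 := by
        rw [card_insert_of_notMem ha]; push_cast; ring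
      rw [sum_insert ha, sum_insert ha, hcard]
      nlinarith [mul_le_mul hpa (by linarith : lam ≤ K - p a) hlam (le_trans hlam hpa)]

lemma bigIneq (s L q ℓ : ℝ) (hs : s ^ 2 = 2) (hs1 : 1 ≤ s) (hℓ : 0 ≤ ℓ)
    (hqL : q ≤ L) (hLq : L ≤ ℓ + q) (hlamq : s * ℓ ≤ q) :
    L ^ 2 + q ^ 2 ≤ (1 + s) / 2 * (2 * q ^ 2 + 2 * (s * ℓ) * (L - q)) := by
  have h1 : 0 ≤ (L - q) * (ℓ + q - L) :=
    mul_nonneg (by linarith) (by linarith)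
  have h2 : 0 ≤ (2 * q - (1 + s) * ℓ) * (ℓ + q - L) := by
    have hsl : 0 ≤ (s - 1) * ℓ := mul_nonneg (by linarith) hℓ
    exact mul_nonneg (by nlinarith) (by linarith)
  have h3 : 0 ≤ (s - 1) * (q - (1 + s) * ℓ) ^ 2 :=
    mul_nonneg (by linarith) (sq_nonneg _)
  have key : (1 + s) / 2 * (2 * q ^ 2 + 2 * (s * ℓ) * (L - q)) - (L ^ 2 + q ^ 2)
      = (L - q) * (ℓ + q - L) + (2 * q - (1 + s) * ℓ) * (ℓ + q - L)
        + (s - 1) * (q - (1 + s) * ℓ) ^ 2 := by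
    linear_combination (ℓ * L - ℓ * q - 2 * ℓ * q * (s-1) - ℓ^2 * (s+1) * (s-1)
      + s^2*ℓ^2 - 2*ℓ^2 - s*ℓ^2 + 2*s*q*ℓ) * hs
  linarith [key, h1, h2, h3]

lemma smallIneq (s L q ℓ : ℝ) (hs : s ^ 2 = 2) (hs1 : 1 ≤ s) (hℓ : 0 ≤ ℓ)
    (hℓL : ℓ ≤ L) (hLq : L ≤ ℓ + q) (hqlam : q ≤ s * ℓ) :
    L ^ 2 + q ^ 2 ≤ (1 + s) / 2 * (q ^ 2 + 2 * (s * ℓ) * L - (s * ℓ) ^ 2) := by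
  have h1 : 0 ≤ (L - ℓ) * (ℓ + q - L) := mul_nonneg (by linarith) (by linarith)
  have h2 : 0 ≤ (s * ℓ - q) * (L - ℓ) := mul_nonneg (by linarith) (by linarith)
  have h3 : 0 ≤ (s - 1) / 2 * q ^ 2 := mul_nonneg (by linarith) (sq_nonneg _)
  have key : (1 + s) / 2 * (q ^ 2 + 2 * (s * ℓ) * L - (s * ℓ) ^ 2) - (L ^ 2 + q ^ 2)
      = (L - ℓ) * (ℓ + q - L) + (s * ℓ - q) * (L - ℓ) + (s - 1) / 2 * q ^ 2 := by
    linear_combination (-(1 + s) / 2 * ℓ ^ 2 + ℓ * L) * hs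
  linarith [key, h1, h2, h3]

end Aux

theorem stmt16_aux {M J : Type*} [Fintype M] [Fintype J] [Nonempty M] [DecidableEq M]
    (p : J → ℝ) (hp : ∀ j, 0 < p j)
    (σ : J → M)
    (hσ : ∀ i i' : M, ∀ hne : (Finset.univ.filter (fun j => σ j = i')).Nonempty,
      (∑ j ∈ Finset.univ.filter (fun j => σ j = i'), p j)
          - (Finset.univ.filter (fun j => σ j = i')).sup' hne p
        ≤ ∑ j ∈ Finset.univ.filter (fun j => σ j = i), p j)
    (ρ : J → M) :
    ∑ i, ((∑ j ∈ Finset.univ.filter (fun j => σ j = i), p j) ^ 2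
            + ∑ j ∈ Finset.univ.filter (fun j => σ j = i), p j ^ 2)
      ≤ ((1 + Real.sqrt 2) / 2) *
          ∑ i, ((∑ j ∈ Finset.univ.filter (fun j => ρ j = i), p j) ^ 2
            + ∑ j ∈ Finset.univ.filter (fun j => ρ j = i), p j ^ 2) := by
  classical
  obtain hJe | hJne := isEmpty_or_nonempty J
  · have h1 : ∀ (τ : J → M) (i : M), Finset.univ.filter (fun j => τ j = i) = (∅ : Finset J) := by
      intro τ i
      apply Finset.eq_empty_of_forall_notMem
      intro j
      exact (hJe.false j).elim
    simp [h1]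
  · inhabit J
    set s : ℝ := Real.sqrt 2 with hsdef
    have hs : s ^ 2 = 2 := Real.sq_sqrt (by norm_num)
    have hs0 : 0 ≤ s := Real.sqrt_nonneg 2
    have hs1 : 1 ≤ s := by nlinarith
    set Aσ : M → Finset J := fun i => Finset.univ.filter (fun j => σ j = i) with hAσdef
    set Aρ : M → Finset J := fun i => Finset.univ.filter (fun j => ρ j = i) with hAρdef
    set Lσ : M → ℝ := fun i => ∑ j ∈ Aσ i, p j with hLσdef
    set Lρ : M → ℝ := fun i => ∑ j ∈ Aρ i, p j with hLρdef
    set Qσ : M → ℝ := fun i => ∑ j ∈ Aσ i, p j ^ 2 with hQσdef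
    set Qρ : M → ℝ := fun i => ∑ j ∈ Aρ i, p j ^ 2 with hQρdef
    show ∑ i, (Lσ i ^ 2 + Qσ i) ≤ (1 + s) / 2 * ∑ i, (Lρ i ^ 2 + Qρ i)
    -- global sums
    have hQσeq : ∑ i, Qσ i = ∑ j, p j ^ 2 :=
      Finset.sum_fiberwise_of_maps_to (fun j _ => Finset.mem_univ (σ j)) _
    have hQρeq : ∑ i, Qρ i = ∑ j, p j ^ 2 :=
      Finset.sum_fiberwise_of_maps_to (fun j _ => Finset.mem_univ (ρ j)) _
    have hPσeq : ∑ i, Lσ i = ∑ j, p j :=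
      Finset.sum_fiberwise_of_maps_to (fun j _ => Finset.mem_univ (σ j)) _
    have hPρeq : ∑ i, Lρ i = ∑ j, p j :=
      Finset.sum_fiberwise_of_maps_to (fun j _ => Finset.mem_univ (ρ j)) _
    -- min load
    obtain ⟨i₀, -, hi₀⟩ := Finset.exists_min_image Finset.univ Lσ Finset.univ_nonempty
    set ℓ : ℝ := Lσ i₀ with hℓdef
    have hLnn : ∀ i, 0 ≤ Lσ i := fun i => Finset.sum_nonneg (fun j _ => (hp j).le)
    have hℓ0 : 0 ≤ ℓ := hLnn i₀
    have hmin : ∀ i, ℓ ≤ Lσ i := fun i => hi₀ i (Finset.mem_univ i)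
    set lam : ℝ := s * ℓ with hlamdef
    have hlam0 : 0 ≤ lam := mul_nonneg hs0 hℓ0
    -- nonempty machines, top jobs
    set ne : Finset M := Finset.univ.filter (fun i => (Aσ i).Nonempty) with hnedef
    set q : M → ℝ := fun i => if h : (Aσ i).Nonempty then (Aσ i).sup' h p else 0 with hqdef
    set top : M → J := fun i =>
      if h : (Aσ i).Nonempty then (Finset.exists_mem_eq_sup' h p).choose else default
      with htopdef
    have htop : ∀ i ∈ ne, top i ∈ Aσ i ∧ p (top i) = q i := by
      intro i hi
      have h : (Aσ i).Nonempty := (Finset.mem_filter.1 hi).2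
      have hspec := (Finset.exists_mem_eq_sup' h p).choose_spec
      simp only [hqdef, htopdef, dif_pos h]
      exact ⟨hspec.1, hspec.2.symm⟩
    have hσtop : ∀ i ∈ ne, σ (top i) = i := by
      intro i hi
      have := (htop i hi).1
      simp only [hAσdef, Finset.mem_filter] at this
      exact this.2
    have hqpos : ∀ i ∈ ne, 0 < q i := by
      intro i hi; rw [← (htop i hi).2]; exact hp _
    have hqL : ∀ i ∈ ne, q i ≤ Lσ i := by
      intro i hi
      rw [← (htop i hi).2]
      exact Finset.single_le_sum (f := p) (fun j _ => (hp j).le) (htop i hi).1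
    have hEF1 : ∀ i ∈ ne, Lσ i ≤ ℓ + q i := by
      intro i hi
      have h : (Aσ i).Nonempty := (Finset.mem_filter.1 hi).2
      have := hσ i₀ i h
      have hq : q i = (Aσ i).sup' h p := by simp only [hqdef, dif_pos h]
      rw [hq]
      linarith [this]
    have hqsq : ∀ i ∈ ne, q i ^ 2 ≤ Qσ i := by
      intro i hi
      rw [← (htop i hi).2]
      exact Finset.single_le_sum (f := fun j => p j ^ 2) (fun j _ => sq_nonneg _) (htop i hi).1
    have hLempty : ∀ i ∉ ne, Lσ i = 0 := by
      intro i hi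
      simp only [hnedef, Finset.mem_filter, Finset.mem_univ, true_and,
        Finset.not_nonempty_iff_eq_empty] at hi
      simp [hLσdef, hi]
    have hlam_empty : ∀ i ∉ ne, lam = 0 := by
      intro i hi
      have h0 : Lσ i = 0 := hLempty i hi
      have : ℓ = 0 := le_antisymm (h0 ▸ hmin i) hℓ0
      rw [hlamdef, this, mul_zero]
    -- big machines and the job set B
    set big : Finset M := ne.filter (fun i => lam ≤ q i) with hbigdef
    set B : Finset J := big.image top with hBdef
    have hbig_ne : ∀ i ∈ big, i ∈ ne := fun i hi => (Finset.mem_filter.1 hi).1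
    have hinj : ∀ x ∈ big, ∀ y ∈ big, top x = top y → x = y := by
      intro x hx y hy hxy
      rw [← hσtop x (hbig_ne x hx), ← hσtop y (hbig_ne y hy), hxy]
    have hcardB : (B.card : ℝ) = (big.card : ℝ) := by
      rw [hBdef, Finset.card_image_of_injOn hinj]
    have hQB : ∑ j ∈ B, p j ^ 2 = ∑ i ∈ big, q i ^ 2 := by
      rw [hBdef, Finset.sum_image hinj]
      exact Finset.sum_congr rfl (fun i hi => by rw [(htop i (hbig_ne i hi)).2])
    have hSB : ∑ j ∈ B, p j = ∑ i ∈ big, q i := by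
      rw [hBdef, Finset.sum_image hinj]
      exact Finset.sum_congr rfl (fun i hi => by rw [(htop i (hbig_ne i hi)).2])
    have hBlam : ∀ j ∈ B, lam ≤ p j := by
      intro j hj
      rw [hBdef, Finset.mem_image] at hj
      obtain ⟨i, hi, rfl⟩ := hj
      rw [(htop i (hbig_ne i hi)).2]
      exact (Finset.mem_filter.1 hi).2
    -- ρ-side lower bound
    have hmach : ∀ i, (∑ j ∈ B.filter (fun j => ρ j = i), p j ^ 2)
        + 2 * lam * (Lρ i - ∑ j ∈ B.filter (fun j => ρ j = i), p j)
        + (((B.filter (fun j => ρ j = i)).card : ℝ) - 1) * lam ^ 2 ≤ Lρ i ^ 2 := by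
      intro i
      have hsub : B.filter (fun j => ρ j = i) ⊆ Aρ i := by
        intro j hj
        simp only [hAρdef, Finset.mem_filter, Finset.mem_univ, true_and]
        exact (Finset.mem_filter.1 hj).2
      exact machineLB p lam hlam0 _ _
        (fun j hj => hBlam j (Finset.mem_filter.1 hj).1)
        (Finset.sum_le_sum_of_subset_of_nonneg hsub (fun j _ _ => (hp j).le))
        (Finset.sum_nonneg (fun j _ => (hp j).le))
    have hZ : (∑ j ∈ B, p j ^ 2) + 2 * lam * ((∑ i, Lρ i) - ∑ j ∈ B, p j)
        + ((B.card : ℝ) - (Fintype.card M : ℝ)) * lam ^ 2 ≤ ∑ i, Lρ i ^ 2 := by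
      have h1 := Finset.sum_le_sum (fun i (_ : i ∈ Finset.univ) => hmach i)
      have e1 : ∑ i, ∑ j ∈ B.filter (fun j => ρ j = i), p j ^ 2 = ∑ j ∈ B, p j ^ 2 :=
        Finset.sum_fiberwise_of_maps_to (fun j _ => Finset.mem_univ (ρ j)) _
      have e2 : ∑ i, ∑ j ∈ B.filter (fun j => ρ j = i), p j = ∑ j ∈ B, p j :=
        Finset.sum_fiberwise_of_maps_to (fun j _ => Finset.mem_univ (ρ j)) _
      have e3n : ∑ i, (B.filter (fun j => ρ j = i)).card = B.card :=
        (Finset.card_eq_sum_card_fiberwise (fun j _ => Finset.mem_univ (ρ j))).symm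
      have e3 : ∑ i, ((B.filter (fun j => ρ j = i)).card : ℝ) = (B.card : ℝ) := by
        exact_mod_cast congrArg (Nat.cast : ℕ → ℝ) e3n
      have e4 : ∑ i, 2 * lam * (Lρ i - ∑ j ∈ B.filter (fun j => ρ j = i), p j)
          = 2 * lam * ((∑ i, Lρ i) - ∑ j ∈ B, p j) := by
        rw [← Finset.mul_sum, Finset.sum_sub_distrib, e2]
      have e5 : ∑ i, (((B.filter (fun j => ρ j = i)).card : ℝ) - 1) * lam ^ 2
          = ((B.card : ℝ) - (Fintype.card M : ℝ)) * lam ^ 2 := by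
        rw [← Finset.sum_mul, Finset.sum_sub_distrib, e3, Finset.sum_const,
          Finset.card_univ, nsmul_eq_mul, mul_one]
      have e6 : ∑ i, ((∑ j ∈ B.filter (fun j => ρ j = i), p j ^ 2)
          + 2 * lam * (Lρ i - ∑ j ∈ B.filter (fun j => ρ j = i), p j)
          + (((B.filter (fun j => ρ j = i)).card : ℝ) - 1) * lam ^ 2)
          = (∑ j ∈ B, p j ^ 2) + 2 * lam * ((∑ i, Lρ i) - ∑ j ∈ B, p j)
            + ((B.card : ℝ) - (Fintype.card M : ℝ)) * lam ^ 2 := by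
        rw [Finset.sum_add_distrib, Finset.sum_add_distrib, e1, e4, e5]
      linarith [h1, e6]
    -- σ-side per machine
    set T : ℝ := ∑ i ∈ ne, q i ^ 2 with hTdef
    have hσmach : ∀ i, Lσ i ^ 2 + (if i ∈ ne then q i ^ 2 else 0)
        ≤ (1 + s) / 2 * ((if i ∈ big then q i ^ 2 + lam ^ 2 - 2 * lam * q i else 0)
            + 2 * lam * Lσ i - lam ^ 2 + (if i ∈ ne then q i ^ 2 else 0)) := by
      intro i
      by_cases hne_i : i ∈ ne
      · by_cases hbig_i : i ∈ big
        · rw [if_pos hne_i, if_pos hbig_i, hlamdef]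
          linarith [bigIneq s (Lσ i) (q i) ℓ hs hs1 hℓ0 (hqL i hne_i) (hEF1 i hne_i)
            ((Finset.mem_filter.1 hbig_i).2)]
        · have hqlam : q i ≤ lam := by
            by_contra hcon
            exact hbig_i (Finset.mem_filter.2 ⟨hne_i, (not_le.1 hcon).le⟩)
          rw [if_pos hne_i, if_neg hbig_i, hlamdef]
          rw [hlamdef] at hqlam
          linarith [smallIneq s (Lσ i) (q i) ℓ hs hs1 hℓ0 (hmin i) (hEF1 i hne_i) hqlam]
      · have hbig_i : i ∉ big := fun h => hne_i (hbig_ne i h)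
        rw [if_neg hne_i, if_neg hbig_i]
        have hL0 : Lσ i = 0 := hLempty i hne_i
        have hlam0' : lam = 0 := hlam_empty i hne_i
        rw [hL0, hlam0']
        norm_num
    have hσsum := Finset.sum_le_sum (fun i (_ : i ∈ Finset.univ) => hσmach i)
    -- rearrange the σ-side sums
    have f1 : ∑ i, (Lσ i ^ 2 + (if i ∈ ne then q i ^ 2 else 0))
        = (∑ i, Lσ i ^ 2) + T := by
      rw [Finset.sum_add_distrib, Finset.sum_ite_mem, Finset.univ_inter]
    have f2 : ∑ i, ((if i ∈ big then q i ^ 2 + lam ^ 2 - 2 * lam * q i else 0)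
            + 2 * lam * Lσ i - lam ^ 2 + (if i ∈ ne then q i ^ 2 else 0))
        = ((∑ i ∈ big, q i ^ 2) + (big.card : ℝ) * lam ^ 2 - 2 * lam * (∑ i ∈ big, q i))
          + 2 * lam * (∑ i, Lσ i) - (Fintype.card M : ℝ) * lam ^ 2 + T := by
      simp only [Finset.sum_add_distrib, Finset.sum_sub_distrib, Finset.sum_ite_mem,
        Finset.univ_inter, Finset.sum_const, Finset.card_univ, nsmul_eq_mul,
        ← Finset.mul_sum]
      try push_cast
      try ring
    -- T ≤ total sum of squares
    have hTQ : T ≤ ∑ j, p j ^ 2 := by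
      rw [← hQσeq, hTdef]
      calc ∑ i ∈ ne, q i ^ 2 ≤ ∑ i ∈ ne, Qσ i := Finset.sum_le_sum hqsq
        _ ≤ ∑ i, Qσ i := Finset.sum_le_sum_of_subset_of_nonneg (Finset.subset_univ ne)
            (fun i _ _ => Finset.sum_nonneg (fun j _ => sq_nonneg _))
    -- final combination
    have hc0 : (0 : ℝ) ≤ (1 + s) / 2 := by linarith
    have hc1 : (1 : ℝ) ≤ (1 + s) / 2 := by linarith
    rw [Finset.sum_add_distrib, Finset.sum_add_distrib, hQσeq, hQρeq]
    set QQ : ℝ := ∑ j, p j ^ 2 with hQQdef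
    rw [f1, ← Finset.mul_sum, f2] at hσsum
    have hZ' := mul_le_mul_of_nonneg_left hZ hc0
    have hQT : QQ - T ≤ (1 + s) / 2 * (QQ - T) := by nlinarith [hTQ]
    rw [hPρeq, ← hPσeq] at hZ'
    rw [hQB, hSB, hcardB] at hZ'
    clear_value s Aσ Aρ Lσ Lρ Qσ Qρ ℓ lam q top ne big B T QQ
    linarith [hσsum, hZ', hQT]


/-- on identical machines with uniform Smith ratios (every job `j` has
processing time and weight `p_j`), any EF1 allocation `σ` is `((1+√2)/2)`-approximate
for minimizing total weighted completion time:
`∑_i ((∑_{j∈σ⁻¹(i)} p_j)² + ∑_{j∈σ⁻¹(i)} p_j²) ≤ ((1+√2)/2)·∑_i ((∑_{j∈ρ⁻¹(i)} p_j)² + ∑_{j∈ρ⁻¹(i)} p_j²)`. -/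
theorem stmt16 {M J : Type*} [Fintype M] [Fintype J] [Nonempty M] [DecidableEq M]
    (p : J → ℝ) (hp : ∀ j, 0 < p j)
    (σ : J → M) (hσ : IsEF1Sched p σ)
    (ρ : J → M) :
    ∑ i, ((∑ j ∈ Finset.univ.filter (fun j => σ j = i), p j) ^ 2
            + ∑ j ∈ Finset.univ.filter (fun j => σ j = i), p j ^ 2)
      ≤ ((1 + Real.sqrt 2) / 2) *
          ∑ i, ((∑ j ∈ Finset.univ.filter (fun j => ρ j = i), p j) ^ 2
            + ∑ j ∈ Finset.univ.filter (fun j => ρ j = i), p j ^ 2) :=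
  stmt16_aux p hp σ hσ ρ
end

section
/- Let α = (1 + √2)/2. Then for all real numbers a, b with a ≥ 0, b ≥ 0 and a + b ≤ 1: ((2α − 1)/(2(α − 1)))·a²·b + (1 − b − a)·((1 + a)² − (α − 1)) + a³ − α·(1 − b) ≤ 0. -/
/-- with `α = (1+√2)/2`, for all reals `a, b ≥ 0` with `a + b ≤ 1`,
`((2α−1)/(2(α−1)))·a²·b + (1−b−a)·((1+a)² − (α−1)) + a³ − α·(1−b) ≤ 0`. -/
theorem stmt17 (a b : ℝ) (ha : 0 ≤ a) (hb : 0 ≤ b) (hab : a + b ≤ 1) :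
    ((2 * ((1 + Real.sqrt 2) / 2) - 1) / (2 * ((1 + Real.sqrt 2) / 2 - 1))) * a ^ 2 * b
        + (1 - b - a) * ((1 + a) ^ 2 - ((1 + Real.sqrt 2) / 2 - 1))
        + a ^ 3 - ((1 + Real.sqrt 2) / 2) * (1 - b)
      ≤ 0 := by
  set s := Real.sqrt 2 with hsdef
  have hs : s ^ 2 = 2 := Real.sq_sqrt (by norm_num)
  have h1 : (1:ℝ) ≤ s := by nlinarith [Real.sqrt_nonneg 2]
  have hne : 2 * ((1 + s) / 2 - 1) ≠ 0 := by nlinarith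
  have key : ((2 * ((1 + s) / 2) - 1) / (2 * ((1 + s) / 2 - 1))) = 2 + s := by
    rw [div_eq_iff hne]; nlinarith
  rw [key]
  have hid : (2 + s) * a ^ 2 * b + (1 - b - a) * ((1 + a) ^ 2 - ((1 + s) / 2 - 1))
      + a ^ 3 - ((1 + s) / 2) * (1 - b)
      = -((s - 1) / 4 * a * (2 * (1 + s) * a - (2 + s)) ^ 2)
        - (1 - a - b) * (1 + s) * (a - (s - 1)) ^ 2 := by
    linear_combination (a^3*s - a^2*s - 3/4*a*s + s - b*s + a^3 - a/4 - 1 + b + 2*a*b) * hs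
  rw [hid]
  have hc : 0 ≤ 1 - a - b := by linarith
  have t1 : 0 ≤ (s - 1) / 4 * a * (2 * (1 + s) * a - (2 + s)) ^ 2 :=
    mul_nonneg (mul_nonneg (by linarith) ha) (sq_nonneg _)
  have t2 : 0 ≤ (1 - a - b) * (1 + s) * (a - (s - 1)) ^ 2 :=
    mul_nonneg (mul_nonneg hc (by linarith)) (sq_nonneg _)
  linarith
end

section
/- Let θ : ℝ → ℝ be nondecreasing and convex on [0,∞) with θ(0) = 0, differentiable on (0,∞) with θ' ≥ 0 and with θ' extending continuously to 0. Let J be a finite set, p : J → ℝ with p_j > 0, x : J → [0,1], and ε > 0. Suppose h* ≥ 0 satisfies ∑_{j∈J} min(p_j, h*)·x_j = h* (with h* > 0 if ∑_j x_j > 1 and h* = 0 if ∑_j x_j ≤ 1), and let h̄ satisfy h*/(1+ε) < h̄ ≤ h* (when h* = 0 take h̄ = 0). Then (∑_{j: p_j > h*} x_j·( θ(p_j/(1+ε)) − θ(h*/(1+ε)) )) + θ(h*/(1+ε)) ≤ g_θ(x, h̄) ≤ (∑_{j: p_j > h*} x_j·(θ(p_j) − θ(h*))) + θ(h*). In words: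 the relaxation value of the instance with all job sizes scaled down by 1/(1+ε) is at most g_θ evaluated at any grid point h̄ within a (1+ε) factor below h*, which in turn is at most the true relaxation value f(x). -/
open Finset

theorem sub_eq_slope_mul_sub {𝕜 : Type*} [Field 𝕜] (f : 𝕜 → 𝕜) (a b : 𝕜) :
    f b - f a = slope f a b * (b - a) := by
  rw [mul_comm, ← smul_eq_mul, sub_smul_slope, vsub_eq_sub]

section Slope

variable {𝕜 : Type*} [Field 𝕜] [LinearOrder 𝕜] [IsStrictOrderedRing 𝕜] {s : Set 𝕜}
  {f : 𝕜 → 𝕜} {a b c d t : 𝕜}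

theorem ConvexOn.slope_le_slope (hf : ConvexOn 𝕜 s f) (ha : a ∈ s) (hd : d ∈ s)
    (hab : a < b) (hcd : c < d) (hac : a ≤ c) (hbd : b ≤ d) :
    slope f a b ≤ slope f c d := by
  have hb : b ∈ s := hf.1.ordConnected.out ha hd ⟨hab.le, hbd⟩
  have hc : c ∈ s := hf.1.ordConnected.out ha hd ⟨hac, hcd.le⟩
  calc slope f a b ≤ slope f a d :=
        hf.slope_mono ha ⟨hb, hab.ne'⟩ ⟨hd, (hab.trans_le hbd).ne'⟩ hbd
    _ = slope f d a := slope_comm f a d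
    _ ≤ slope f d c := hf.slope_mono hd ⟨ha, (hab.trans_le hbd).ne⟩ ⟨hc, hcd.ne⟩ hac
    _ = slope f c d := slope_comm f d c

theorem ConvexOn.sub_le_slope_mul_sub (hf : ConvexOn 𝕜 s f) (ha : a ∈ s) (hb : b ∈ s)
    (hat : a ≤ t) (htb : t ≤ b) : f t - f a ≤ slope f a b * (t - a) := by
  rcases hat.eq_or_lt with rfl | hat
  · simp
  have ht : t ∈ s := hf.1.ordConnected.out ha hb ⟨hat.le, htb⟩
  rw [sub_eq_slope_mul_sub f a t]
  exact mul_le_mul_of_nonneg_right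
    (hf.slope_mono ha ⟨ht, hat.ne'⟩ ⟨hb, (hat.trans_le htb).ne'⟩ htb) (sub_nonneg.2 hat.le)

theorem ConvexOn.sub_le_sub_of_monotoneOn (hf : ConvexOn 𝕜 s f) (hmono : MonotoneOn f s)
    (ha : a ∈ s) (hd : d ∈ s) (hab : a < b) (hcd : c < d) (hac : a ≤ c) (hbd : b ≤ d)
    (hlen : b - a ≤ d - c) : f b - f a ≤ f d - f c := by
  have hc : c ∈ s := hf.1.ordConnected.out ha hd ⟨hac, hcd.le⟩
  have hslope : 0 ≤ slope f c d := by
    rw [slope_def_field]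
    exact div_nonneg (sub_nonneg.2 (hmono hc hd hcd.le)) (sub_nonneg.2 hcd.le)
  rw [sub_eq_slope_mul_sub f a b, sub_eq_slope_mul_sub f c d]
  calc slope f a b * (b - a) ≤ slope f c d * (b - a) :=
        mul_le_mul_of_nonneg_right (hf.slope_le_slope ha hd hab hcd hac hbd)
          (sub_nonneg.2 hab.le)
    _ ≤ slope f c d * (d - c) := mul_le_mul_of_nonneg_left hlen hslope

end Slope

-- The relaxation value `f(x)` of the paper at water level `h`.
noncomputable def relaxValue {J : Type*} [Fintype J] (θ : ℝ → ℝ) (p x : J → ℝ) (h : ℝ) : ℝ :=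
  (∑ j ∈ univ.filter (fun j => h < p j), x j * (θ (p j) - θ h)) + θ h

section Relaxation

variable {J : Type*} [Fintype J] {θ θ' : ℝ → ℝ} {p x : J → ℝ} {a b m : ℝ}

omit [Fintype J] in
theorem sum_filter_lt_eq_sum_max (s : Finset J) (θ : ℝ → ℝ) (p x : J → ℝ) (h : ℝ) :
    ∑ j ∈ s.filter (fun j => h < p j), x j * (θ (p j) - θ h)
      = ∑ j ∈ s, x j * (θ (max (p j) h) - θ h) := by
  rw [sum_filter]
  refine sum_congr rfl fun j _ => ?_
  split_ifs with hj
  · rw [max_eq_left hj.le]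
  · rw [max_eq_right (not_lt.1 hj), sub_self, mul_zero]

theorem relaxValue_eq_sum_max (θ : ℝ → ℝ) (p x : J → ℝ) (h : ℝ) :
    relaxValue θ p x h = ∑ j, x j * (θ (max (p j) h) - θ h) + θ h := by
  rw [relaxValue, sum_filter_lt_eq_sum_max]

theorem gTheta_eq_relaxValue_add (θ θ' : ℝ → ℝ) (p x : J → ℝ) (h : ℝ) :
    gTheta θ θ' p x h = relaxValue θ p x h + θ' h * ((∑ j, min (p j) h * x j) - h) :=
  rfl

theorem gTheta_eq_relaxValue_of_sum_min_mul_eq {h : ℝ} (hwater : ∑ j, min (p j) h * x j = h) :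
    gTheta θ θ' p x h = relaxValue θ p x h := by
  rw [gTheta_eq_relaxValue_add, hwater, sub_self, mul_zero, add_zero]

-- `h ↦ ∑ min(p_j, h) x_j` is concave and vanishes at `0`, so it stays above the diagonal
-- to the left of a water level.
theorem le_sum_min_mul_of_le (hp : ∀ j, 0 ≤ p j) (hx : ∀ j, 0 ≤ x j) (ha : 0 ≤ a) (hab : a ≤ b)
    (hwater : ∑ j, min (p j) b * x j = b) : a ≤ ∑ j, min (p j) a * x j := by
  rcases (ha.trans hab).eq_or_lt with rfl | hb
  · exact hab.trans (sum_nonneg fun j _ => mul_nonneg (le_min (hp j) ha) (hx j))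
  set c := a / b
  have hc0 : 0 ≤ c := div_nonneg ha hb.le
  have hc1 : c ≤ 1 := div_le_one_of_le₀ hab hb.le
  have hcb : c * b = a := div_mul_cancel₀ a hb.ne'
  have hmin : ∀ j, c * min (p j) b ≤ min (p j) a := fun j => by
    rw [mul_min_of_nonneg _ _ hc0, hcb]
    exact min_le_min_right a (mul_le_of_le_one_left (hp j) hc1)
  calc a = c * ∑ j, min (p j) b * x j := by rw [hwater, hcb]
    _ = ∑ j, (c * min (p j) b) * x j := by rw [mul_sum]; simp only [mul_assoc]
    _ ≤ ∑ j, min (p j) a * x j :=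
        sum_le_sum fun j _ => mul_le_mul_of_nonneg_right (hmin j) (hx j)

theorem relaxValue_le_gTheta {h : ℝ} (hθ' : 0 ≤ θ' h) (hS : h ≤ ∑ j, min (p j) h * x j) :
    relaxValue θ p x h ≤ gTheta θ θ' p x h := by
  rw [gTheta_eq_relaxValue_add]
  exact le_add_of_nonneg_right (mul_nonneg hθ' (sub_nonneg.2 hS))

theorem sub_add_mul_min_le_of_secant (hab : a ≤ b)
    (hsec : ∀ t, a ≤ t → t ≤ b → θ t - θ a ≤ m * (t - a)) (q : ℝ) :
    θ (max q a) - θ a + m * min q a ≤ θ (max q b) - θ b + m * min q b := by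
  rcases le_total q a with hqa | haq
  · rw [max_eq_right hqa, max_eq_right (hqa.trans hab), min_eq_left hqa,
      min_eq_left (hqa.trans hab)]
    simp
  rcases le_total q b with hqb | hbq
  · rw [max_eq_left haq, max_eq_right hqb, min_eq_right haq, min_eq_left hqb]
    linarith [hsec q haq hqb]
  · rw [max_eq_left haq, max_eq_left hbq, min_eq_right haq, min_eq_right hbq]
    linarith [hsec b hab le_rfl]

theorem gTheta_le_relaxValue_of_secant (hx : ∀ j, 0 ≤ x j) (hab : a ≤ b) (hm : θ' a ≤ m)
    (hsec : ∀ t, a ≤ t → t ≤ b → θ t - θ a ≤ m * (t - a)) (hmb : θ b - θ a = m * (b - a))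
    (hSa : a ≤ ∑ j, min (p j) a * x j) (hwater : ∑ j, min (p j) b * x j = b) :
    gTheta θ θ' p x a ≤ relaxValue θ p x b := by
  have hjob : ∀ j, x j * (θ (max (p j) a) - θ a) + m * (min (p j) a * x j)
      ≤ x j * (θ (max (p j) b) - θ b) + m * (min (p j) b * x j) := fun j => by
    linarith [mul_le_mul_of_nonneg_left (sub_add_mul_min_le_of_secant hab hsec (p j)) (hx j)]
  have hsum := sum_le_sum fun j (_ : j ∈ univ) => hjob j
  rw [sum_add_distrib, sum_add_distrib, ← mul_sum, ← mul_sum, hwater] at hsum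
  rw [gTheta_eq_relaxValue_add, relaxValue_eq_sum_max, relaxValue_eq_sum_max]
  nlinarith [mul_le_mul_of_nonneg_right hm (sub_nonneg.2 hSa)]

theorem gTheta_le_relaxValue_of_convexOn {s : Set ℝ} (hf : ConvexOn ℝ s θ) (ha : a ∈ s)
    (hb : b ∈ s) (hab : a < b) (hderiv : HasDerivAt θ (θ' a) a) (hx : ∀ j, 0 ≤ x j)
    (hSa : a ≤ ∑ j, min (p j) a * x j) (hwater : ∑ j, min (p j) b * x j = b) :
    gTheta θ θ' p x a ≤ relaxValue θ p x b :=
  gTheta_le_relaxValue_of_secant hx hab.le (hf.le_slope_of_hasDerivAt ha hb hab hderiv)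
    (fun _ hat htb => hf.sub_le_slope_mul_sub ha hb hat htb) (sub_eq_slope_mul_sub θ a b)
    hSa hwater

theorem sub_max_div_le_sub_max (hmono : MonotoneOn θ (Set.Ici 0))
    (hconv : ConvexOn ℝ (Set.Ici 0) θ) {d h : ℝ} (hd : 1 ≤ d) (ha : 0 ≤ a) (hah : a ≤ h)
    (q : ℝ) : θ (max q h / d) - θ (h / d) ≤ θ (max q a) - θ a := by
  have hd0 : 0 < d := zero_lt_one.trans_le hd
  have hh : 0 ≤ h := ha.trans hah
  rcases le_or_gt q h with hqh | hhq
  · rw [max_eq_right hqh, sub_self, sub_nonneg]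
    exact hmono ha (ha.trans (le_max_right q a)) (le_max_right q a)
  rw [max_eq_left hhq.le, max_eq_left (hah.trans hhq.le)]
  have hscale : θ (q / d) - θ (h / d) ≤ θ q - θ h :=
    hconv.sub_le_sub_of_monotoneOn hmono (div_nonneg hh hd0.le) (hh.trans hhq.le)
      (div_lt_div_of_pos_right hhq hd0) hhq (div_le_self hh hd) (div_le_self (hh.trans hhq.le) hd)
      (by rw [← sub_div]; exact div_le_self (sub_nonneg.2 hhq.le) hd)
  linarith [hmono ha hh hah]

-- Shrinking all job sizes by the factor `d` is the same as replacing `θ` by `θ(· / d)`.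
theorem relaxValue_comp_div_le (hmono : MonotoneOn θ (Set.Ici 0))
    (hconv : ConvexOn ℝ (Set.Ici 0) θ) (hx : ∀ j, 0 ≤ x j) {d h : ℝ} (hd : 1 ≤ d) (ha : 0 ≤ a)
    (hha : h / d ≤ a) (hah : a ≤ h) :
    relaxValue (fun t => θ (t / d)) p x h ≤ relaxValue θ p x a := by
  rw [relaxValue_eq_sum_max, relaxValue_eq_sum_max]
  refine add_le_add (sum_le_sum fun j _ => ?_) ?_
  · exact mul_le_mul_of_nonneg_left (sub_max_div_le_sub_max hmono hconv hd ha hah (p j)) (hx j)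
  · exact hmono (div_nonneg (ha.trans hah) (zero_le_one.trans hd)) ha hha

end Relaxation

theorem stmt18_general {J : Type*} [Fintype J]
    (θ θ' : ℝ → ℝ)
    (hmono : MonotoneOn θ (Set.Ici 0)) (hconv : ConvexOn ℝ (Set.Ici 0) θ)
    (hD1 : ∀ t : ℝ, 0 < t → HasDerivAt θ (θ' t) t)
    (hθ'nn : ∀ t : ℝ, 0 < t → 0 ≤ θ' t)
    (p x : J → ℝ) (hp : ∀ j, 0 < p j) (hx : ∀ j, x j ∈ Set.Icc (0 : ℝ) 1)
    (ε : ℝ) (hε : 0 < ε)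
    (hstar : ℝ) (hstar0 : 0 ≤ hstar)
    (hwater : ∑ j, min (p j) hstar * x j = hstar)
    (hbar : ℝ)
    (hbar_cond : (hstar = 0 ∧ hbar = 0) ∨ (hstar / (1 + ε) < hbar ∧ hbar ≤ hstar)) :
    (∑ j ∈ Finset.univ.filter (fun j => hstar < p j),
        x j * (θ (p j / (1 + ε)) - θ (hstar / (1 + ε)))) + θ (hstar / (1 + ε))
      ≤ gTheta θ θ' p x hbar ∧
    gTheta θ θ' p x hbar ≤
      (∑ j ∈ Finset.univ.filter (fun j => hstar < p j), x j * (θ (p j) - θ hstar))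
        + θ hstar := by
  have hscaled : 0 ≤ hstar / (1 + ε) := div_nonneg hstar0 (by linarith)
  obtain ⟨hlow, hle, hbar_pos⟩ :
      hstar / (1 + ε) ≤ hbar ∧ hbar ≤ hstar ∧ (hbar < hstar → 0 < hbar) := by
    rcases hbar_cond with ⟨rfl, rfl⟩ | ⟨hlt, hle⟩
    · simp
    · exact ⟨hlt.le, hle, fun _ => hscaled.trans_lt hlt⟩
  have hx0 : ∀ j, 0 ≤ x j := fun j => (hx j).1
  have hbar0 : 0 ≤ hbar := hscaled.trans hlow
  have hS := le_sum_min_mul_of_le (fun j => (hp j).le) hx0 hbar0 hle hwater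
  have hrelax : relaxValue (fun t => θ (t / (1 + ε))) p x hstar ≤ relaxValue θ p x hbar :=
    relaxValue_comp_div_le hmono hconv hx0 (by linarith) hbar0 hlow hle
  rcases hle.eq_or_lt with rfl | hlt
  · rw [gTheta_eq_relaxValue_of_sum_min_mul_eq hwater]
    exact ⟨hrelax, le_rfl⟩
  · exact ⟨hrelax.trans (relaxValue_le_gTheta (hθ'nn _ (hbar_pos hlt)) hS),
      gTheta_le_relaxValue_of_convexOn hconv hbar0 hstar0 hlt (hD1 _ (hbar_pos hlt)) hx0 hS
        hwater⟩

/-- discretization lemma for scheduling: with `h*` the water level of `x`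
and `h̄` a grid point with `h*/(1+ε) < h̄ ≤ h*` (and `h̄ = 0` when `h* = 0`), the
relaxation value of the instance with job sizes scaled down by `1/(1+ε)` is at most
`g_θ(x, h̄)`, which in turn is at most the true relaxation value `f(x)`. -/
theorem stmt18 {J : Type*} [Fintype J]
    (θ θ' : ℝ → ℝ)
    (hmono : MonotoneOn θ (Set.Ici 0)) (hconv : ConvexOn ℝ (Set.Ici 0) θ) (hθ0 : θ 0 = 0)
    (hD1 : ∀ t : ℝ, 0 < t → HasDerivAt θ (θ' t) t)
    (hθ'nn : ∀ t : ℝ, 0 < t → 0 ≤ θ' t)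
    (hθ'cont : ContinuousOn θ' (Set.Ici 0))
    (p x : J → ℝ) (hp : ∀ j, 0 < p j) (hx : ∀ j, x j ∈ Set.Icc (0 : ℝ) 1)
    (ε : ℝ) (hε : 0 < ε)
    (hstar : ℝ) (hstar0 : 0 ≤ hstar)
    (hwater : ∑ j, min (p j) hstar * x j = hstar)
    (hpos : 1 < ∑ j, x j → 0 < hstar)
    (hzero : ∑ j, x j ≤ 1 → hstar = 0)
    (hbar : ℝ)
    (hbar_cond : (hstar = 0 ∧ hbar = 0) ∨ (hstar / (1 + ε) < hbar ∧ hbar ≤ hstar)) :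
    (∑ j ∈ Finset.univ.filter (fun j => hstar < p j),
        x j * (θ (p j / (1 + ε)) - θ (hstar / (1 + ε)))) + θ (hstar / (1 + ε))
      ≤ gTheta θ θ' p x hbar ∧
    gTheta θ θ' p x hbar ≤
      (∑ j ∈ Finset.univ.filter (fun j => hstar < p j), x j * (θ (p j) - θ hstar))
        + θ hstar :=
  stmt18_general θ θ' hmono hconv hD1 hθ'nn p x hp hx ε hε hstar hstar0 hwater hbar hbar_cond
end

section
/- Let M be a finite set, v : M → ℝ with v_j > 0 for all j ∈ M, and x : M → [0,1]. Fix h > 0 with h ≠ v_j for every j ∈ M. Then the function h' ↦ g(x, h') is differentiable at h with derivative (1/h²)·( h − ∑_{j∈M} min(v_j, h)·x_j ). -/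
open Filter Topology Real

noncomputable def gNSWTerm (a c h : ℝ) : ℝ :=
  (if h < a then c * log (a / h) else 0) + min a h * c / h

theorem gNSW_eq_sum_gNSWTerm {ι : Type*} [Fintype ι] (v x : ι → ℝ) (h : ℝ) :
    gNSW v x h = ∑ j, gNSWTerm (v j) (x j) h + log h - 1 := by
  simp only [gNSW, gNSWTerm, Finset.sum_add_distrib, Finset.sum_filter, Finset.mul_sum,
    div_eq_inv_mul, mul_one]
  ring

theorem gNSWTerm_eventuallyEq_of_lt {a c h : ℝ} (hh : 0 < h) (ha : h < a) :
    gNSWTerm a c =ᶠ[𝓝 h] fun h' => c * log a - c * log h' + c := by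
  filter_upwards [eventually_gt_nhds hh, eventually_lt_nhds ha] with h' hpos hlt
  rw [gNSWTerm, if_pos hlt, min_eq_right hlt.le, log_div (hh.trans ha).ne' hpos.ne']
  field_simp

theorem gNSWTerm_eventuallyEq_of_gt {a c h : ℝ} (ha : a < h) :
    gNSWTerm a c =ᶠ[𝓝 h] fun h' => a * c / h' := by
  filter_upwards [eventually_gt_nhds ha] with h' hgt
  rw [gNSWTerm, if_neg hgt.not_gt, min_eq_left hgt.le, zero_add]

theorem hasDerivAt_gNSWTerm {a c h : ℝ} (hh : 0 < h) (ha : h ≠ a) :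
    HasDerivAt (gNSWTerm a c) (-(min a h * c) / h ^ 2) h := by
  rcases ha.lt_or_gt with hlt | hgt
  · have hderiv : HasDerivAt (fun h' => c * log a - c * log h' + c) (-(c * h⁻¹)) h := by
      simpa using (((hasDerivAt_log hh.ne').const_mul c).const_sub (c * log a)).add_const c
    refine (hderiv.congr_of_eventuallyEq (gNSWTerm_eventuallyEq_of_lt hh hlt)).congr_deriv ?_
    rw [min_eq_right hlt.le]
    field_simp
  · have hderiv : HasDerivAt (fun h' => a * c / h') (a * c * -(h ^ 2)⁻¹) h := by
      simpa [div_eq_mul_inv] using (hasDerivAt_inv hh.ne').const_mul (a * c)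
    refine (hderiv.congr_of_eventuallyEq (gNSWTerm_eventuallyEq_of_gt hgt)).congr_deriv ?_
    rw [min_eq_left hgt.le]
    ring

theorem stmt19_general {ι : Type*} [Fintype ι] (v x : ι → ℝ)
    (h : ℝ) (hh : 0 < h) (hne : ∀ j, h ≠ v j) :
    HasDerivAt (fun h' => gNSW v x h')
      ((1 / h ^ 2) * (h - ∑ j, min (v j) h * x j)) h := by
  have hterms : HasDerivAt (fun h' => ∑ j, gNSWTerm (v j) (x j) h')
      (∑ j, -(min (v j) h * x j) / h ^ 2) h :=
    HasDerivAt.fun_sum fun j _ => hasDerivAt_gNSWTerm hh (hne j)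
  rw [show (fun h' => gNSW v x h') = fun h' => ∑ j, gNSWTerm (v j) (x j) h' + log h' - 1 from
    funext (gNSW_eq_sum_gNSWTerm v x)]
  refine ((hterms.add (hasDerivAt_log hh.ne')).sub_const 1).congr_deriv ?_
  rw [← Finset.sum_div, Finset.sum_neg_distrib]
  field_simp
  ring

/-- for `h > 0` with `h ≠ v_j` for every `j`, the map `h' ↦ g(x, h')` is
differentiable at `h` with derivative `(1/h²)·(h − ∑_j min(v_j, h)·x_j)`. -/
theorem stmt19 {ι : Type*} [Fintype ι] (v x : ι → ℝ)
    (hv : ∀ j, 0 < v j) (hx : ∀ j, x j ∈ Set.Icc (0 : ℝ) 1)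
    (h : ℝ) (hh : 0 < h) (hne : ∀ j, h ≠ v j) :
    HasDerivAt (fun h' => gNSW v x h')
      ((1 / h ^ 2) * (h - ∑ j, min (v j) h * x j)) h :=
  stmt19_general v x h hh hne
end
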